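/- arXiv:1607.04486 — 8 statements merged into one kernel-verified Lean document; each statement's English description precedes it below -/
import Mathlib

section
/- Let W be a finite-dimensional irreducible complex representation of the infinite dihedral group Γ = ⟨s, t | s² = t² = 1⟩, and set p = (s+1)/2 and q = (t+1)/2 as elements of End(W) (acting via the representation). Then there exists a nonzero scalar z ∈ ℂ such that z⁻¹ · pq is an idempotent endomorphism of W. -/
/-- The infinite dihedral group, presented as `⟨s, t | s² = t² = 1⟩`. -/
def InfDihedral : Type :=
  PresentedGroup ({FreeGroup.of true * FreeGroup.of true,
    FreeGroup.of false * FreeGroup.of false} : Set (FreeGroup Bool))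

noncomputable instance : Group InfDihedral :=
  inferInstanceAs (Group (PresentedGroup _))

/-- The generator `s` of the infinite dihedral group. -/
noncomputable def InfDihedral.s : InfDihedral := PresentedGroup.of true

/-- The generator `t` of the infinite dihedral group. -/
noncomputable def InfDihedral.t : InfDihedral := PresentedGroup.of false

/-!
Since `p` and `q` are idempotents, `d = pq + qp - p - q` commutes with `p` and `q`, hence with
`ρ s = 2p - 1` and `ρ t = 2q - 1`, which generate `Γ`; by Schur's lemma `d = c` is a scalar.
Multiplying `d = c` by `p` on the left and `q` on the right gives `(pq)² = (1 + c) pq`, and by `q`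
on both sides gives `qpq = (1 + c) q`. If `1 + c ≠ 0`, take `z = 1 + c`. Otherwise `qpq = 0`, so
`range (pq)` is invariant under `p` and `q`, hence trivial or everything; as `(pq)² = 0`, it is
trivial, so `pq = 0` and `z = 1` works.
-/

namespace InfDihedral

theorem s_mul_self : s * s = 1 :=
  PresentedGroup.one_of_mem (Set.mem_insert _ _)

theorem t_mul_self : t * t = 1 :=
  PresentedGroup.one_of_mem (Set.mem_insert_of_mem _ rfl)

theorem submonoidClosure_s_t : Submonoid.closure {s, t} = ⊤ := by
  have hinv : ({s, t} : Set InfDihedral)⁻¹ = {s, t} := by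
    simp [Set.inv_insert, inv_eq_of_mul_eq_one_left s_mul_self,
      inv_eq_of_mul_eq_one_left t_mul_self]
  have hgen : Subgroup.closure {s, t} = ⊤ := by
    rw [Set.pair_comm]
    exact Bool.range_eq PresentedGroup.of ▸ PresentedGroup.closure_range_of _
  rw [← Set.union_self {s, t}, ← congrArg ({s, t} ∪ ·) hinv,
    ← Subgroup.closure_toSubmonoid, hgen, Subgroup.top_toSubmonoid]

end InfDihedral

theorem Representation.apply_mem_of_closure_eq_top {k G V : Type*} [CommSemiring k] [Monoid G]
    [AddCommMonoid V] [Module k V] (ρ : Representation k G V) {X : Set G}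
    (hX : Submonoid.closure X = ⊤) {M : Submodule k V}
    (hM : ∀ x ∈ X, ∀ v ∈ M, ρ x v ∈ M)
    (g : G) : ∀ v ∈ M, ρ g v ∈ M := by
  induction (hX ▸ Submonoid.mem_top g : g ∈ Submonoid.closure X) using
    Submonoid.closure_induction with
  | mem x hx => exact hM x hx
  | one => simp
  | mul a b _ _ ha hb => intro v hv; simpa using ha _ (hb v hv)

section Idempotents

variable {R : Type*} [Ring R]

theorem IsIdempotentElem.commute_mul_add_mul_sub {p : R} (hp : IsIdempotentElem p) (q : R) :
    Commute p (p * q + q * p - (p + q)) := by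
  show p * _ = _ * p
  simp only [mul_add, add_mul, mul_sub, sub_mul, hp.eq, hp.mul_self_mul, hp.mul_mul_self, mul_assoc]
  abel

variable {k A : Type*} [Field k] [Ring A] [Algebra k A]

theorem isIdempotentElem_inv_smul_of_mul_self_eq_smul {x : A} {c : k}
    (hx : x * x = c • x) : IsIdempotentElem (c⁻¹ • x) := by
  rw [IsIdempotentElem, smul_mul_smul_comm, hx, smul_smul]
  simpa using congrArg (· • x) (mul_self_mul_inv c⁻¹)

theorem isIdempotentElem_inv_two_smul_add_one {S : A} (hS : S * S = 1) :
    IsIdempotentElem ((2 : k)⁻¹ • (S + 1)) :=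
  isIdempotentElem_inv_smul_of_mul_self_eq_smul <| by
    rw [mul_add, add_mul, hS, one_mul, mul_one, two_smul]
    abel

theorem IsIdempotentElem.mul_mul_mul_eq_smul {p q : A} (hp : IsIdempotentElem p)
    (hq : IsIdempotentElem q) {c : k} (h : p * q + q * p - (p + q) = c • 1) :
    p * q * (p * q) = (1 + c) • (p * q) := by
  calc p * q * (p * q) = p * (p * q + q * p - (p + q)) * q + p * q := by
        simp only [mul_add, add_mul, mul_sub, sub_mul, hp.eq, hp.mul_self_mul, hq.mul_mul_self,
          mul_assoc]
        abel
    _ = (1 + c) • (p * q) := by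
        rw [h]
        simp only [mul_smul_comm, mul_one, smul_mul_assoc, add_smul, one_smul]
        abel

theorem IsIdempotentElem.mul_mul_eq_smul {p q : A}
    (hq : IsIdempotentElem q) {c : k} (h : p * q + q * p - (p + q) = c • 1) :
    q * (p * q) = (1 + c) • q := by
  calc q * (p * q) = q * (p * q + q * p - (p + q)) * q + q := by
        simp only [mul_add, add_mul, mul_sub, sub_mul, hq.eq, hq.mul_self_mul, hq.mul_mul_self,
          mul_assoc]
        abel
    _ = (1 + c) • q := by
        rw [h]
        simp only [mul_smul_comm, mul_one, smul_mul_assoc, hq.eq, add_smul, one_smul]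
        abel

end Idempotents

theorem Module.End.exists_eq_smul_one_of_forall_commute {K V : Type*} [Field K] [IsAlgClosed K]
    [AddCommGroup V] [Module K V] [FiniteDimensional K V] [Nontrivial V]
    {S : Set (Module.End K V)}
    (hirr : ∀ M : Submodule K V, (∀ f ∈ S, ∀ v ∈ M, f v ∈ M) → M = ⊥ ∨ M = ⊤)
    {z : Module.End K V} (hz : ∀ f ∈ S, Commute z f) : ∃ c : K, z = c • 1 := by
  obtain ⟨c, hc⟩ := z.exists_eigenvalue
  have htop : z.eigenspace c = ⊤ :=
    (hirr _ fun f hf => z.mapsTo_genEigenspace_of_comm (hz f hf) c 1).resolve_left hc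
  refine ⟨c, LinearMap.ext fun v => ?_⟩
  simpa using Module.End.mem_eigenspace_iff.mp (htop ▸ Submodule.mem_top : v ∈ z.eigenspace c)

theorem LinearMap.apply_mem_range_of_mul_eq_mul {R M : Type*} [Semiring R] [AddCommMonoid M]
    [Module R M] {a f b : Module.End R M} (h : a * f = f * b) {v : M}
    (hv : v ∈ LinearMap.range f) : a v ∈ LinearMap.range f := by
  obtain ⟨w, rfl⟩ := hv
  exact ⟨b w, LinearMap.congr_fun h.symm w⟩

theorem LinearMap.eq_zero_of_mul_self_eq_zero {R M : Type*} [Semiring R] [AddCommMonoid M]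
    [Module R M] {f : Module.End R M} (hf : f * f = 0)
    (hr : LinearMap.range f = ⊥ ∨ LinearMap.range f = ⊤) : f = 0 := by
  rcases hr with hr | hr
  · exact LinearMap.range_eq_bot.mp hr
  · have : LinearMap.range f ≤ LinearMap.ker f := LinearMap.range_le_ker_iff.mpr hf
    exact LinearMap.ker_eq_top.mp (top_le_iff.mp (hr ▸ this))

theorem IsIdempotentElem.mul_eq_zero_of_mul_mul_eq_zero {R M : Type*} [Semiring R]
    [AddCommMonoid M] [Module R M] {p q : Module.End R M} (hp : IsIdempotentElem p)
    (hirr : ∀ N : Submodule R M,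
      (∀ f ∈ ({p, q} : Set (Module.End R M)), ∀ v ∈ N, f v ∈ N) → N = ⊥ ∨ N = ⊤)
    (hqpq : q * (p * q) = 0) : p * q = 0 := by
  refine LinearMap.eq_zero_of_mul_self_eq_zero (by rw [mul_assoc, hqpq, mul_zero]) (hirr _ ?_)
  rintro f (rfl | rfl) v hv
  · exact LinearMap.apply_mem_range_of_mul_eq_mul (b := 1) (by rw [hp.mul_self_mul, mul_one]) hv
  · exact LinearMap.apply_mem_range_of_mul_eq_mul (b := 0) (by rw [hqpq, mul_zero]) hv

/-- For a finite-dimensional irreducible complex representation `W` of the infinite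
dihedral group, setting `p = (ρ(s)+1)/2` and `q = (ρ(t)+1)/2`, there is a nonzero
scalar `z ∈ ℂ` such that `z⁻¹ • (p * q)` is an idempotent endomorphism of `W`. -/
theorem exists_scalar_idempotent_infDihedral
    (W : Type) [AddCommGroup W] [Module ℂ W] [FiniteDimensional ℂ W] [Nontrivial W]
    (ρ : Representation ℂ InfDihedral W)
    (hirr : ∀ p : Submodule ℂ W, (∀ g : InfDihedral, ∀ x ∈ p, ρ g x ∈ p) →
      p = ⊥ ∨ p = ⊤)
    (p q : Module.End ℂ W)
    (hp : p = (2 : ℂ)⁻¹ • (ρ InfDihedral.s + 1))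
    (hq : q = (2 : ℂ)⁻¹ • (ρ InfDihedral.t + 1)) :
    ∃ z : ℂ, z ≠ 0 ∧ IsIdempotentElem (z⁻¹ • (p * q)) := by
  have hps : IsIdempotentElem p := hp ▸ isIdempotentElem_inv_two_smul_add_one
    (by rw [← map_mul, InfDihedral.s_mul_self, map_one])
  have hqt : IsIdempotentElem q := hq ▸ isIdempotentElem_inv_two_smul_add_one
    (by rw [← map_mul, InfDihedral.t_mul_self, map_one])
  have hirr' : ∀ M : Submodule ℂ W,
      (∀ f ∈ ({p, q} : Set (Module.End ℂ W)), ∀ v ∈ M, f v ∈ M) → M = ⊥ ∨ M = ⊤ := by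
    intro M hM
    refine hirr M (ρ.apply_mem_of_closure_eq_top InfDihedral.submonoidClosure_s_t ?_)
    have hs : ρ InfDihedral.s = (2 : ℂ) • p - 1 := by rw [hp, smul_smul]; norm_num
    have ht : ρ InfDihedral.t = (2 : ℂ) • q - 1 := by rw [hq, smul_smul]; norm_num
    rintro x (rfl | rfl) v hv
    · rw [hs]; exact M.sub_mem (M.smul_mem 2 (hM p (by simp) v hv)) hv
    · rw [ht]; exact M.sub_mem (M.smul_mem 2 (hM q (by simp) v hv)) hv
  obtain ⟨c, hc⟩ := Module.End.exists_eq_smul_one_of_forall_commute hirr'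
      (z := p * q + q * p - (p + q)) <| by
    rintro f (rfl | rfl)
    · exact (hps.commute_mul_add_mul_sub q).symm
    · simpa only [add_comm] using (hqt.commute_mul_add_mul_sub p).symm
  by_cases hc0 : 1 + c = 0
  · have hpq : p * q = 0 := hps.mul_eq_zero_of_mul_mul_eq_zero hirr'
      (by rw [hqt.mul_mul_eq_smul hc, hc0, zero_smul])
    exact ⟨1, one_ne_zero, by rw [hpq, smul_zero]; exact .zero⟩
  · exact ⟨1 + c, hc0,
      isIdempotentElem_inv_smul_of_mul_self_eq_smul (hps.mul_mul_mul_eq_smul hqt hc)⟩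
end

section
/- Let G be a finite group with subgroups U, L, V such that L normalizes both U and V. Let M be a finite-dimensional complex representation of G, and let e_U, e_V ∈ End(M) denote the averaging projections onto the U-fixed and V-fixed vectors respectively. Then there exists an invertible linear operator z ∈ GL(M), commuting with the action of L and with e_U and e_V, such that z⁻¹ e_U e_V is an idempotent in End(M). -/
/-!
Averaging an inner product over the finite group `G` makes `ρ` unitary, so `P = e_U` and
`Q = e_V` are orthogonal projections and `T = P + Q - 1` is self-adjoint. From `PT = PQ` and
`TP = QP` one gets `T²P = PQP = PT²`, likewise for `Q`, and `T²PQ = (PQ)²`. Self-adjointness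
gives `ker T⁴ = ker T² = ker T`, so `M = ker T² ⊕ range T²`; adding to `T²` the projection onto
`ker T²` along `range T²` yields a unit `z` commuting with everything that commutes with `T²`.
Since `PQ = PT` vanishes on `ker T`, `z PQ = T² PQ = (PQ)²`, whence `(z⁻¹PQ)² = z⁻¹PQ`.
-/

section IdempotentPair

variable {R : Type*} [Ring R] {P Q : R}

theorem IsIdempotentElem.mul_add_sub_one (hP : IsIdempotentElem P) (Q : R) :
    P * (P + Q - 1) = P * Q := by
  rw [mul_sub, mul_add, hP.eq, mul_one, add_sub_cancel_left]

theorem IsIdempotentElem.add_sub_one_mul (hP : IsIdempotentElem P) (Q : R) :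
    (P + Q - 1) * P = Q * P := by
  rw [sub_mul, add_mul, hP.eq, one_mul, add_sub_cancel_left]

theorem commute_add_sub_one_mul_self (hP : IsIdempotentElem P) (hQ : IsIdempotentElem Q) :
    Commute P ((P + Q - 1) * (P + Q - 1)) := by
  have hQT : Q * (P + Q - 1) = Q * P := by rw [add_comm P]; exact hQ.mul_add_sub_one P
  have hTQ : (P + Q - 1) * Q = P * Q := by rw [add_comm P]; exact hQ.add_sub_one_mul P
  calc P * ((P + Q - 1) * (P + Q - 1)) = P * (Q * (P + Q - 1)) := by
        rw [← mul_assoc, hP.mul_add_sub_one, mul_assoc]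
    _ = (P + Q - 1) * Q * P := by rw [hQT, hTQ, mul_assoc]
    _ = (P + Q - 1) * (P + Q - 1) * P := by rw [mul_assoc, mul_assoc, hP.add_sub_one_mul]

theorem add_sub_one_mul_self_mul_mul (hP : IsIdempotentElem P) (hQ : IsIdempotentElem Q) :
    (P + Q - 1) * (P + Q - 1) * (P * Q) = P * Q * (P * Q) := by
  have hTQ : (P + Q - 1) * Q = P * Q := by rw [add_comm P]; exact hQ.add_sub_one_mul P
  calc (P + Q - 1) * (P + Q - 1) * (P * Q) = (P + Q - 1) * ((P + Q - 1) * P) * Q := by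
        simp only [mul_assoc]
    _ = (P + Q - 1) * Q * (P * Q) := by rw [hP.add_sub_one_mul]; simp only [mul_assoc]
    _ = P * Q * (P * Q) := by rw [hTQ]

end IdempotentPair

theorem Units.isIdempotentElem_inv_mul {M : Type*} [Monoid M] (z : Mˣ) {a : M}
    (hza : Commute (z : M) a) (h : a * a = z * a) : IsIdempotentElem (↑z⁻¹ * a) := by
  rw [IsIdempotentElem, mul_assoc, ← mul_assoc a, ← hza.units_inv_left.eq, mul_assoc, h,
    Units.inv_mul_cancel_left]

open LinearMap

section KerProjection

variable {R V : Type*} [Ring R] [AddCommGroup V] [Module R V] {f S : Module.End R V}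

theorem Commute.mem_invtSubmodule_ker (h : Commute S f) :
    ker f ∈ Module.End.invtSubmodule S := by
  intro x hx
  simp only [Submodule.mem_comap, mem_ker] at hx ⊢
  rw [← Module.End.mul_apply, ← h.eq, Module.End.mul_apply, hx, map_zero]

theorem Commute.mem_invtSubmodule_range (h : Commute S f) :
    range f ∈ Module.End.invtSubmodule S := by
  rintro _ ⟨y, rfl⟩
  exact ⟨S y, by rw [← Module.End.mul_apply, ← h.eq, Module.End.mul_apply]⟩

theorem Commute.projection_ker_range (hf : IsCompl (ker f) (range f)) (h : Commute S f) :
    Commute S ((ker f).projection (range f) hf) := by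
  refine ((Submodule.isIdempotentElem_projection hf).commute_iff.mpr ?_).symm
  rw [Submodule.range_projection, Submodule.ker_projection]
  exact ⟨h.mem_invtSubmodule_ker, h.mem_invtSubmodule_range⟩

theorem add_projection_ker_range_mul (hf : IsCompl (ker f) (range f)) {a : Module.End R V}
    (ha : Commute a f) (hker : ker f ≤ ker a) :
    (f + (ker f).projection (range f) hf) * a = f * a := by
  rw [add_mul, (ha.projection_ker_range hf).eq.symm, add_eq_left]
  ext x
  exact hker (Submodule.projection_apply_mem hf x)

end KerProjection

section FiniteDimensional

variable {K V : Type*} [Field K] [AddCommGroup V] [Module K V] [FiniteDimensional K V]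
  {f : Module.End K V}

theorem isCompl_ker_range_of_ker_mul_self_le (h : ker (f * f) ≤ ker f) :
    IsCompl (ker f) (range f) := by
  refine (Submodule.isCompl_iff_disjoint _ _ ?_).mpr ?_
  · rw [add_comm, finrank_range_add_finrank_ker]
  · rw [Submodule.disjoint_def]
    rintro _ hx ⟨y, rfl⟩
    exact h hx

theorem isUnit_add_projection_ker_range (hf : IsCompl (ker f) (range f)) :
    IsUnit (f + (ker f).projection (range f) hf) := by
  rw [LinearMap.isUnit_iff_ker_eq_bot, Submodule.eq_bot_iff]
  intro x hx
  have hπ := Submodule.projection_apply_mem hf x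
  have hfx : f x = -(ker f).projection (range f) hf x := eq_neg_of_add_eq_zero_left hx
  have hfx0 : f x = 0 := by
    refine Submodule.disjoint_def.mp hf.disjoint _ ?_ ⟨x, rfl⟩
    rw [hfx]; exact neg_mem hπ
  rw [← Submodule.projection_apply_of_mem_left hf (mem_ker.mpr hfx0), ← neg_eq_zero, ← hfx, hfx0]

end FiniteDimensional

section SesquilinearForm

theorem LinearMap.IsAdjointPair.sub_semilinear {R V N : Type*} [CommRing R] [AddCommGroup V]
    [Module R V] [AddCommGroup N] [Module R N] {I : R →+* R} {B : V →ₗ[R] V →ₛₗ[I] N}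
    {f f' g g' : V → V} (h : IsAdjointPair B B f g) (h' : IsAdjointPair B B f' g') :
    IsAdjointPair B B (f - f') (g - g') := fun x y => by
  rw [Pi.sub_apply, Pi.sub_apply, map_sub, LinearMap.sub_apply, map_sub, h, h']

theorem LinearMap.ker_mul_self_eq_ker_of_isSelfAdjoint {R V N : Type*} [CommSemiring R]
    [AddCommMonoid V] [Module R V] [AddCommMonoid N] [Module R N] {I : R →+* R}
    {B : V →ₗ[R] V →ₛₗ[I] N} (hB : ∀ x, B x x = 0 → x = 0) {T : Module.End R V}
    (hT : B.IsSelfAdjoint T) : ker (T * T) = ker T := by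
  refine le_antisymm (fun v hv => hB _ ?_) (ker_le_ker_comp T T)
  rw [mem_ker, Module.End.mul_apply] at hv
  rw [hT, hv, map_zero]

theorem exists_unit_isIdempotentElem_inv_mul_mul_of_isSelfAdjoint {K V N : Type*} [Field K]
    [AddCommGroup V] [Module K V] [FiniteDimensional K V] [AddCommGroup N] [Module K N]
    {I : K →+* K} {B : V →ₗ[K] V →ₛₗ[I] N} (hB : ∀ x, B x x = 0 → x = 0)
    {P Q : Module.End K V} (hP : IsIdempotentElem P) (hQ : IsIdempotentElem Q)
    (hPB : B.IsSelfAdjoint P) (hQB : B.IsSelfAdjoint Q) :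
    ∃ z : (Module.End K V)ˣ, Commute (z : Module.End K V) P ∧ Commute (z : Module.End K V) Q ∧
      (∀ S, Commute S P → Commute S Q → Commute (z : Module.End K V) S) ∧
      IsIdempotentElem (↑z⁻¹ * P * Q) := by
  set T := P + Q - 1
  have hT : B.IsSelfAdjoint T := (hPB.add hQB).sub_semilinear isAdjointPair_one
  have hc := isCompl_ker_range_of_ker_mul_self_le
    (ker_mul_self_eq_ker_of_isSelfAdjoint hB (hT.mul hT)).le
  set z := (isUnit_add_projection_ker_range hc).unit
  have hz {S : Module.End K V} (hS : Commute S (T * T)) : Commute (z : Module.End K V) S :=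
    (hS.add_right (hS.projection_ker_range hc)).symm
  have hPT : Commute P (T * T) := commute_add_sub_one_mul_self hP hQ
  have hQT : Commute Q (T * T) := by
    simpa only [T, add_comm P] using commute_add_sub_one_mul_self hQ hP
  have hker : ker (T * T) ≤ ker (P * Q) := by
    rw [ker_mul_self_eq_ker_of_isSelfAdjoint hB hT, ← hP.mul_add_sub_one Q]
    exact ker_le_ker_comp T P
  have hPQ : P * Q * (P * Q) = z * (P * Q) := by
    rw [IsUnit.unit_spec, add_projection_ker_range_mul hc (hPT.mul_left hQT) hker,
      add_sub_one_mul_self_mul_mul hP hQ]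
  refine ⟨z, hz hPT, hz hQT, fun S hSP hSQ => hz ?_, ?_⟩
  · have hST := (hSP.add_right hSQ).sub_right (Commute.one_right S)
    exact hST.mul_right hST
  · rw [mul_assoc]
    exact z.isIdempotentElem_inv_mul (hz (hPT.mul_left hQT)) hPQ

end SesquilinearForm

namespace Representation

section SubgroupAverage

variable {k G V : Type*} [Field k] [Group G] [AddCommGroup V] [Module k V]
  (ρ : Representation k G V) (H : Subgroup G)

noncomputable def subgroupAverage : Module.End k V :=
  (Nat.card H : k)⁻¹ • ∑ᶠ h : H, ρ h

theorem subgroupAverage_eq_sum [Fintype H] :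
    ρ.subgroupAverage H = (Nat.card H : k)⁻¹ • ∑ h : H, ρ h := by
  rw [subgroupAverage, finsum_eq_sum_of_fintype]

variable {H} [Finite H]

theorem mul_subgroupAverage {g : G} (hg : g ∈ H) :
    ρ g * ρ.subgroupAverage H = ρ.subgroupAverage H := by
  have := Fintype.ofFinite H
  rw [subgroupAverage_eq_sum, mul_smul_comm, Finset.mul_sum]
  congr 1
  exact Fintype.sum_equiv (Equiv.mulLeft ⟨g, hg⟩) _ _ fun h => by simp [map_mul]

theorem isIdempotentElem_subgroupAverage (hH : (Nat.card H : k) ≠ 0) :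
    IsIdempotentElem (ρ.subgroupAverage H) := by
  have := Fintype.ofFinite H
  rw [IsIdempotentElem]
  nth_rewrite 1 [subgroupAverage_eq_sum]
  rw [smul_mul_assoc, Finset.sum_mul]
  simp_rw [ρ.mul_subgroupAverage (Subtype.prop _)]
  rw [Finset.sum_const, Finset.card_univ, ← Nat.card_eq_fintype_card, ← Nat.cast_smul_eq_nsmul k,
    smul_smul, inv_mul_cancel₀ hH, one_smul]

theorem commute_subgroupAverage {l : G} (hl : ∀ h ∈ H, l * h * l⁻¹ ∈ H) :
    Commute (ρ l) (ρ.subgroupAverage H) := by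
  have := Fintype.ofFinite H
  let conj : H → H := fun h => ⟨l * h * l⁻¹, hl h h.2⟩
  have hconj : conj.Bijective := Finite.injective_iff_bijective.mp fun a b hab => by
    simpa [conj] using hab
  rw [subgroupAverage_eq_sum, Commute, SemiconjBy, mul_smul_comm, smul_mul_assoc,
    Finset.mul_sum, Finset.sum_mul]
  congr 1
  refine Fintype.sum_bijective conj hconj _ _ fun h => ?_
  simp [conj, ← map_mul]

theorem isSelfAdjoint_subgroupAverage {N : Type*} [AddCommGroup N] [Module k N] {I : k →+* k}
    {B : V →ₗ[k] V →ₛₗ[I] N} (hB : ∀ g, IsAdjointPair B B (ρ g) (ρ g⁻¹)) :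
    B.IsSelfAdjoint (ρ.subgroupAverage H) := by
  have := Fintype.ofFinite H
  intro x y
  have hsum : B ((∑ h : H, ρ h) x) y = B x ((∑ h : H, ρ h) y) := by
    simp only [map_sum, LinearMap.sum_apply, hB _ x]
    exact Fintype.sum_equiv (Equiv.inv H) _ _ fun h => by simp
  simp only [subgroupAverage_eq_sum, LinearMap.smul_apply, map_smul, map_smulₛₗ,
    LinearMap.smul_apply, hsum, map_inv₀, map_natCast]

end SubgroupAverage

section InvariantForm

variable {𝕜 G V E : Type*} [RCLike 𝕜] [Group G] [Fintype G] [AddCommGroup V] [Module 𝕜 V]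
  [NormedAddCommGroup E] [InnerProductSpace 𝕜 E] (ρ : Representation 𝕜 G V) (f : V →ₗ[𝕜] E)

/-- Linear in the first argument, as `LinearMap.IsAdjointPair` expects; hence the flip. -/
noncomputable def invariantForm : V →ₗ[𝕜] V →ₗ⋆[𝕜] 𝕜 :=
  ∑ g, ((innerₛₗ 𝕜).flip.comp (f ∘ₗ ρ g)).compl₂ (f ∘ₗ ρ g)

theorem invariantForm_apply (x y : V) :
    ρ.invariantForm f x y = ∑ g, inner 𝕜 (f (ρ g y)) (f (ρ g x)) := by
  simp [invariantForm]

theorem isAdjointPair_invariantForm (g : G) :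
    IsAdjointPair (ρ.invariantForm f) (ρ.invariantForm f) (ρ g) (ρ g⁻¹) := by
  intro x y
  simp only [invariantForm_apply, ← Module.End.mul_apply, ← map_mul]
  exact (Fintype.sum_equiv (Equiv.mulRight g) _ _ fun h => by simp)

theorem invariantForm_self_eq_zero (hf : Function.Injective f) (x : V)
    (hx : ρ.invariantForm f x x = 0) : x = 0 := by
  have hre : ∑ g, ‖f (ρ g x)‖ ^ 2 = 0 := by
    simpa [invariantForm_apply, inner_self_eq_norm_sq] using congrArg RCLike.re hx
  have h1 := (Finset.sum_eq_zero_iff_of_nonneg fun g _ => sq_nonneg ‖f (ρ g x)‖).mp hre 1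
    (Finset.mem_univ _)
  have hfx : f x = 0 := by simpa using h1
  exact hf (hfx.trans (map_zero f).symm)

end InvariantForm

end Representation

/-- **Proposition (z-operator).** Let `G` be a finite group with subgroups `U`, `L`, `V`
such that `L` normalizes `U` and `V`. Let `M` be a finite-dimensional complex
representation of `G`, and let `eU`, `eV` be the averaging projections onto the
`U`-fixed and `V`-fixed vectors. Then there is an invertible operator `z` on `M`,
commuting with the `L`-action and with `eU` and `eV`, such that `z⁻¹ * eU * eV`
is an idempotent endomorphism of `M`. -/
theorem exists_z_operator
    (G : Type) [Group G] [Finite G] (U L V : Subgroup G)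
    (hLU : ∀ l ∈ L, ∀ u ∈ U, l * u * l⁻¹ ∈ U)
    (hLV : ∀ l ∈ L, ∀ v ∈ V, l * v * l⁻¹ ∈ V)
    (M : Type) [AddCommGroup M] [Module ℂ M] [FiniteDimensional ℂ M]
    (ρ : Representation ℂ G M)
    (eU eV : Module.End ℂ M)
    (heU : eU = (Nat.card U : ℂ)⁻¹ • ∑ᶠ u : U, ρ (u : G))
    (heV : eV = (Nat.card V : ℂ)⁻¹ • ∑ᶠ v : V, ρ (v : G)) :
    ∃ z : (Module.End ℂ M)ˣ,
      (∀ l ∈ L, Commute (z : Module.End ℂ M) (ρ l)) ∧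
      Commute (z : Module.End ℂ M) eU ∧
      Commute (z : Module.End ℂ M) eV ∧
      IsIdempotentElem ((↑z⁻¹ : Module.End ℂ M) * eU * eV) := by
  have := Fintype.ofFinite G
  change eU = ρ.subgroupAverage U at heU
  change eV = ρ.subgroupAverage V at heV
  subst heU heV
  let e := (Module.finBasis ℂ M).equivFun.trans
    (WithLp.linearEquiv 2 ℂ (Fin (Module.finrank ℂ M) → ℂ)).symm
  have hcard (H : Subgroup G) : (Nat.card H : ℂ) ≠ 0 := Nat.cast_ne_zero.mpr Nat.card_pos.ne'
  have hρ := ρ.isAdjointPair_invariantForm e.toLinearMap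
  obtain ⟨z, hzU, hzV, hz, hidem⟩ := exists_unit_isIdempotentElem_inv_mul_mul_of_isSelfAdjoint
    (ρ.invariantForm_self_eq_zero e.toLinearMap e.injective)
    (ρ.isIdempotentElem_subgroupAverage (hcard U)) (ρ.isIdempotentElem_subgroupAverage (hcard V))
    (ρ.isSelfAdjoint_subgroupAverage hρ) (ρ.isSelfAdjoint_subgroupAverage hρ)
  exact ⟨z, fun l hl => hz _ (ρ.commute_subgroupAverage (hLU l hl))
    (ρ.commute_subgroupAverage (hLV l hl)), hzU, hzV, hidem⟩
end

section
/- Let k be a field of characteristic ≠ 2, x ∈ M₂(k) with trace(x) = 0, and let y = diag(x, -xᵗ) ∈ M₄(k) (block diagonal). Let σ = [[0,-1],[1,0]] ∈ GL₂(k) and Σ = diag(I₂, σ) ∈ GL₄(k). Then the centralizer of y in GL₄(k) equals Σ · GL₂(C) · Σ⁻¹, where C ⊆ M₂(k) is the centralizer of x in M₂(k) and GL₂(C) is embedded in GL₄(k) as 2×2 block matrices with entries in C. -/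
open Matrix

lemma sandAux {n : Type*} [Fintype n] [DecidableEq n] {k : Type*} [Field k]
    (S S' : Matrix n n k) (h : S' * S = 1) (A : Matrix n n k) :
    S' * (S * A * S') * S = A := by
  simp only [Matrix.mul_assoc]
  rw [← Matrix.mul_assoc S' S, h, Matrix.one_mul, Matrix.mul_one]

lemma sandMul {n : Type*} [Fintype n] [DecidableEq n] {k : Type*} [Field k]
    (S S' : Matrix n n k) (h : S' * S = 1) (A B : Matrix n n k) :
    (S * A * S') * (S * B * S') = S * (A * B) * S' := by
  simp only [Matrix.mul_assoc]
  rw [← Matrix.mul_assoc S' S, h, Matrix.one_mul]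

lemma sandCancel {n : Type*} [Fintype n] [DecidableEq n] {k : Type*} [Field k]
    (S S' : Matrix n n k) (h : S' * S = 1) (A B : Matrix n n k)
    (hAB : S * A * S' = S * B * S') : A = B := by
  have := congrArg (fun z => S' * z * S) hAB
  simpa only [sandAux S S' h] using this

/-- **Lemma.** Let `k` be a field of characteristic `≠ 2`, `x ∈ M₂(k)` with
`trace x = 0`, and `y = diag(x, -xᵗ) ∈ M₄(k)`.  With `σ = [[0,-1],[1,0]]` and
`Σ = diag(1₂, σ)`, the centralizer of `y` in `GL₄(k)` equals `Σ · GL₂(C) · Σ⁻¹`,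
where `C` is the centralizer of `x` in `M₂(k)` and `GL₂(C)` is embedded in
`GL₄(k)` as invertible block matrices with blocks in `C`. -/
theorem centralizer_traceZero_blockDiag
    (k : Type) [Field k] (h2 : (2 : k) ≠ 0)
    (x : Matrix (Fin 2) (Fin 2) k) (htr : Matrix.trace x = 0)
    (y : Matrix (Fin 2 ⊕ Fin 2) (Fin 2 ⊕ Fin 2) k)
    (hy : y = Matrix.fromBlocks x 0 0 (-xᵀ))
    (σ : Matrix (Fin 2) (Fin 2) k) (hσ : σ = !![0, -1; 1, 0])
    (Sig : Matrix (Fin 2 ⊕ Fin 2) (Fin 2 ⊕ Fin 2) k)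
    (hSig : Sig = Matrix.fromBlocks 1 0 0 σ) :
    {m : Matrix (Fin 2 ⊕ Fin 2) (Fin 2 ⊕ Fin 2) k | IsUnit m ∧ m * y = y * m} =
      {m : Matrix (Fin 2 ⊕ Fin 2) (Fin 2 ⊕ Fin 2) k |
        ∃ a b c d : Matrix (Fin 2) (Fin 2) k,
          a ∈ Subalgebra.centralizer k ({x} : Set (Matrix (Fin 2) (Fin 2) k)) ∧
          b ∈ Subalgebra.centralizer k ({x} : Set (Matrix (Fin 2) (Fin 2) k)) ∧
          c ∈ Subalgebra.centralizer k ({x} : Set (Matrix (Fin 2) (Fin 2) k)) ∧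
          d ∈ Subalgebra.centralizer k ({x} : Set (Matrix (Fin 2) (Fin 2) k)) ∧
          IsUnit (Matrix.fromBlocks a b c d) ∧
          m = Sig * Matrix.fromBlocks a b c d * Sig⁻¹} := by
  set SigInv : Matrix (Fin 2 ⊕ Fin 2) (Fin 2 ⊕ Fin 2) k := Matrix.fromBlocks 1 0 0 (-σ)
    with hSigInv
  have hσσ : σ * (-σ) = 1 := by
    subst hσ
    ext i j
    fin_cases i <;> fin_cases j <;>
      simp [Matrix.mul_apply, Fin.sum_univ_two, Matrix.one_apply]
  have hσσ' : (-σ) * σ = 1 := by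
    subst hσ
    ext i j
    fin_cases i <;> fin_cases j <;>
      simp [Matrix.mul_apply, Fin.sum_univ_two, Matrix.one_apply]
  have h1 : Sig * SigInv = 1 := by
    rw [hSig, hSigInv, Matrix.fromBlocks_multiply]
    simp [hσσ, Matrix.fromBlocks_one]
  have h1' : SigInv * Sig = 1 := by
    rw [hSig, hSigInv, Matrix.fromBlocks_multiply]
    simp [hσσ', Matrix.fromBlocks_one]
  have hinv : Sig⁻¹ = SigInv := Matrix.inv_eq_right_inv h1
  have hUS : IsUnit Sig := ⟨⟨Sig, SigInv, h1, h1'⟩, rfl⟩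
  have hUS' : IsUnit SigInv := ⟨⟨SigInv, Sig, h1', h1⟩, rfl⟩
  have hkey : σ * x = (-xᵀ) * σ := by
    have h00 : x 1 1 = -(x 0 0) := by
      have hsum : x 0 0 + x 1 1 = 0 := by
        simpa [Matrix.trace, Fin.sum_univ_two] using htr
      linear_combination hsum
    subst hσ
    ext i j
    fin_cases i <;> fin_cases j <;>
      simp [Matrix.mul_apply, Fin.sum_univ_two, Matrix.transpose_apply, h00]
  set X : Matrix (Fin 2 ⊕ Fin 2) (Fin 2 ⊕ Fin 2) k := Matrix.fromBlocks x 0 0 x with hX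
  have hSX : Sig * X = y * Sig := by
    rw [hSig, hX, hy, Matrix.fromBlocks_multiply, Matrix.fromBlocks_multiply]
    simp [hkey]
  have hyX : y = Sig * X * SigInv := by
    rw [hSX, Matrix.mul_assoc, h1, Matrix.mul_one]
  ext m
  simp only [Set.mem_setOf_eq]
  constructor
  · rintro ⟨hu, hc⟩
    set m' : Matrix (Fin 2 ⊕ Fin 2) (Fin 2 ⊕ Fin 2) k := SigInv * m * Sig with hm'
    have hmm : m = Sig * m' * SigInv := (sandAux SigInv Sig h1 m).symm
    have hcomm' : m' * X = X * m' := by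
      apply sandCancel Sig SigInv h1' _ _
      calc Sig * (m' * X) * SigInv
          = (Sig * m' * SigInv) * (Sig * X * SigInv) := (sandMul Sig SigInv h1' m' X).symm
        _ = m * y := by rw [← hmm, ← hyX]
        _ = y * m := hc
        _ = (Sig * X * SigInv) * (Sig * m' * SigInv) := by rw [← hmm, ← hyX]
        _ = Sig * (X * m') * SigInv := sandMul Sig SigInv h1' X m'
    have hdec : m' = Matrix.fromBlocks m'.toBlocks₁₁ m'.toBlocks₁₂ m'.toBlocks₂₁ m'.toBlocks₂₂ :=
      (Matrix.fromBlocks_toBlocks m').symm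
    refine ⟨m'.toBlocks₁₁, m'.toBlocks₁₂, m'.toBlocks₂₁, m'.toBlocks₂₂, ?_, ?_, ?_, ?_, ?_, ?_⟩
    · rw [Subalgebra.mem_centralizer_iff]
      rintro g rfl
      have h := congrArg Matrix.toBlocks₁₁ hcomm'.symm
      rw [hdec] at h
      simpa [hX, Matrix.fromBlocks_multiply] using h
    · rw [Subalgebra.mem_centralizer_iff]
      rintro g rfl
      have h := congrArg Matrix.toBlocks₁₂ hcomm'.symm
      rw [hdec] at h
      simpa [hX, Matrix.fromBlocks_multiply] using h
    · rw [Subalgebra.mem_centralizer_iff]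
      rintro g rfl
      have h := congrArg Matrix.toBlocks₂₁ hcomm'.symm
      rw [hdec] at h
      simpa [hX, Matrix.fromBlocks_multiply] using h
    · rw [Subalgebra.mem_centralizer_iff]
      rintro g rfl
      have h := congrArg Matrix.toBlocks₂₂ hcomm'.symm
      rw [hdec] at h
      simpa [hX, Matrix.fromBlocks_multiply] using h
    · rw [← hdec, hm']
      exact (hUS'.mul hu).mul hUS
    · rw [← hdec, hinv]; exact hmm
  · rintro ⟨a, b, c, d, ha, hb, hc, hd, hu, rfl⟩
    rw [hinv]
    set F : Matrix (Fin 2 ⊕ Fin 2) (Fin 2 ⊕ Fin 2) k := Matrix.fromBlocks a b c d with hF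
    rw [Subalgebra.mem_centralizer_iff] at ha hb hc hd
    have hFX : F * X = X * F := by
      rw [hF, hX, Matrix.fromBlocks_multiply, Matrix.fromBlocks_multiply]
      simp [ha x rfl, hb x rfl, hc x rfl, hd x rfl]
    constructor
    · exact (hUS.mul hu).mul hUS'
    · rw [hyX]
      calc Sig * F * SigInv * (Sig * X * SigInv)
          = Sig * (F * X) * SigInv := sandMul Sig SigInv h1' F X
        _ = Sig * (X * F) * SigInv := by rw [hFX]
        _ = Sig * X * SigInv * (Sig * F * SigInv) := (sandMul Sig SigInv h1' X F).symm
end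

section
/- Let 𝔤 be a nilpotent Lie algebra over ℤ (or ℤ_p) with subalgebras 𝔲, 𝔩, 𝔳 such that [𝔩,𝔲] ⊆ 𝔲, [𝔩,𝔳] ⊆ 𝔳, and 𝔤 = 𝔲 ⊕ 𝔩 ⊕ 𝔳 as modules. Let G = exp(𝔤) be the group with underlying set 𝔤 and multiplication given by the (finite) Campbell–Hausdorff series, and similarly U = exp(𝔲), L = exp(𝔩), V = exp(𝔳), B = exp(𝔲 ⊕ 𝔩). Then the multiplication map U × L × V → G is a bijection. -/
set_option linter.unusedSectionVars false
set_option maxHeartbeats 1000000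

namespace IWaux

variable {𝔤 : Type} [LieRing 𝔤] [LieAlgebra ℤ 𝔤] {G : Type} [Group G]

/-- The Campbell–Hausdorff multiplication transported to `𝔤`. -/
def cm (e : 𝔤 ≃ G) (x y : 𝔤) : 𝔤 := e.symm (e x * e y)

lemma e_cm (e : 𝔤 ≃ G) (x y : 𝔤) : e (cm e x y) = e x * e y := e.apply_symm_apply _

lemma cm_assoc (e : 𝔤 ≃ G) (x y z : 𝔤) :
    cm e (cm e x y) z = cm e x (cm e y z) := by
  unfold cm; rw [Equiv.apply_symm_apply, Equiv.apply_symm_apply, mul_assoc]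

lemma cm_zero_left (e : 𝔤 ≃ G) (hone : e 0 = 1) (x : 𝔤) : cm e 0 x = x := by
  unfold cm; rw [hone, one_mul, Equiv.symm_apply_apply]

lemma cm_zero_right (e : 𝔤 ≃ G) (hone : e 0 = 1) (x : 𝔤) : cm e x 0 = x := by
  unfold cm; rw [hone, mul_one, Equiv.symm_apply_apply]

lemma cm_neg_left (e : 𝔤 ≃ G) (hone : e 0 = 1) (hinv : ∀ x : 𝔤, (e x)⁻¹ = e (-x))
    (x : 𝔤) : cm e (-x) x = 0 := by
  unfold cm; rw [← hinv, inv_mul_cancel, ← hone, Equiv.symm_apply_apply]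

lemma cm_neg_right (e : 𝔤 ≃ G) (hone : e 0 = 1) (hinv : ∀ x : 𝔤, (e x)⁻¹ = e (-x))
    (x : 𝔤) : cm e x (-x) = 0 := by
  unfold cm; rw [← hinv, mul_inv_cancel, ← hone, Equiv.symm_apply_apply]

lemma cancel₁ (e : 𝔤 ≃ G) (hone : e 0 = 1) (hinv : ∀ x : 𝔤, (e x)⁻¹ = e (-x))
    (x y : 𝔤) : cm e (-x) (cm e x y) = y := by
  rw [← cm_assoc, cm_neg_left e hone hinv, cm_zero_left e hone]

lemma cancel₂ (e : 𝔤 ≃ G) (hone : e 0 = 1) (hinv : ∀ x : 𝔤, (e x)⁻¹ = e (-x))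
    (x y : 𝔤) : cm e x (cm e (-x) y) = y := by
  rw [← cm_assoc, cm_neg_right e hone hinv, cm_zero_left e hone]

/-- the lower central series as a Lie subalgebra. -/
def lcsSub (𝔤 : Type) [LieRing 𝔤] [LieAlgebra ℤ 𝔤] (n : ℕ) : LieSubalgebra ℤ 𝔤 :=
  @LieSubalgebra.mk ℤ 𝔤 _ _ _
    (@Submodule.mk ℤ 𝔤 _ _ LieAlgebra.toModule
      ⟨⟨{x | x ∈ LieModule.lowerCentralSeries ℤ 𝔤 𝔤 n},
        fun {a b} ha hb => show a + b ∈ LieModule.lowerCentralSeries ℤ 𝔤 𝔤 n from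
          add_mem (show a ∈ LieModule.lowerCentralSeries ℤ 𝔤 𝔤 n from ha)
            (show b ∈ LieModule.lowerCentralSeries ℤ 𝔤 𝔤 n from hb)⟩,
        show (0:𝔤) ∈ LieModule.lowerCentralSeries ℤ 𝔤 𝔤 n from zero_mem _⟩
      (by
        intro z x hx
        rw [(AddCommGroup.uniqueIntModule (M := 𝔤)).uniq LieAlgebra.toModule]
        show z • x ∈ LieModule.lowerCentralSeries ℤ 𝔤 𝔤 n
        exact zsmul_mem (show x ∈ LieModule.lowerCentralSeries ℤ 𝔤 𝔤 n from hx) z))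
    (fun {x y} _hx hy => (LieModule.lowerCentralSeries ℤ 𝔤 𝔤 n).lie_mem hy)

lemma mem_lcsSub {n : ℕ} {x : 𝔤} :
    x ∈ lcsSub 𝔤 n ↔ x ∈ LieModule.lowerCentralSeries ℤ 𝔤 𝔤 n := by
  unfold lcsSub; exact Iff.rfl

/-- the sum of `𝔩` and `𝔳` as a Lie subalgebra. -/
def sumSub (𝔩 𝔳 : LieSubalgebra ℤ 𝔤)
    (hlv : ∀ x ∈ 𝔩, ∀ v ∈ 𝔳, ⁅x, v⁆ ∈ 𝔳) : LieSubalgebra ℤ 𝔤 :=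
  @LieSubalgebra.mk ℤ 𝔤 _ _ _
    (@Submodule.mk ℤ 𝔤 _ _ LieAlgebra.toModule
      ⟨⟨{x | ∃ l ∈ 𝔩, ∃ v ∈ 𝔳, l + v = x},
        by
          rintro a b ⟨l, hl, v, hv, rfl⟩ ⟨l', hl', v', hv', rfl⟩
          exact ⟨l + l', add_mem hl hl', v + v', add_mem hv hv', by abel⟩⟩,
        ⟨0, zero_mem 𝔩, 0, zero_mem 𝔳, add_zero 0⟩⟩
      (by
        intro z x hx
        rw [(AddCommGroup.uniqueIntModule (M := 𝔤)).uniq LieAlgebra.toModule]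
        obtain ⟨l, hl, v, hv, rfl⟩ := hx
        exact ⟨z • l, zsmul_mem hl z, z • v, zsmul_mem hv z, (smul_add z l v).symm⟩))
    (by
      intro x y hx hy
      obtain ⟨l, hl, v, hv, rfl⟩ := hx
      obtain ⟨l', hl', v', hv', rfl⟩ := hy
      refine ⟨⁅l, l'⁆, LieSubalgebra.lie_mem 𝔩 hl hl',
        ⁅l, v'⁆ + -⁅l', v⁆ + ⁅v, v'⁆,
        add_mem (add_mem (hlv l hl v' hv') (neg_mem (hlv l' hl' v hv)))
          (LieSubalgebra.lie_mem 𝔳 hv hv'), ?_⟩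
      simp only [lie_add, add_lie]
      rw [← lie_skew l' v]
      abel)

lemma mem_sumSub {𝔩 𝔳 : LieSubalgebra ℤ 𝔤}
    {hlv : ∀ x ∈ 𝔩, ∀ v ∈ 𝔳, ⁅x, v⁆ ∈ 𝔳} {x : 𝔤} :
    x ∈ sumSub 𝔩 𝔳 hlv ↔ ∃ l ∈ 𝔩, ∃ v ∈ 𝔳, l + v = x := by
  unfold sumSub; exact Iff.rfl

end IWaux

open IWaux in
/-- **Lemma (Iwahori decomposition of Campbell–Hausdorff groups).**
Let `𝔤` be a nilpotent Lie algebra over `ℤ` with subalgebras `𝔲, 𝔩, 𝔳` such that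
`[𝔩,𝔲] ⊆ 𝔲`, `[𝔩,𝔳] ⊆ 𝔳` and `𝔤 = 𝔲 ⊕ 𝔩 ⊕ 𝔳` as modules, and let `G = exp(𝔤)` be
the group with underlying set `𝔤` and multiplication given by the (finite)
Campbell–Hausdorff series.  The Campbell–Hausdorff structure is encoded by the
bijection `e : 𝔤 ≃ G` together with its defining properties: `e 0 = 1`,
`(e x)⁻¹ = e (-x)`, subalgebras are carried to subgroups
(`e.symm (e x * e y)` lies in any subalgebra containing `x` and `y`), and the
Campbell–Hausdorff product of `x` and `y` differs from `x + y` by Lie brackets: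
if `x` or `y` lies in the `n`-th term of the lower central series then
`e.symm (e x * e y) - (x + y)` lies in the `(n+1)`-st term.
Then the multiplication map `U × L × V → G`, where `U = exp 𝔲`, `L = exp 𝔩`,
`V = exp 𝔳`, is a bijection: every `g ∈ G` factors uniquely as
`g = e u * e l * e v` with `u ∈ 𝔲`, `l ∈ 𝔩`, `v ∈ 𝔳`. -/
theorem campbellHausdorff_iwahori_decomposition
    (𝔤 : Type) [LieRing 𝔤] [LieAlgebra ℤ 𝔤]
    (hnilp : ∃ c : ℕ, LieModule.lowerCentralSeries ℤ 𝔤 𝔤 c = ⊥)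
    (G : Type) [Group G] (e : 𝔤 ≃ G)
    (hone : e 0 = 1)
    (hinv : ∀ x : 𝔤, (e x)⁻¹ = e (-x))
    (hsub : ∀ (h : LieSubalgebra ℤ 𝔤) (x y : 𝔤), x ∈ h → y ∈ h →
      e.symm (e x * e y) ∈ h)
    (hBCH : ∀ (n : ℕ) (x y : 𝔤),
      (x ∈ LieModule.lowerCentralSeries ℤ 𝔤 𝔤 n ∨ y ∈ LieModule.lowerCentralSeries ℤ 𝔤 𝔤 n) →
      e.symm (e x * e y) - (x + y) ∈ LieModule.lowerCentralSeries ℤ 𝔤 𝔤 (n + 1))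
    (𝔲 𝔩 𝔳 : LieSubalgebra ℤ 𝔤)
    (hlu : ∀ x ∈ 𝔩, ∀ u ∈ 𝔲, ⁅x, u⁆ ∈ 𝔲)
    (hlv : ∀ x ∈ 𝔩, ∀ v ∈ 𝔳, ⁅x, v⁆ ∈ 𝔳)
    (hdirect : ∀ g : 𝔤, ∃! t : 𝔲 × 𝔩 × 𝔳,
      (t.1 : 𝔤) + (t.2.1 : 𝔤) + (t.2.2 : 𝔤) = g) :
    ∀ g : G, ∃! t : 𝔲 × 𝔩 × 𝔳,
      e (t.1 : 𝔤) * e (t.2.1 : 𝔤) * e (t.2.2 : 𝔤) = g := by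
  classical
  obtain ⟨c, hc⟩ := hnilp
  -- abbreviations and basic facts about the lower central series
  have Cmono : ∀ {m n : ℕ}, m ≤ n → ∀ {x : 𝔤},
      x ∈ LieModule.lowerCentralSeries ℤ 𝔤 𝔤 n → x ∈ LieModule.lowerCentralSeries ℤ 𝔤 𝔤 m :=
    fun {m n} h {x} hx => LieModule.antitone_lowerCentralSeries ℤ 𝔤 𝔤 h hx
  have Czero : ∀ {n : ℕ} {x : 𝔤}, c ≤ n → x ∈ LieModule.lowerCentralSeries ℤ 𝔤 𝔤 n → x = 0 := by
    intro n x hcn hx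
    have h := Cmono hcn hx
    rw [hc] at h
    exact (LieSubmodule.mem_bot _).mp h
  have Ctop : ∀ x : 𝔤, x ∈ LieModule.lowerCentralSeries ℤ 𝔤 𝔤 0 := by
    intro x
    rw [LieModule.lowerCentralSeries_zero]
    exact LieSubmodule.mem_top x
  have csub : ∀ (h : LieSubalgebra ℤ 𝔤) (x y : 𝔤), x ∈ h → y ∈ h → cm e x y ∈ h :=
    fun h x y hx hy => hsub h x y hx hy
  have cC : ∀ (n : ℕ) (x y : 𝔤), x ∈ LieModule.lowerCentralSeries ℤ 𝔤 𝔤 n →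
      y ∈ LieModule.lowerCentralSeries ℤ 𝔤 𝔤 n →
      cm e x y ∈ LieModule.lowerCentralSeries ℤ 𝔤 𝔤 n :=
    fun n x y hx hy =>
      mem_lcsSub.mp (csub (lcsSub 𝔤 n) x y (mem_lcsSub.mpr hx) (mem_lcsSub.mpr hy))
  have hB : ∀ (n : ℕ) (x y : 𝔤),
      (x ∈ LieModule.lowerCentralSeries ℤ 𝔤 𝔤 n ∨ y ∈ LieModule.lowerCentralSeries ℤ 𝔤 𝔤 n) →
      cm e x y - (x + y) ∈ LieModule.lowerCentralSeries ℤ 𝔤 𝔤 (n + 1) :=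
    fun n x y h => hBCH n x y h
  -- additive perturbations can be realized multiplicatively
  have haddmul : ∀ (j n : ℕ) (w u : 𝔤), c ≤ n + j →
      u ∈ LieModule.lowerCentralSeries ℤ 𝔤 𝔤 n →
      ∃ u', u' ∈ LieModule.lowerCentralSeries ℤ 𝔤 𝔤 n ∧
        u' - u ∈ LieModule.lowerCentralSeries ℤ 𝔤 𝔤 (n + 1) ∧ w + u = cm e w u' := by
    intro j
    induction j with
    | zero =>
      intro n w u hcn hu
      obtain rfl : u = 0 := Czero (by omega) hu
      refine ⟨0, zero_mem _, ?_, ?_⟩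
      · simpa using (zero_mem (LieModule.lowerCentralSeries ℤ 𝔤 𝔤 (n + 1)))
      · rw [add_zero, cm_zero_right e hone]
    | succ j ih =>
      intro n w u hcn hu
      have h1 : cm e w u - (w + u) ∈ LieModule.lowerCentralSeries ℤ 𝔤 𝔤 (n + 1) :=
        hB n w u (Or.inr hu)
      have h2 : (w + u) - cm e w u ∈ LieModule.lowerCentralSeries ℤ 𝔤 𝔤 (n + 1) := by
        have := neg_mem h1
        rwa [neg_sub] at this
      obtain ⟨ε, hε, -, heq⟩ := ih (n + 1) (cm e w u) ((w + u) - cm e w u) (by omega) h2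
      have heq2 : w + u = cm e w (cm e u ε) := by
        rw [← cm_assoc, ← heq]
        abel
      refine ⟨cm e u ε, cC n u ε hu (Cmono (Nat.le_succ n) hε), ?_, heq2⟩
      have h3 : cm e u ε - (u + ε) ∈ LieModule.lowerCentralSeries ℤ 𝔤 𝔤 (n + 2) :=
        hB (n + 1) u ε (Or.inr hε)
      have h4 := add_mem (Cmono (Nat.le_succ (n + 1)) h3) hε
      have h5 : cm e u ε - (u + ε) + ε = cm e u ε - u := by abel
      rwa [h5] at h4
  -- conjugation preserves depth and acts trivially one level deeper
  have hconj : ∀ (n : ℕ) (b u : 𝔤), u ∈ LieModule.lowerCentralSeries ℤ 𝔤 𝔤 n →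
      cm e (cm e (-b) u) b ∈ LieModule.lowerCentralSeries ℤ 𝔤 𝔤 n ∧
      cm e (cm e (-b) u) b - u ∈ LieModule.lowerCentralSeries ℤ 𝔤 𝔤 (n + 1) := by
    intro n b u hu
    have h1 : cm e u b - (u + b) ∈ LieModule.lowerCentralSeries ℤ 𝔤 𝔤 (n + 1) :=
      hB n u b (Or.inl hu)
    have h2 : cm e b u - (b + u) ∈ LieModule.lowerCentralSeries ℤ 𝔤 𝔤 (n + 1) :=
      hB n b u (Or.inr hu)
    have h3 : cm e u b - cm e b u ∈ LieModule.lowerCentralSeries ℤ 𝔤 𝔤 (n + 1) := by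
      have h := sub_mem h1 h2
      have h4 : cm e u b - (u + b) - (cm e b u - (b + u)) = cm e u b - cm e b u := by abel
      rwa [h4] at h
    obtain ⟨δ, hδ, -, heq⟩ := haddmul c (n + 1) (cm e b u) (cm e u b - cm e b u) (by omega) h3
    have heq2 : cm e u b = cm e b (cm e u δ) := by
      rw [← cm_assoc, ← heq]
      abel
    have hval : cm e (cm e (-b) u) b = cm e u δ := by
      rw [cm_assoc, heq2, cancel₁ e hone hinv]
    constructor
    · rw [hval]
      exact cC n u δ hu (Cmono (Nat.le_succ n) hδ)
    · rw [hval]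
      have h3' : cm e u δ - (u + δ) ∈ LieModule.lowerCentralSeries ℤ 𝔤 𝔤 (n + 2) :=
        hB (n + 1) u δ (Or.inr hδ)
      have h4 := add_mem (Cmono (Nat.le_succ (n + 1)) h3') hδ
      have h5 : cm e u δ - (u + δ) + δ = cm e u δ - u := by abel
      rwa [h5] at h4
  -- the multiplicative splitting of a deep element along an additive splitting
  have hsplitC : ∀ (n : ℕ) (d a b : 𝔤), d ∈ LieModule.lowerCentralSeries ℤ 𝔤 𝔤 n →
      a + b = d → ∃ γ, γ ∈ LieModule.lowerCentralSeries ℤ 𝔤 𝔤 (n + 1) ∧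
        cm e a b = cm e d γ := by
    intro n d a b hd hab
    have h1 : cm e d (-b) - (d + -b) ∈ LieModule.lowerCentralSeries ℤ 𝔤 𝔤 (n + 1) :=
      hB n d (-b) (Or.inl hd)
    have h2 : d + -b = a := by rw [← hab]; abel
    rw [h2] at h1
    have h3 : a - cm e d (-b) ∈ LieModule.lowerCentralSeries ℤ 𝔤 𝔤 (n + 1) := by
      have := neg_mem h1
      rwa [neg_sub] at this
    obtain ⟨γ₂, hγ₂, -, heq⟩ := haddmul c (n + 1) (cm e d (-b)) (a - cm e d (-b)) (by omega) h3
    have ha : a = cm e (cm e d (-b)) γ₂ := by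
      rw [← heq]
      abel
    refine ⟨cm e (cm e (-b) γ₂) b, (hconj (n + 1) b γ₂ hγ₂).1, ?_⟩
    rw [ha]
    simp only [cm_assoc]
  -- two-factor multiplicative decomposition (existence)
  have pairE : ∀ (H K M : LieSubalgebra ℤ 𝔤), (∀ x ∈ H, x ∈ M) → (∀ x ∈ K, x ∈ M) →
      (∀ x ∈ M, ∃ a b, a ∈ H ∧ b ∈ K ∧ a + b = x) →
      ∀ x ∈ M, ∃ a b, a ∈ H ∧ b ∈ K ∧ cm e a b = x := by
    intro H K M hHM hKM hdec
    have main : ∀ (j n : ℕ), c ≤ n + j → ∀ (a b d : 𝔤), a ∈ H → b ∈ K →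
        d ∈ LieModule.lowerCentralSeries ℤ 𝔤 𝔤 n → d ∈ M →
        ∃ a' b', a' ∈ H ∧ b' ∈ K ∧ cm e a' b' = cm e (cm e a b) d := by
      intro j
      induction j with
      | zero =>
        intro n hcn a b d ha hb hd _
        obtain rfl : d = 0 := Czero (by omega) hd
        exact ⟨a, b, ha, hb, by rw [cm_zero_right e hone]⟩
      | succ j ih =>
        intro n hcn a b d ha hb hd hdM
        have hcj := hconj n (-b) d hd
        rw [neg_neg] at hcj
        have hd2M : cm e (cm e b d) (-b) ∈ M :=
          csub M _ _ (csub M b d (hKM b hb) hdM) (neg_mem (hKM b hb))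
        obtain ⟨p, q, hp, hq, hpq⟩ := hdec _ hd2M
        obtain ⟨γ, hγ, hγeq⟩ := hsplitC n _ p q hcj.1 hpq
        have hγM : γ ∈ M := by
          have hγval : γ = cm e (-(cm e (cm e b d) (-b))) (cm e p q) := by
            rw [hγeq, cancel₁ e hone hinv]
          rw [hγval]
          exact csub M _ _ (neg_mem hd2M) (csub M p q (hHM p hp) (hKM q hq))
        have hγ₄ := hconj (n + 1) b (-γ) (neg_mem hγ)
        have hγ₄M : cm e (cm e (-b) (-γ)) b ∈ M :=
          csub M _ _ (csub M _ _ (neg_mem (hKM b hb)) (neg_mem hγM)) (hKM b hb)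
        have hkey : cm e (cm e (cm e a p) (cm e q b)) (cm e (cm e (-b) (-γ)) b)
            = cm e (cm e a b) d := by
          simp only [cm_assoc]
          rw [cancel₂ e hone hinv]
          rw [show cm e p (cm e q (cm e (-γ) b)) = cm e (cm e p q) (cm e (-γ) b) from
            (cm_assoc e p q _).symm]
          rw [hγeq]
          simp only [cm_assoc]
          rw [cancel₂ e hone hinv]
          rw [cm_neg_left e hone hinv, cm_zero_right e hone]
        obtain ⟨a', b', ha', hb', heq'⟩ := ih (n + 1) (by omega) (cm e a p) (cm e q b)
          (cm e (cm e (-b) (-γ)) b) (csub H a p ha hp) (csub K q b hq hb) hγ₄.1 hγ₄M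
        exact ⟨a', b', ha', hb', by rw [heq', hkey]⟩
    intro x hxM
    obtain ⟨a', b', ha', hb', heq⟩ :=
      main c 0 (by omega) 0 0 x (zero_mem H) (zero_mem K) (Ctop x) hxM
    refine ⟨a', b', ha', hb', ?_⟩
    rw [heq, cm_zero_right e hone, cm_zero_left e hone]
  -- two-factor uniqueness
  have pairU : ∀ (H K : LieSubalgebra ℤ 𝔤), (∀ w, w ∈ H → w ∈ K → w = 0) →
      ∀ (a a' b b' : 𝔤), a ∈ H → a' ∈ H → b ∈ K → b' ∈ K →
      e a * e b = e a' * e b' → a = a' ∧ b = b' := by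
    intro H K hHK a a' b b' ha ha' hb hb' heq
    have hw : cm e (-a') a = cm e b' (-b) := by
      apply e.injective
      rw [e_cm, e_cm, ← hinv, ← hinv]
      rw [inv_mul_eq_iff_eq_mul, ← mul_assoc, eq_mul_inv_iff_mul_eq]
      exact heq
    have hwH : cm e (-a') a ∈ H := csub H _ _ (neg_mem ha') ha
    have hwK : cm e (-a') a ∈ K := by
      rw [hw]
      exact csub K _ _ hb' (neg_mem hb)
    have hw0 : cm e (-a') a = 0 := hHK _ hwH hwK
    constructor
    · have h9 : e (-a') * e a = 1 := by rw [← e_cm, hw0, hone]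
      rw [← hinv] at h9
      exact (e.injective (inv_mul_eq_one.mp h9)).symm
    · have h9 : e b' * e (-b) = 1 := by rw [← e_cm, ← hw, hw0, hone]
      rw [← hinv] at h9
      exact (e.injective (mul_inv_eq_one.mp h9)).symm
  -- intersection facts from the direct sum decomposition
  have hUQ0 : ∀ w, w ∈ 𝔲 → w ∈ sumSub 𝔩 𝔳 hlv → w = 0 := by
    intro w hwU hwQ
    obtain ⟨l₀, hl₀, v₀, hv₀, hsum⟩ := mem_sumSub.mp hwQ
    obtain ⟨t, -, hun⟩ := hdirect w
    have h1 := hun (⟨w, hwU⟩, ⟨0, zero_mem 𝔩⟩, ⟨0, zero_mem 𝔳⟩) (by simp)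
    have h2 := hun (⟨0, zero_mem 𝔲⟩, ⟨l₀, hl₀⟩, ⟨v₀, hv₀⟩) (by simpa using hsum)
    have h3 := h1.trans h2.symm
    have h4 := congrArg (fun t : 𝔲 × 𝔩 × 𝔳 => (t.1 : 𝔤)) h3
    simpa using h4
  have hLV0 : ∀ w, w ∈ 𝔩 → w ∈ 𝔳 → w = 0 := by
    intro w hwL hwV
    obtain ⟨t, -, hun⟩ := hdirect w
    have h1 := hun (⟨0, zero_mem 𝔲⟩, ⟨w, hwL⟩, ⟨0, zero_mem 𝔳⟩) (by simp)
    have h2 := hun (⟨0, zero_mem 𝔲⟩, ⟨0, zero_mem 𝔩⟩, ⟨w, hwV⟩) (by simp)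
    have h3 := h1.trans h2.symm
    have h4 := congrArg (fun t : 𝔲 × 𝔩 × 𝔳 => (t.2.1 : 𝔤)) h3
    simpa using h4
  -- memberships into the subalgebra 𝔮 = 𝔩 + 𝔳
  have hl𝔮 : ∀ x ∈ 𝔩, x ∈ sumSub 𝔩 𝔳 hlv :=
    fun x hx => mem_sumSub.mpr ⟨x, hx, 0, zero_mem 𝔳, add_zero x⟩
  have hv𝔮 : ∀ x ∈ 𝔳, x ∈ sumSub 𝔩 𝔳 hlv :=
    fun x hx => mem_sumSub.mpr ⟨0, zero_mem 𝔩, x, hx, zero_add x⟩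
  have hdec𝔮 : ∀ x ∈ sumSub 𝔩 𝔳 hlv, ∃ a b, a ∈ 𝔩 ∧ b ∈ 𝔳 ∧ a + b = x := by
    intro x hx
    obtain ⟨l, hl, v, hv, hsum⟩ := mem_sumSub.mp hx
    exact ⟨l, v, hl, hv, hsum⟩
  have hdecT : ∀ x ∈ (⊤ : LieSubalgebra ℤ 𝔤), ∃ a b, a ∈ 𝔲 ∧ b ∈ sumSub 𝔩 𝔳 hlv ∧ a + b = x := by
    intro x _
    obtain ⟨⟨⟨u, hu⟩, ⟨l, hl⟩, ⟨v, hv⟩⟩, hsum, -⟩ := hdirect x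
    refine ⟨u, l + v, hu, mem_sumSub.mpr ⟨l, hl, v, hv, rfl⟩, ?_⟩
    rw [← add_assoc]
    exact hsum
  -- main proof
  intro g
  obtain ⟨u, q, hu, hq, huq⟩ := pairE 𝔲 (sumSub 𝔩 𝔳 hlv) ⊤
    (fun x _ => LieSubalgebra.mem_top x) (fun x _ => LieSubalgebra.mem_top x)
    hdecT (e.symm g) (LieSubalgebra.mem_top _)
  obtain ⟨l, v, hl, hv, hlv2⟩ := pairE 𝔩 𝔳 (sumSub 𝔩 𝔳 hlv) hl𝔮 hv𝔮 hdec𝔮 q hq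
  have hPt : e u * e l * e v = g := by
    rw [mul_assoc, ← e_cm e l v, hlv2, ← e_cm e u q, huq, Equiv.apply_symm_apply]
  refine ⟨⟨⟨u, hu⟩, ⟨l, hl⟩, ⟨v, hv⟩⟩, hPt, ?_⟩
  rintro ⟨⟨u', hu'⟩, ⟨l', hl'⟩, ⟨v', hv'⟩⟩ hprod
  have hprod' : e u' * e l' * e v' = g := hprod
  have hq'Q : cm e l' v' ∈ sumSub 𝔩 𝔳 hlv := csub _ _ _ (hl𝔮 l' hl') (hv𝔮 v' hv')
  have hqQ : cm e l v ∈ sumSub 𝔩 𝔳 hlv := csub _ _ _ (hl𝔮 l hl) (hv𝔮 v hv)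
  have h1' : e u' * e (cm e l' v') = e u * e (cm e l v) := by
    rw [e_cm, e_cm, ← mul_assoc, ← mul_assoc, hprod', hPt]
  obtain ⟨huu, hqq⟩ := pairU 𝔲 (sumSub 𝔩 𝔳 hlv) hUQ0 u' u (cm e l' v') (cm e l v)
    hu' hu hq'Q hqQ h1'
  have h2' : e l' * e v' = e l * e v := by
    rw [← e_cm, ← e_cm, hqq]
  obtain ⟨hll, hvv⟩ := pairU 𝔩 𝔳 hLV0 l' l v' v hl' hl hv' hv h2'
  exact Prod.ext (Subtype.ext huu) (Prod.ext (Subtype.ext hll) (Subtype.ext hvv))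
end

section
/- Let O be a discrete valuation ring with maximal ideal 𝔭, and let Iₙ ⊆ GLₙ(O) be the Iwahori subgroup of matrices that are upper-triangular modulo 𝔭. For compositions α ≤ β of n, let I_α be the α-block-diagonal subgroup of Iₙ, U_α^β = U_α ∩ I_β the upper unitriangular matrices inside I_β with trivial α-blocks, and V_α^β = U_αᵗ ∩ I_β. Then the multiplication map U_α^β × I_α × V_α^β → I_β is a bijection. -/
section Iwahori

variable {O : Type} [CommRing O] [IsDomain O] [IsDiscreteValuationRing O] {n : ℕ}

/-- Membership in the Iwahori subgroup `Iₙ ⊆ GLₙ(O)`: `g` is invertible and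
upper-triangular modulo the maximal ideal `𝔭`. -/
def InIwahori (g : Matrix (Fin n) (Fin n) O) : Prop :=
  IsUnit g ∧ ∀ i j : Fin n, j < i → g i j ∈ IsLocalRing.maximalIdeal O

/-- Membership in the `γ`-block-diagonal subgroup `I_γ` of the Iwahori subgroup:
`g ∈ Iₙ` and `g i j = 0` unless `i` and `j` lie in the same block of `γ`. -/
def InBlockLevi (γ : Composition n) (g : Matrix (Fin n) (Fin n) O) : Prop :=
  InIwahori g ∧ ∀ i j : Fin n, γ.index i ≠ γ.index j → g i j = 0

/-- Membership in `U_γ`: `g` is upper-triangular with unipotent diagonal and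
`g i j = 0` for `i ≠ j` in the same block of `γ`. -/
def InUpper (γ : Composition n) (g : Matrix (Fin n) (Fin n) O) : Prop :=
  (∀ i j : Fin n, j < i → g i j = 0) ∧ (∀ i : Fin n, g i i = 1) ∧
  (∀ i j : Fin n, i ≠ j → γ.index i = γ.index j → g i j = 0)

/-- Membership in `V_γ = U_γᵗ ∩ Iₙ`: `g` is lower-triangular with unipotent
diagonal, strictly-lower entries in the maximal ideal, and `g i j = 0` for
`i ≠ j` in the same block of `γ`. -/
def InLower (γ : Composition n) (g : Matrix (Fin n) (Fin n) O) : Prop :=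
  (∀ i j : Fin n, i < j → g i j = 0) ∧ (∀ i : Fin n, g i i = 1) ∧
  (∀ i j : Fin n, i ≠ j → γ.index i = γ.index j → g i j = 0) ∧
  (∀ i j : Fin n, j < i → g i j ∈ IsLocalRing.maximalIdeal O)

/-- Membership in `U_α^β = U_α ∩ I_β`. -/
def InUpperSub (α β : Composition n) (g : Matrix (Fin n) (Fin n) O) : Prop :=
  InUpper α g ∧ ∀ i j : Fin n, β.index i ≠ β.index j → g i j = 0

/-- Membership in `V_α^β = V_α ∩ I_β`. -/
def InLowerSub (α β : Composition n) (g : Matrix (Fin n) (Fin n) O) : Prop :=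
  InLower α g ∧ ∀ i j : Fin n, β.index i ≠ β.index j → g i j = 0

end Iwahori

/-!
Write `a i` for the α-block of the index `i`. For an idempotent `e` and `g = [[A, B], [C, D]]`
in the splitting `1 = (1 - e) + e`, block Gaussian elimination gives
`g = (1 + B D⁻¹) · diag(A - B D⁻¹ C, D) · (1 + D⁻¹ C)` once the corner `D` is invertible.
Take for `e` the coordinates with `a i > c`. For `g ∈ I_β` the corner is again upper triangular
modulo `𝔭` with unit diagonal, hence invertible; `B D⁻¹` is block upper triangular, and
`D⁻¹ C ≡ 0 mod 𝔭` because `C` lies strictly below the diagonal. Every factor stays β-block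
diagonal, since such matrices form a subalgebra closed under inversion. Doing this for
`c = α.length - 1, …, 0` splits off one α-block after the other and gives existence.

For uniqueness, `u l v = u' l' v'` gives `u'⁻¹ u l = l' v' v⁻¹`. The left side is block upper
triangular and the right side block lower triangular, so both are block diagonal. Then
`u'⁻¹ u` and `v' v⁻¹` are block diagonal with identity diagonal blocks, so both equal `1`.
-/

open Matrix OrderDual

theorem Composition.monotone_index {n : ℕ} (c : Composition n) : Monotone c.index := by
  intro i j hij
  by_contra! h
  have h₁ := c.monotone_sizeUpTo (show (c.index j : ℕ) + 1 ≤ c.index i from h)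
  have h₂ := c.lt_sizeUpTo_index_succ j
  have h₃ := c.sizeUpTo_index_le i
  rw [Fin.val_succ] at h₂
  have : (i : ℕ) ≤ j := hij
  omega

section Schur

variable {A : Type*} [Ring A]

theorem one_add_mul_one_sub_of_mul_self_eq_zero {x : A} (h : x * x = 0) :
    (1 + x) * (1 - x) = 1 := by
  rw [mul_sub, mul_one, add_mul, one_mul, h, add_zero, add_sub_cancel_right]

theorem one_sub_mul_one_add_of_mul_self_eq_zero {x : A} (h : x * x = 0) :
    (1 - x) * (1 + x) = 1 := by
  rw [sub_mul, one_mul, mul_add, mul_one, h, add_zero, add_sub_cancel_right]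

variable (e g E : A)

/-- Inverting this padded corner inverts `D = e g e` on the range of `e`. With `E` its inverse,
`schurUpper = B D⁻¹`, `schurLower = D⁻¹ C`, and `schurLevi` is the middle factor. -/
def schurCorner : A := e * g * e + (1 - e)

def schurUpper : A := (1 - e) * g * E * e

def schurLower : A := e * E * g * (1 - e)

def schurLevi : A := (1 - schurUpper e g E) * g * (1 - schurLower e g E)

variable {e g E}

theorem schurCorner_mul_idempotent (he : IsIdempotentElem e) :
    schurCorner e g * e = e * g * e := by
  rw [schurCorner, add_mul, sub_mul, one_mul, mul_assoc (e * g), he.eq, sub_self, add_zero]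

theorem idempotent_mul_schurCorner (he : IsIdempotentElem e) :
    e * schurCorner e g = e * g * e := by
  rw [schurCorner, mul_add, mul_sub, mul_one, ← mul_assoc, ← mul_assoc, he.eq, sub_self,
    add_zero]

theorem schurUpper_mul_self_eq_zero (he : IsIdempotentElem e) :
    schurUpper e g E * schurUpper e g E = 0 := by
  simp only [schurUpper, ← mul_assoc, mul_assoc _ e (1 - e), he.mul_one_sub_self, mul_zero,
    zero_mul]

theorem schurLower_mul_self_eq_zero (he : IsIdempotentElem e) :
    schurLower e g E * schurLower e g E = 0 := by
  simp only [schurLower, ← mul_assoc, mul_assoc _ (1 - e) e, he.one_sub_mul_self, mul_zero,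
    zero_mul]

theorem one_add_schurUpper_mul_schurLevi_mul (he : IsIdempotentElem e) :
    (1 + schurUpper e g E) * schurLevi e g E * (1 + schurLower e g E) = g := by
  rw [schurLevi, ← mul_assoc, ← mul_assoc,
    one_add_mul_one_sub_of_mul_self_eq_zero (schurUpper_mul_self_eq_zero he), one_mul, mul_assoc,
    one_sub_mul_one_add_of_mul_self_eq_zero (schurLower_mul_self_eq_zero he), mul_one]

theorem one_sub_mul_schurLevi_mul_eq_zero (he : IsIdempotentElem e)
    (hE : E * schurCorner e g = 1) : (1 - e) * schurLevi e g E * e = 0 := by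
  have hEe : E * (e * (g * e)) = e := by
    rw [← mul_assoc e, ← schurCorner_mul_idempotent he, ← mul_assoc, hE, one_mul]
  have hEe' : ∀ x, E * (e * (g * (e * x))) = e * x := fun x => by
    simp only [← mul_assoc] at hEe ⊢
    rw [hEe]
  have hee : ∀ x, e * (e * x) = e * x := fun x => by rw [← mul_assoc, he.eq]
  simp only [schurLevi, schurUpper, schurLower, mul_sub, sub_mul, mul_one, one_mul, mul_assoc,
    hEe, hEe', hee, he.eq]
  noncomm_ring

theorem mul_schurLevi_mul_one_sub_eq_zero (he : IsIdempotentElem e)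
    (hE : schurCorner e g * E = 1) : e * schurLevi e g E * (1 - e) = 0 := by
  have hEe : e * (g * (e * E)) = e := by
    rw [← mul_assoc, ← mul_assoc, ← idempotent_mul_schurCorner he, mul_assoc, hE, mul_one]
  have hEe' : ∀ x, e * (g * (e * (E * x))) = e * x := fun x => by
    simp only [← mul_assoc] at hEe ⊢
    rw [hEe]
  have hee : ∀ x, e * (e * x) = e * x := fun x => by rw [← mul_assoc, he.eq]
  simp only [schurLevi, schurUpper, schurLower, mul_sub, sub_mul, mul_one, one_mul, mul_assoc,
    hEe', hee, he.eq]
  noncomm_ring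

theorem schurLower_eq_mul (he : IsIdempotentElem e) (hE₁ : E * schurCorner e g = 1)
    (hE₂ : schurCorner e g * E = 1) : schurLower e g E = E * (e * g * (1 - e)) := by
  have hcomm : e * E = E * e := by
    calc e * E = E * schurCorner e g * e * E := by rw [hE₁, one_mul]
      _ = E * e * schurCorner e g * E := by
        rw [mul_assoc E, schurCorner_mul_idempotent he, mul_assoc E e,
          idempotent_mul_schurCorner he, ← mul_assoc]
      _ = E * e := by rw [mul_assoc (E * e), hE₂, mul_one]
  simp only [schurLower, hcomm, mul_assoc]

variable {S : Type*} [SetLike S A] [SubringClass S A] {s : S}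

theorem schurCorner_mem (he : e ∈ s) (hg : g ∈ s) : schurCorner e g ∈ s :=
  add_mem (mul_mem (mul_mem he hg) he) (sub_mem (one_mem s) he)

theorem schurUpper_mem (he : e ∈ s) (hg : g ∈ s) (hE : E ∈ s) : schurUpper e g E ∈ s :=
  mul_mem (mul_mem (mul_mem (sub_mem (one_mem s) he) hg) hE) he

theorem schurLower_mem (he : e ∈ s) (hg : g ∈ s) (hE : E ∈ s) : schurLower e g E ∈ s :=
  mul_mem (mul_mem (mul_mem he hE) hg) (sub_mem (one_mem s) he)

theorem schurLevi_mem (he : e ∈ s) (hg : g ∈ s) (hE : E ∈ s) : schurLevi e g E ∈ s :=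
  mul_mem (mul_mem (sub_mem (one_mem s) (schurUpper_mem he hg hE)) hg)
    (sub_mem (one_mem s) (schurLower_mem he hg hE))

end Schur

namespace Matrix

section BlockStructure

variable {m R κ : Type*}

def IsBlockDiagonal [Zero R] (b : m → κ) (M : Matrix m m R) : Prop :=
  ∀ i j, b i ≠ b j → M i j = 0

def IsBlockUnipotent [DecidableEq m] [Zero R] [One R] (b : m → κ) (M : Matrix m m R) : Prop :=
  ∀ i j, b i = b j → M i j = (1 : Matrix m m R) i j

variable {b : m → κ}

theorem isBlockDiagonal_iff [Zero R] [LinearOrder κ] {M : Matrix m m R} :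
    M.IsBlockDiagonal b ↔ M.BlockTriangular b ∧ M.BlockTriangular (toDual ∘ b) := by
  refine ⟨fun h => ⟨fun i j hij => h i j hij.ne',
    fun i j hij => h i j (toDual_lt_toDual.mp hij).ne⟩, fun ⟨h₁, h₂⟩ i j hij => ?_⟩
  rcases hij.lt_or_gt with hlt | hlt
  · exact h₂ (toDual_lt_toDual.mpr hlt)
  · exact h₁ hlt

theorem isBlockDiagonal_diagonal [DecidableEq m] [Zero R] (b : m → κ) (d : m → R) :
    (diagonal d).IsBlockDiagonal b :=
  fun _ _ h => diagonal_apply_ne _ fun hij => h (congrArg b hij)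

theorem IsBlockDiagonal.mul [Fintype m] [NonUnitalNonAssocSemiring R] {M N : Matrix m m R}
    (hM : M.IsBlockDiagonal b) (hN : N.IsBlockDiagonal b) : (M * N).IsBlockDiagonal b := by
  intro i j hij
  rw [mul_apply]
  refine Finset.sum_eq_zero fun k _ => ?_
  by_cases hk : b i = b k
  · rw [hN k j (hk ▸ hij), mul_zero]
  · rw [hM i k hk, zero_mul]

theorem IsBlockUnipotent.eq_one [DecidableEq m] [Zero R] [One R] {M : Matrix m m R}
    (hM₁ : M.IsBlockUnipotent b) (hM : M.IsBlockDiagonal b) : M = 1 := by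
  ext i j
  by_cases hij : b i = b j
  · exact hM₁ i j hij
  · rw [hM i j hij, one_apply_ne fun h => hij (congrArg b h)]

variable [Fintype m] [DecidableEq m] [CommRing R] [LinearOrder κ] {M N : Matrix m m R}

theorem BlockTriangular.inv (hM : M.BlockTriangular b) : M⁻¹.BlockTriangular b := by
  by_cases h : IsUnit M.det
  · have := invertibleOfIsUnitDet M h
    exact blockTriangular_inv_of_blockTriangular hM
  · rw [nonsing_inv_apply_not_isUnit M h]
    exact blockTriangular_zero

theorem IsBlockDiagonal.inv (hM : M.IsBlockDiagonal b) : M⁻¹.IsBlockDiagonal b :=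
  isBlockDiagonal_iff.mpr ⟨(isBlockDiagonal_iff.mp hM).1.inv, (isBlockDiagonal_iff.mp hM).2.inv⟩

def blockDiagonalSubalgebra (b : m → κ) : Subalgebra R (Matrix m m R) :=
  blockTriangularSubalgebra R R b ⊓ blockTriangularSubalgebra R R (toDual ∘ b)

theorem mem_blockDiagonalSubalgebra :
    M ∈ blockDiagonalSubalgebra b ↔ M.IsBlockDiagonal b := by
  rw [blockDiagonalSubalgebra, Algebra.mem_inf, mem_blockTriangularSubalgebra,
    mem_blockTriangularSubalgebra, isBlockDiagonal_iff]

theorem BlockTriangular.mul_apply_of_isBlockUnipotent (hM : M.BlockTriangular b)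
    (hN : N.BlockTriangular b) (hN₁ : N.IsBlockUnipotent b) {i j : m} (hij : b i = b j) :
    (M * N) i j = M i j := by
  rw [mul_apply, Finset.sum_eq_single j]
  · rw [hN₁ j j rfl, one_apply_eq, mul_one]
  · intro k _ hkj
    rcases lt_trichotomy (b k) (b i) with h | h | h
    · rw [hM h, zero_mul]
    · rw [hN₁ k j (h.trans hij), one_apply_ne hkj, mul_zero]
    · rw [hN (hij ▸ h), mul_zero]
  · exact fun h => absurd (Finset.mem_univ j) h

theorem IsBlockUnipotent.mul (hM : M.BlockTriangular b) (hN : N.BlockTriangular b)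
    (hM₁ : M.IsBlockUnipotent b) (hN₁ : N.IsBlockUnipotent b) : (M * N).IsBlockUnipotent b :=
  fun i j hij => (hM.mul_apply_of_isBlockUnipotent hN hN₁ hij).trans (hM₁ i j hij)

theorem IsBlockUnipotent.det_eq_one (hM : M.BlockTriangular b) (hM₁ : M.IsBlockUnipotent b) :
    M.det = 1 := by
  rw [hM.det]
  refine Finset.prod_eq_one fun k _ => ?_
  have : M.toSquareBlock b k = 1 := by
    ext ⟨i, hi⟩ ⟨j, hj⟩
    rw [toSquareBlock_def, of_apply, hM₁ i j (hi.trans hj.symm)]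
    simp only [one_apply, Subtype.mk.injEq]
  rw [this, det_one]

theorem IsBlockUnipotent.isUnit_det (hM : M.BlockTriangular b) (hM₁ : M.IsBlockUnipotent b) :
    IsUnit M.det := by
  rw [hM₁.det_eq_one hM]
  exact isUnit_one

theorem IsBlockUnipotent.inv (hM : M.BlockTriangular b) (hM₁ : M.IsBlockUnipotent b) :
    M⁻¹.IsBlockUnipotent b := by
  intro i j hij
  rw [← hM.inv.mul_apply_of_isBlockUnipotent hM hM₁ hij,
    nonsing_inv_mul M (hM₁.isUnit_det hM)]

theorem IsBlockUnipotent.eq_one_of_mul_eq_mul {X Y L L' : Matrix m m R}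
    (hX : X.BlockTriangular b) (hX₁ : X.IsBlockUnipotent b)
    (hY : Y.BlockTriangular (toDual ∘ b)) (hY₁ : Y.IsBlockUnipotent b)
    (hL : L.IsBlockDiagonal b) (hL' : L'.IsBlockDiagonal b)
    (hLu : IsUnit L.det) (hL'u : IsUnit L'.det) (h : X * L = L' * Y) : X = 1 ∧ Y = 1 := by
  have hXL : (X * L).IsBlockDiagonal b := isBlockDiagonal_iff.mpr
    ⟨hX.mul (isBlockDiagonal_iff.mp hL).1, h ▸ (isBlockDiagonal_iff.mp hL').2.mul hY⟩
  constructor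
  · refine hX₁.eq_one ?_
    simpa only [mul_nonsing_inv_cancel_right _ _ hLu] using hXL.mul hL.inv
  · refine hY₁.eq_one ?_
    simpa only [h, nonsing_inv_mul_cancel_left _ _ hL'u] using hL'.inv.mul hXL

end BlockStructure

section CoordProj

variable {m R : Type*} [DecidableEq m] [CommRing R] (p : m → Prop) [DecidablePred p]

def coordProj : Matrix m m R := diagonal fun i => if p i then 1 else 0

theorem one_sub_coordProj : 1 - coordProj p = (coordProj fun i => ¬ p i : Matrix m m R) := by
  ext i j
  rcases eq_or_ne i j with rfl | hij
  · by_cases h : p i <;> simp [coordProj, h]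
  · simp [coordProj, hij]

variable [Fintype m]

theorem isIdempotentElem_coordProj : IsIdempotentElem (coordProj p : Matrix m m R) := by
  rw [IsIdempotentElem, coordProj, diagonal_mul_diagonal]
  congr 1
  ext i
  split_ifs <;> simp

theorem coordProj_mul_mul_coordProj_apply (q : m → Prop) [DecidablePred q] (M : Matrix m m R)
    (i j : m) :
    (coordProj p * M * coordProj q : Matrix m m R) i j = if p i ∧ q j then M i j else 0 := by
  by_cases hi : p i <;> by_cases hj : q j <;> simp [coordProj, hi, hj]

theorem schurCorner_coordProj_apply (g : Matrix m m R) (i j : m) :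
    schurCorner (coordProj p) g i j = if p i ∧ p j then g i j else (1 : Matrix m m R) i j := by
  rw [schurCorner, add_apply, coordProj_mul_mul_coordProj_apply, one_sub_coordProj]
  rcases eq_or_ne i j with rfl | hij
  · by_cases h : p i <;> simp [coordProj, h]
  · simp [coordProj, hij]

end CoordProj

section SchurAt

variable {m R κ : Type*} [Fintype m] [DecidableEq m] [CommRing R]
  (p : m → Prop) [DecidablePred p] (g : Matrix m m R)

noncomputable def schurUpperAt : Matrix m m R :=
  schurUpper (coordProj p) g (schurCorner (coordProj p) g)⁻¹

noncomputable def schurLowerAt : Matrix m m R :=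
  schurLower (coordProj p) g (schurCorner (coordProj p) g)⁻¹

noncomputable def schurLeviAt : Matrix m m R :=
  schurLevi (coordProj p) g (schurCorner (coordProj p) g)⁻¹

variable {p g}

theorem schurUpperAt_apply_eq_zero {i j : m} (h : ¬(¬p i ∧ p j)) :
    schurUpperAt p g i j = 0 := by
  rw [schurUpperAt, schurUpper, one_sub_coordProj, Matrix.mul_assoc _ g,
    coordProj_mul_mul_coordProj_apply, if_neg h]

theorem schurLowerAt_apply_eq_zero {i j : m} (h : ¬(p i ∧ ¬p j)) :
    schurLowerAt p g i j = 0 := by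
  rw [schurLowerAt, schurLower, one_sub_coordProj, Matrix.mul_assoc (coordProj p),
    coordProj_mul_mul_coordProj_apply, if_neg h]

theorem schurUpperAt_mul_self_eq_zero : schurUpperAt p g * schurUpperAt p g = 0 :=
  schurUpper_mul_self_eq_zero (isIdempotentElem_coordProj p)

theorem schurLowerAt_mul_self_eq_zero : schurLowerAt p g * schurLowerAt p g = 0 :=
  schurLower_mul_self_eq_zero (isIdempotentElem_coordProj p)

theorem one_add_schurUpperAt_mul_schurLeviAt_mul :
    (1 + schurUpperAt p g) * schurLeviAt p g * (1 + schurLowerAt p g) = g :=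
  one_add_schurUpper_mul_schurLevi_mul (isIdempotentElem_coordProj p)

theorem schurLeviAt_apply_eq_zero (hc : IsUnit (schurCorner (coordProj p) g).det) {i j : m}
    (h : ¬(p i ↔ p j)) : schurLeviAt p g i j = 0 := by
  have he := isIdempotentElem_coordProj (R := R) p
  by_cases hi : p i
  · have h0 : (coordProj p * schurLeviAt p g * coordProj fun i => ¬p i : Matrix m m R) i j =
        0 := by
      rw [← one_sub_coordProj, schurLeviAt,
        mul_schurLevi_mul_one_sub_eq_zero he (mul_nonsing_inv _ hc), zero_apply]
    rwa [coordProj_mul_mul_coordProj_apply, if_pos ⟨hi, by tauto⟩] at h0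
  · have h0 : ((coordProj fun i => ¬p i) * schurLeviAt p g * coordProj p : Matrix m m R) i j =
        0 := by
      rw [← one_sub_coordProj, schurLeviAt,
        one_sub_mul_schurLevi_mul_eq_zero he (nonsing_inv_mul _ hc), zero_apply]
    rwa [coordProj_mul_mul_coordProj_apply, if_pos ⟨hi, by tauto⟩] at h0

theorem schurLowerAt_eq_inv_mul (hc : IsUnit (schurCorner (coordProj p) g).det) :
    schurLowerAt p g =
      (schurCorner (coordProj p) g)⁻¹ * (coordProj p * g * coordProj fun i => ¬p i) := by
  rw [schurLowerAt, schurLower_eq_mul (isIdempotentElem_coordProj p) (nonsing_inv_mul _ hc)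
    (mul_nonsing_inv _ hc), one_sub_coordProj]

variable [LinearOrder κ] {b : m → κ}

theorem coordProj_mem_blockDiagonalSubalgebra :
    (coordProj p : Matrix m m R) ∈ blockDiagonalSubalgebra b :=
  mem_blockDiagonalSubalgebra.mpr (isBlockDiagonal_diagonal b _)

theorem IsBlockDiagonal.schurCorner_inv_mem (hg : g.IsBlockDiagonal b) :
    (schurCorner (coordProj p) g)⁻¹ ∈ blockDiagonalSubalgebra b :=
  mem_blockDiagonalSubalgebra.mpr (mem_blockDiagonalSubalgebra.mp (schurCorner_mem
    coordProj_mem_blockDiagonalSubalgebra (mem_blockDiagonalSubalgebra.mpr hg))).inv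

theorem IsBlockDiagonal.schurUpperAt (hg : g.IsBlockDiagonal b) :
    (schurUpperAt p g).IsBlockDiagonal b :=
  mem_blockDiagonalSubalgebra.mp (schurUpper_mem coordProj_mem_blockDiagonalSubalgebra
    (mem_blockDiagonalSubalgebra.mpr hg) hg.schurCorner_inv_mem)

theorem IsBlockDiagonal.schurLowerAt (hg : g.IsBlockDiagonal b) :
    (schurLowerAt p g).IsBlockDiagonal b :=
  mem_blockDiagonalSubalgebra.mp (schurLower_mem coordProj_mem_blockDiagonalSubalgebra
    (mem_blockDiagonalSubalgebra.mpr hg) hg.schurCorner_inv_mem)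

theorem IsBlockDiagonal.schurLeviAt (hg : g.IsBlockDiagonal b) :
    (schurLeviAt p g).IsBlockDiagonal b :=
  mem_blockDiagonalSubalgebra.mp (schurLevi_mem coordProj_mem_blockDiagonalSubalgebra
    (mem_blockDiagonalSubalgebra.mpr hg) hg.schurCorner_inv_mem)

end SchurAt

end Matrix

open IsLocalRing

theorem Matrix.isUnit_iff_forall_isUnit_of_isUpperTriangular_map_residue {m R : Type*}
    [Fintype m] [DecidableEq m] [LinearOrder m] [CommRing R] [IsLocalRing R] {M : Matrix m m R}
    (hM : (M.map (residue R)).IsUpperTriangular) : IsUnit M ↔ ∀ i, IsUnit (M i i) := by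
  rw [isUnit_iff_isUnit_det, ← residue_ne_zero_iff_isUnit, RingHom.map_det,
    RingHom.mapMatrix_apply, det_of_isUpperTriangular hM, Finset.prod_ne_zero_iff]
  simp only [Finset.mem_univ, true_implies, map_apply, residue_ne_zero_iff_isUnit]

section Iwahori

variable {O : Type} [CommRing O] {n : ℕ} {α β : Composition n}
  {g h u v l u' l' v' : Matrix (Fin n) (Fin n) O}

theorem inUpperSub_iff : InUpperSub α β u ↔
    u.BlockTriangular α.index ∧ u.IsBlockUnipotent α.index ∧ u.IsBlockDiagonal β.index := by
  constructor
  · rintro ⟨⟨hlow, hdiag, hblock⟩, hβ⟩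
    refine ⟨fun i j hij => hlow i j (α.monotone_index.reflect_lt hij), fun i j hij => ?_, hβ⟩
    rcases eq_or_ne i j with rfl | hne
    · rw [hdiag, one_apply_eq]
    · rw [hblock i j hne hij, one_apply_ne hne]
  · rintro ⟨hBT, hunip, hβ⟩
    refine ⟨⟨fun i j hij => ?_, fun i => by rw [hunip i i rfl, one_apply_eq],
      fun i j hne hij => by rw [hunip i j hij, one_apply_ne hne]⟩, hβ⟩
    rcases (α.monotone_index hij.le).lt_or_eq with h | h
    · exact hBT h
    · rw [hunip i j h.symm, one_apply_ne hij.ne']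

theorem InUpperSub.mul (hu : InUpperSub α β u) (hv : InUpperSub α β v) :
    InUpperSub α β (u * v) := by
  obtain ⟨hBT, hunip, hβ⟩ := inUpperSub_iff.mp hu
  obtain ⟨hBT', hunip', hβ'⟩ := inUpperSub_iff.mp hv
  exact inUpperSub_iff.mpr ⟨hBT.mul hBT', hunip.mul hBT hBT' hunip', hβ.mul hβ'⟩

theorem inUpperSub_one : InUpperSub α β (1 : Matrix (Fin n) (Fin n) O) :=
  inUpperSub_iff.mpr ⟨blockTriangular_one, fun _ _ _ => rfl,
    fun _ _ h => one_apply_ne fun hij => h (congrArg _ hij)⟩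

variable [IsDomain O] [IsDiscreteValuationRing O]

theorem inIwahori_iff : InIwahori g ↔ IsUnit g ∧ (g.map (residue O)).IsUpperTriangular := by
  simp only [InIwahori, IsUpperTriangular, BlockTriangular, id, map_apply, residue_eq_zero_iff]

theorem InIwahori.isUnit_apply_self (hg : InIwahori g) (i : Fin n) : IsUnit (g i i) :=
  (isUnit_iff_forall_isUnit_of_isUpperTriangular_map_residue (inIwahori_iff.mp hg).2).mp
    (inIwahori_iff.mp hg).1 i

theorem InIwahori.mul (hg : InIwahori g) (hh : InIwahori h) : InIwahori (g * h) := by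
  rw [inIwahori_iff] at *
  exact ⟨hg.1.mul hh.1, by rw [Matrix.map_mul]; exact hg.2.mul hh.2⟩

theorem InBlockLevi.isBlockDiagonal {γ : Composition n} (hg : InBlockLevi γ g) :
    g.IsBlockDiagonal γ.index :=
  hg.2

theorem inLowerSub_iff : InLowerSub α β v ↔
    v.BlockTriangular (toDual ∘ α.index) ∧ v.IsBlockUnipotent α.index ∧
      v.map (residue O) = 1 ∧ v.IsBlockDiagonal β.index := by
  constructor
  · rintro ⟨⟨hup, hdiag, hblock, hmax⟩, hβ⟩
    refine ⟨fun i j hij => hup i j (α.monotone_index.reflect_lt hij), fun i j hij => ?_, ?_,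
      hβ⟩
    · rcases eq_or_ne i j with rfl | hne
      · rw [hdiag, one_apply_eq]
      · rw [hblock i j hne hij, one_apply_ne hne]
    · ext i j
      rcases lt_trichotomy i j with h | rfl | h
      · rw [map_apply, hup i j h, map_zero, one_apply_ne h.ne]
      · rw [map_apply, hdiag, map_one, one_apply_eq]
      · rw [map_apply, (residue_eq_zero_iff _).mpr (hmax i j h), one_apply_ne h.ne']
  · rintro ⟨hBT, hunip, hred, hβ⟩
    refine ⟨⟨fun i j hij => ?_, fun i => by rw [hunip i i rfl, one_apply_eq],
      fun i j hne hij => by rw [hunip i j hij, one_apply_ne hne], fun i j hij => ?_⟩, hβ⟩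
    · rcases (α.monotone_index hij.le).lt_or_eq with h | h
      · exact hBT (toDual_lt_toDual.mpr h)
      · rw [hunip i j h, one_apply_ne hij.ne]
    · simpa [one_apply_ne hij.ne', residue_eq_zero_iff] using congrArg (fun M => M i j) hred

theorem inLowerSub_one : InLowerSub α β (1 : Matrix (Fin n) (Fin n) O) :=
  inLowerSub_iff.mpr ⟨blockTriangular_one, fun _ _ _ => rfl,
    Matrix.map_one _ (map_zero _) (map_one _),
    fun _ _ h => one_apply_ne fun hij => h (congrArg _ hij)⟩

theorem InUpperSub.inIwahori (hu : InUpperSub α β u) : InIwahori u := by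
  obtain ⟨hBT, hunip, -⟩ := inUpperSub_iff.mp hu
  exact inIwahori_iff.mpr ⟨(isUnit_iff_isUnit_det u).mpr (hunip.isUnit_det hBT),
    BlockTriangular.map _ fun i j hij => hu.1.1 i j hij⟩

theorem InLowerSub.inIwahori (hv : InLowerSub α β v) : InIwahori v := by
  obtain ⟨hBT, hunip, hred, -⟩ := inLowerSub_iff.mp hv
  exact inIwahori_iff.mpr ⟨(isUnit_iff_isUnit_det v).mpr (hunip.isUnit_det hBT),
    hred ▸ blockTriangular_one⟩

theorem InLowerSub.mul (hu : InLowerSub α β u) (hv : InLowerSub α β v) :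
    InLowerSub α β (u * v) := by
  obtain ⟨hBT, hunip, hred, hβ⟩ := inLowerSub_iff.mp hu
  obtain ⟨hBT', hunip', hred', hβ'⟩ := inLowerSub_iff.mp hv
  -- `IsBlockUnipotent` only compares labels, so it reads the same for `toDual ∘ α.index`.
  exact inLowerSub_iff.mpr ⟨hBT.mul hBT',
    IsBlockUnipotent.mul (b := toDual ∘ α.index) hBT hBT' hunip hunip',
    by rw [Matrix.map_mul, hred, hred', mul_one], hβ.mul hβ'⟩

theorem InIwahori.isUnit_det_schurCorner (hg : InIwahori g) (p : Fin n → Prop)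
    [DecidablePred p] : IsUnit (schurCorner (coordProj p) g).det := by
  have hC : ((schurCorner (coordProj p) g).map (residue O)).IsUpperTriangular := by
    intro i j hij
    rw [map_apply, schurCorner_coordProj_apply]
    split_ifs
    · exact (residue_eq_zero_iff _).mpr (hg.2 i j hij)
    · rw [one_apply_ne (show j < i from hij).ne', map_zero]
  rw [← isUnit_iff_isUnit_det, isUnit_iff_forall_isUnit_of_isUpperTriangular_map_residue hC]
  intro i
  rw [schurCorner_coordProj_apply]
  split_ifs
  · exact hg.isUnit_apply_self i
  · rw [one_apply_eq]
    exact isUnit_one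

section SchurAt

variable {p : Fin n → Prop} [DecidablePred p]

theorem InIwahori.map_schurLowerAt (hg : InIwahori g) (hp : ∀ i j, p i → ¬p j → j < i) :
    (schurLowerAt p g).map (residue O) = 0 := by
  rw [schurLowerAt_eq_inv_mul (hg.isUnit_det_schurCorner p), Matrix.map_mul]
  convert Matrix.mul_zero _
  ext i j
  rw [map_apply, coordProj_mul_mul_coordProj_apply, Matrix.zero_apply]
  split_ifs with h
  · exact (residue_eq_zero_iff _).mpr (hg.2 i j (hp i j h.1 h.2))
  · exact map_zero _

theorem InIwahori.schurLeviAt (hg : InIwahori g) (hp : ∀ i j, p i → ¬p j → j < i) :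
    InIwahori (schurLeviAt p g) := by
  have hX : InIwahori (1 - schurUpperAt p g) := by
    refine inIwahori_iff.mpr ⟨(isUnit_iff_isUnit_det _).mpr (isUnit_det_of_right_inverse
      (one_sub_mul_one_add_of_mul_self_eq_zero schurUpperAt_mul_self_eq_zero)), ?_⟩
    rw [← RingHom.mapMatrix_apply, map_sub, map_one]
    refine blockTriangular_one.sub fun i j hij => ?_
    rw [RingHom.mapMatrix_apply, map_apply,
      schurUpperAt_apply_eq_zero fun h => lt_asymm (hp j i h.2 h.1) hij, map_zero]
  have hY : InIwahori (1 - schurLowerAt p g) := by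
    refine inIwahori_iff.mpr ⟨(isUnit_iff_isUnit_det _).mpr (isUnit_det_of_right_inverse
      (one_sub_mul_one_add_of_mul_self_eq_zero schurLowerAt_mul_self_eq_zero)), ?_⟩
    rw [← RingHom.mapMatrix_apply, map_sub, map_one, RingHom.mapMatrix_apply,
      hg.map_schurLowerAt hp, sub_zero]
    exact blockTriangular_one
  exact (hX.mul hg).mul hY

end SchurAt

section Step

variable {c : ℕ}

theorem Composition.lt_of_index_le_of_lt_index {i j : Fin n} (hj : (α.index j : ℕ) ≤ c)
    (hi : c < α.index i) : j < i :=
  α.monotone_index.reflect_lt (Fin.lt_def.mpr (hj.trans_lt hi))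

theorem InBlockLevi.inUpperSub_one_add_schurUpperAt (hg : InBlockLevi β g) :
    InUpperSub α β (1 + schurUpperAt (fun i => c < α.index i) g) := by
  refine inUpperSub_iff.mpr ⟨blockTriangular_one.add fun i j hij => ?_, fun i j hij => ?_,
    mem_blockDiagonalSubalgebra.mp
      (add_mem (one_mem _) (mem_blockDiagonalSubalgebra.mpr hg.isBlockDiagonal.schurUpperAt))⟩
  · have := Fin.lt_def.mp hij
    exact schurUpperAt_apply_eq_zero (by omega)
  · have := Fin.val_eq_of_eq hij
    rw [Matrix.add_apply, schurUpperAt_apply_eq_zero (by omega), add_zero]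

theorem InBlockLevi.inLowerSub_one_add_schurLowerAt (hg : InBlockLevi β g) :
    InLowerSub α β (1 + schurLowerAt (fun i => c < α.index i) g) := by
  refine inLowerSub_iff.mpr ⟨blockTriangular_one.add fun i j hij => ?_, fun i j hij => ?_, ?_,
    mem_blockDiagonalSubalgebra.mp
      (add_mem (one_mem _) (mem_blockDiagonalSubalgebra.mpr hg.isBlockDiagonal.schurLowerAt))⟩
  · have := Fin.lt_def.mp (toDual_lt_toDual.mp hij)
    exact schurLowerAt_apply_eq_zero (by omega)
  · have := Fin.val_eq_of_eq hij
    rw [Matrix.add_apply, schurLowerAt_apply_eq_zero (by omega), add_zero]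
  · rw [← RingHom.mapMatrix_apply, map_add, map_one, RingHom.mapMatrix_apply,
      hg.1.map_schurLowerAt fun i j hi hj => α.lt_of_index_le_of_lt_index (not_lt.mp hj) hi,
      add_zero]

theorem InBlockLevi.exists_schur_step (hg : InBlockLevi β g)
    (hgc : g.IsBlockDiagonal fun i => max (α.index i : ℕ) (c + 1)) :
    ∃ u g' v, InUpperSub α β u ∧ InBlockLevi β g' ∧ InLowerSub α β v ∧
      (g'.IsBlockDiagonal fun i => max (α.index i : ℕ) c) ∧ u * g' * v = g := by
  set p : Fin n → Prop := fun i => c < α.index i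
  refine ⟨_, schurLeviAt p g, _, hg.inUpperSub_one_add_schurUpperAt,
    ⟨hg.1.schurLeviAt fun i j hi hj => α.lt_of_index_le_of_lt_index (not_lt.mp hj) hi,
      hg.isBlockDiagonal.schurLeviAt⟩, hg.inLowerSub_one_add_schurLowerAt, fun i j hij => ?_,
    one_add_schurUpperAt_mul_schurLeviAt_mul⟩
  by_cases h : p i ↔ p j
  · exact hgc.schurLeviAt i j (by simp only [p, ne_eq] at h hij ⊢; omega)
  · exact schurLeviAt_apply_eq_zero (hg.1.isUnit_det_schurCorner p) h

end Step

/-- The label `max (α.index i) c` merges the α-blocks of index `≤ c` into a single block, so the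
hypothesis on `g` is `g ∈ I_α` for `c = 0` and void for `c ≥ α.length`. -/
theorem InBlockLevi.exists_factorization_of_isBlockDiagonal {c : ℕ} (hg : InBlockLevi β g)
    (hgc : g.IsBlockDiagonal fun i => max (α.index i : ℕ) c) :
    ∃ u l v,
      InUpperSub α β u ∧ InBlockLevi α l ∧ InLowerSub α β v ∧ u * l * v = g := by
  induction c generalizing g with
  | zero =>
    refine ⟨1, g, 1, inUpperSub_one, ⟨hg.1, fun i j hij => hgc i j ?_⟩, inLowerSub_one,
      by rw [Matrix.one_mul, Matrix.mul_one]⟩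
    simpa only [Nat.max_zero, ne_eq, Fin.val_inj] using hij
  | succ c ih =>
    obtain ⟨u, g', v, hu, hg', hv, hg'c, rfl⟩ := hg.exists_schur_step hgc
    obtain ⟨u', l, v', hu', hl, hv', rfl⟩ := ih hg' hg'c
    exact ⟨u * u', l, v' * v, hu.mul hu', hl, hv'.mul hv, by simp only [Matrix.mul_assoc]⟩

theorem InBlockLevi.exists_factorization (α : Composition n) (hg : InBlockLevi β g) :
    ∃ u l v, InUpperSub α β u ∧ InBlockLevi α l ∧ InLowerSub α β v ∧ u * l * v = g :=
  hg.exists_factorization_of_isBlockDiagonal (c := α.length) fun i j hij => (hij <| by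
    dsimp only
    rw [max_eq_right (α.index i).isLt.le, max_eq_right (α.index j).isLt.le]).elim

theorem factorization_unique (hu : InUpperSub α β u) (hl : InBlockLevi α l)
    (hv : InLowerSub α β v) (hu' : InUpperSub α β u') (hl' : InBlockLevi α l')
    (hv' : InLowerSub α β v') (h : u * l * v = u' * l' * v') : u = u' ∧ l = l' ∧ v = v' := by
  obtain ⟨huT, huU, -⟩ := inUpperSub_iff.mp hu
  obtain ⟨hu'T, hu'U, -⟩ := inUpperSub_iff.mp hu'
  obtain ⟨hvT, hvU, -, -⟩ := inLowerSub_iff.mp hv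
  obtain ⟨hv'T, hv'U, -, -⟩ := inLowerSub_iff.mp hv'
  have hu'd := hu'U.isUnit_det hu'T
  have hvd := IsBlockUnipotent.isUnit_det (b := toDual ∘ α.index) hvT hvU
  have key : u'⁻¹ * u * l = l' * (v' * v⁻¹) := by
    calc u'⁻¹ * u * l = u'⁻¹ * (u * l * v) * v⁻¹ := by
          simp only [Matrix.mul_assoc, mul_nonsing_inv _ hvd, Matrix.mul_one]
      _ = l' * (v' * v⁻¹) := by
          rw [h]
          simp only [Matrix.mul_assoc, nonsing_inv_mul_cancel_left _ _ hu'd]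
  obtain ⟨hX, hY⟩ := IsBlockUnipotent.eq_one_of_mul_eq_mul (hu'T.inv.mul huT)
    ((hu'U.inv hu'T).mul hu'T.inv huT huU) (hv'T.mul hvT.inv)
    (IsBlockUnipotent.mul (b := toDual ∘ α.index) hv'T hvT.inv hv'U (hvU.inv hvT)) hl.2 hl'.2
    ((isUnit_iff_isUnit_det l).mp hl.1.1) ((isUnit_iff_isUnit_det l').mp hl'.1.1) key
  refine ⟨?_, by rwa [hX, hY, Matrix.one_mul, Matrix.mul_one] at key, ?_⟩
  · calc u = u' * (u'⁻¹ * u) := (mul_nonsing_inv_cancel_left _ _ hu'd).symm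
      _ = u' := by rw [hX, Matrix.mul_one]
  · calc v = 1 * v := (Matrix.one_mul v).symm
      _ = v' := by rw [← hY, nonsing_inv_mul_cancel_right _ _ hvd]

theorem InUpperSub.mul_inBlockLevi_mul
    (hαβ : ∀ i j : Fin n, α.index i = α.index j → β.index i = β.index j)
    (hu : InUpperSub α β u) (hl : InBlockLevi α l) (hv : InLowerSub α β v) :
    InBlockLevi β (u * l * v) :=
  ⟨(hu.inIwahori.mul hl.1).mul hv.inIwahori,
    ((inUpperSub_iff.mp hu).2.2.mul fun i j h => hl.2 i j (mt (hαβ i j) h)).mul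
      (inLowerSub_iff.mp hv).2.2.2⟩

end Iwahori

/-- **Lemma (Iwahori decomposition of `I_β`).** Let `O` be a discrete valuation ring
and `α ≤ β` compositions of `n` (i.e. `α` refines `β`).  Then the multiplication map
`U_α^β × I_α × V_α^β → I_β` is a bijection: products `u·l·v` lie in `I_β`, and every
`g ∈ I_β` factors uniquely as `g = u·l·v` with `u ∈ U_α^β`, `l ∈ I_α`, `v ∈ V_α^β`. -/
theorem iwahori_decomposition_blocks
    (O : Type) [CommRing O] [IsDomain O] [IsDiscreteValuationRing O] (n : ℕ)
    (α β : Composition n)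
    (hαβ : ∀ i j : Fin n, α.index i = α.index j → β.index i = β.index j) :
    (∀ u l v : Matrix (Fin n) (Fin n) O,
      InUpperSub α β u → InBlockLevi α l → InLowerSub α β v →
        InBlockLevi β (u * l * v)) ∧
    (∀ g : Matrix (Fin n) (Fin n) O, InBlockLevi β g →
      ∃! t : Matrix (Fin n) (Fin n) O × Matrix (Fin n) (Fin n) O ×
          Matrix (Fin n) (Fin n) O,
        InUpperSub α β t.1 ∧ InBlockLevi α t.2.1 ∧ InLowerSub α β t.2.2 ∧
          t.1 * t.2.1 * t.2.2 = g) := by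
  refine ⟨fun u l v hu hl hv => hu.mul_inBlockLevi_mul hαβ hl hv, fun g hg => ?_⟩
  obtain ⟨u, l, v, hu, hl, hv, rfl⟩ := hg.exists_factorization α
  refine ⟨(u, l, v), ⟨hu, hl, hv, rfl⟩, ?_⟩
  rintro ⟨u', l', v'⟩ ⟨hu', hl', hv', h⟩
  obtain ⟨rfl, rfl, rfl⟩ := factorization_unique hu' hl' hv' hu hl hv h
  rfl
end

section
/- Let α ≤ β ≤ γ be compositions of n. In the Iwahori subgroup Iₙ ⊆ GLₙ(O), one has U_α^γ = U_α^β ⋉ U_β^γ: that is, U_β^γ is a normal subgroup of U_α^γ, U_α^β is a subgroup of U_α^γ, their intersection is trivial, and U_α^γ = U_α^β · U_β^γ. -/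
/-!
Let `g ↦ g_β` keep the entries of `g` inside the diagonal blocks of `β`. Because the blocks are
intervals, this map is multiplicative on upper triangular matrices, and `g ∈ U_α^β` means: `g` is
upper triangular, `g_α = 1` and `g_β = g`. On `U_α^γ`, `g ↦ g_β` is then a retraction onto `U_α^β`
whose kernel is `U_β^γ`, which gives normality, the trivial intersection, and the factorisation
`g = g_β · (g_β⁻¹ g)`.
-/

open Matrix

namespace Composition

variable {n : ℕ}

theorem monotone_index_s14 (c : Composition n) : Monotone c.index := by
  intro i j hij
  by_contra! hlt
  have hj : (j : ℕ) < c.sizeUpTo (c.index j).succ := c.lt_sizeUpTo_index_succ j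
  have hmono : c.sizeUpTo (c.index j).succ ≤ c.sizeUpTo (c.index i) :=
    c.monotone_sizeUpTo (Nat.succ_le_of_lt hlt)
  have hi := c.sizeUpTo_index_le i
  have : (i : ℕ) ≤ j := hij
  omega

theorem index_eq_of_le_of_le (c : Composition n) {i k j : Fin n} (hik : i ≤ k) (hkj : k ≤ j)
    (h : c.index i = c.index j) : c.index i = c.index k :=
  le_antisymm (c.monotone_index_s14 hik) (h ▸ c.monotone_index_s14 hkj)

/-- The paper's order `c ≤ b`: every block of `c` lies inside a block of `b`. -/
def Refines (c b : Composition n) : Prop :=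
  ∀ i j, c.index i = c.index j → b.index i = b.index j

def blockDiagPart {R : Type*} [Zero R] (c : Composition n) (g : Matrix (Fin n) (Fin n) R) :
    Matrix (Fin n) (Fin n) R :=
  Matrix.of fun i j => if c.index i = c.index j then g i j else 0

section BlockDiagPart

variable {R : Type*} {c : Composition n} {g h : Matrix (Fin n) (Fin n) R}

@[simp]
theorem blockDiagPart_apply_self [Zero R] (c : Composition n) (g : Matrix (Fin n) (Fin n) R)
    (i : Fin n) : c.blockDiagPart g i i = g i i := by
  simp [blockDiagPart]

@[simp]
theorem blockDiagPart_one [Zero R] [One R] (c : Composition n) :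
    c.blockDiagPart (1 : Matrix (Fin n) (Fin n) R) = 1 := by
  ext i j
  by_cases hij : i = j
  · subst hij
    simp [blockDiagPart]
  · simp [blockDiagPart, one_apply_ne hij]

theorem blockDiagPart_eq_self_iff [Zero R] :
    c.blockDiagPart g = g ↔ ∀ i j, c.index i ≠ c.index j → g i j = 0 := by
  refine ⟨fun h i j hij => ?_, fun h => ?_⟩
  · rw [← h]
    simp [blockDiagPart, hij]
  · ext i j
    by_cases hij : c.index i = c.index j
    · simp [blockDiagPart, hij]
    · simp [blockDiagPart, hij, h i j hij]

theorem blockDiagPart_eq_one_iff [Zero R] [One R] :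
    c.blockDiagPart g = 1 ↔
      (∀ i, g i i = 1) ∧ ∀ i j, i ≠ j → c.index i = c.index j → g i j = 0 := by
  refine ⟨fun h => ⟨fun i => ?_, fun i j hne hij => ?_⟩, fun ⟨hdiag, hoff⟩ => ?_⟩
  · simpa using congrFun (congrFun h i) i
  · simpa [blockDiagPart, hij, one_apply_ne hne] using congrFun (congrFun h i) j
  · ext i j
    by_cases hne : i = j
    · subst hne
      simp [hdiag]
    · by_cases hij : c.index i = c.index j
      · simp [blockDiagPart, hij, one_apply_ne hne, hoff i j hne hij]
      · simp [blockDiagPart, hij, one_apply_ne hne]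

theorem blockDiagPart_blockDiagPart_of_refines [Zero R] {b : Composition n}
    (hcb : c.Refines b) (g : Matrix (Fin n) (Fin n) R) :
    c.blockDiagPart (b.blockDiagPart g) = c.blockDiagPart g := by
  ext i j
  by_cases hij : c.index i = c.index j
  · simp [blockDiagPart, hij, hcb i j hij]
  · simp [blockDiagPart, hij]

theorem blockDiagPart_blockDiagPart_of_refines' [Zero R] {b : Composition n}
    (hcb : c.Refines b) (g : Matrix (Fin n) (Fin n) R) :
    b.blockDiagPart (c.blockDiagPart g) = c.blockDiagPart g := by
  ext i j
  by_cases hij : c.index i = c.index j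
  · simp [blockDiagPart, hij, hcb i j hij]
  · simp [blockDiagPart, hij]

theorem blockDiagPart_blockDiagPart [Zero R] (c : Composition n) (g : Matrix (Fin n) (Fin n) R) :
    c.blockDiagPart (c.blockDiagPart g) = c.blockDiagPart g :=
  blockDiagPart_blockDiagPart_of_refines (fun _ _ => id) g

theorem _root_.Matrix.IsUpperTriangular.blockDiagPart [Zero R] (hg : g.IsUpperTriangular)
    (c : Composition n) : (c.blockDiagPart g).IsUpperTriangular := by
  intro i j hji
  simp [Composition.blockDiagPart, hg hji]

/-- Since the blocks of `c` are intervals, a product `g i k * h k j` of upper triangular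
matrices with `i`, `j` in one block only involves indices `k` of that block. -/
theorem blockDiagPart_mul [NonUnitalNonAssocSemiring R] (hg : g.IsUpperTriangular)
    (hh : h.IsUpperTriangular) :
    c.blockDiagPart (g * h) = c.blockDiagPart g * c.blockDiagPart h := by
  ext i j
  simp only [blockDiagPart, of_apply, mul_apply]
  split_ifs with hij
  · refine Finset.sum_congr rfl fun k _ => ?_
    by_cases hik : i ≤ k
    · by_cases hkj : k ≤ j
      · have hik' := c.index_eq_of_le_of_le hik hkj hij
        rw [if_pos hik', if_pos (hik'.symm.trans hij)]
      · simp [hh (not_le.1 hkj)]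
    · simp [hg (not_le.1 hik)]
  · refine (Finset.sum_eq_zero fun k _ => ?_).symm
    split_ifs with hik hkj
    · exact absurd (hik.trans hkj) hij
    all_goals simp

end BlockDiagPart

end Composition

namespace Matrix.IsUpperTriangular

variable {R : Type*} [CommRing R] {n : ℕ} {g : Matrix (Fin n) (Fin n) R}

theorem det_eq_one (hg : g.IsUpperTriangular) (hdiag : ∀ i, g i i = 1) : g.det = 1 := by
  simp [det_of_isUpperTriangular hg, hdiag]

/-- A singular `g` has `g⁻¹ = 0`, so no invertibility hypothesis is needed. -/
theorem inv (hg : g.IsUpperTriangular) : g⁻¹.IsUpperTriangular := by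
  by_cases hdet : IsUnit g.det
  · have := invertibleOfIsUnitDet g hdet
    exact blockTriangular_inv_of_blockTriangular hg
  · rw [nonsing_inv_apply_not_isUnit g hdet]
    exact blockTriangular_zero

theorem blockDiagPart_inv (hg : g.IsUpperTriangular) (hdet : IsUnit g.det) (c : Composition n) :
    c.blockDiagPart g⁻¹ = (c.blockDiagPart g)⁻¹ := by
  refine (inv_eq_left_inv ?_).symm
  rw [← Composition.blockDiagPart_mul hg.inv hg, nonsing_inv_mul g hdet,
    Composition.blockDiagPart_one]

end Matrix.IsUpperTriangular

section InUpperSub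

open Composition

variable {O : Type} [CommRing O] {n : ℕ} {α β γ : Composition n}
  {g h : Matrix (Fin n) (Fin n) O}

theorem inUpperSub_iff_s14 : InUpperSub α β g ↔
    g.IsUpperTriangular ∧ α.blockDiagPart g = 1 ∧ β.blockDiagPart g = g := by
  rw [InUpperSub, InUpper, blockDiagPart_eq_one_iff, blockDiagPart_eq_self_iff]
  exact and_assoc

theorem InUpperSub.isUnit_det (hg : InUpperSub α β g) : IsUnit g.det := by
  obtain ⟨hup, hα, -⟩ := inUpperSub_iff_s14.1 hg
  rw [hup.det_eq_one (blockDiagPart_eq_one_iff.1 hα).1]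
  exact isUnit_one

theorem InUpperSub.of_refines_right (hβγ : β.Refines γ)
    (hg : InUpperSub α β g) : InUpperSub α γ g := by
  obtain ⟨hup, hα, hβ⟩ := inUpperSub_iff_s14.1 hg
  refine inUpperSub_iff_s14.2 ⟨hup, hα, ?_⟩
  rw [← hβ, blockDiagPart_blockDiagPart_of_refines' hβγ]

theorem InUpperSub.of_refines_left (hαβ : α.Refines β)
    (hg : InUpperSub β γ g) : InUpperSub α γ g := by
  obtain ⟨hup, hβ, hγ⟩ := inUpperSub_iff_s14.1 hg
  refine inUpperSub_iff_s14.2 ⟨hup, ?_, hγ⟩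
  rw [← blockDiagPart_blockDiagPart_of_refines hαβ, hβ, blockDiagPart_one]

theorem InUpperSub.eq_one_of_inUpperSub (hg : InUpperSub α β g) (hg' : InUpperSub β γ g) :
    g = 1 :=
  (inUpperSub_iff_s14.1 hg).2.2.symm.trans (inUpperSub_iff_s14.1 hg').2.1

/-- `β.blockDiagPart` is multiplicative on upper triangular matrices and sends `h` to `1`, hence
`g * h * g⁻¹` to `β.blockDiagPart (g * g⁻¹) = 1`. -/
theorem InUpperSub.conj_mem (hg : InUpperSub α γ g) (hh : InUpperSub β γ h) :
    InUpperSub β γ (g * h * g⁻¹) := by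
  obtain ⟨hgup, -, hgγ⟩ := inUpperSub_iff_s14.1 hg
  obtain ⟨hhup, hhβ, hhγ⟩ := inUpperSub_iff_s14.1 hh
  have hdet := hg.isUnit_det
  refine inUpperSub_iff_s14.2 ⟨(hgup.mul hhup).mul hgup.inv, ?_, ?_⟩
  · rw [blockDiagPart_mul (hgup.mul hhup) hgup.inv, blockDiagPart_mul hgup hhup, hhβ, mul_one,
      ← blockDiagPart_mul hgup hgup.inv, mul_nonsing_inv g hdet, blockDiagPart_one]
  · rw [blockDiagPart_mul (hgup.mul hhup) hgup.inv, blockDiagPart_mul hgup hhup,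
      hgup.blockDiagPart_inv hdet, hgγ, hhγ]

theorem InUpperSub.exists_mul_eq (hαβ : α.Refines β)
    (hβγ : β.Refines γ) (hg : InUpperSub α γ g) :
    ∃ u v, InUpperSub α β u ∧ InUpperSub β γ v ∧ g = u * v := by
  obtain ⟨hgup, hgα, hgγ⟩ := inUpperSub_iff_s14.1 hg
  set u := β.blockDiagPart g with hu
  have huup : u.IsUpperTriangular := hgup.blockDiagPart β
  have hu_mem : InUpperSub α β u := inUpperSub_iff_s14.2
    ⟨huup, by rw [hu, blockDiagPart_blockDiagPart_of_refines hαβ, hgα],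
      blockDiagPart_blockDiagPart β g⟩
  have hdet := hu_mem.isUnit_det
  refine ⟨u, u⁻¹ * g, hu_mem, inUpperSub_iff_s14.2 ⟨huup.inv.mul hgup, ?_, ?_⟩,
    (mul_nonsing_inv_cancel_left u g hdet).symm⟩
  · rw [blockDiagPart_mul huup.inv hgup, huup.blockDiagPart_inv hdet, ← hu,
      blockDiagPart_blockDiagPart, nonsing_inv_mul u hdet]
  · rw [blockDiagPart_mul huup.inv hgup, huup.blockDiagPart_inv hdet, hgγ, hu,
      blockDiagPart_blockDiagPart_of_refines' hβγ]

end InUpperSub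

theorem upper_semidirect_decomposition_general
    (O : Type) [CommRing O] (n : ℕ)
    (α β γ : Composition n)
    (hαβ : ∀ i j : Fin n, α.index i = α.index j → β.index i = β.index j)
    (hβγ : ∀ i j : Fin n, β.index i = β.index j → γ.index i = γ.index j) :
    (∀ g : Matrix (Fin n) (Fin n) O, InUpperSub α β g → InUpperSub α γ g) ∧
    (∀ g : Matrix (Fin n) (Fin n) O, InUpperSub β γ g → InUpperSub α γ g) ∧
    (∀ g h : Matrix (Fin n) (Fin n) O, InUpperSub α γ g → InUpperSub β γ h →
      InUpperSub β γ (g * h * g⁻¹)) ∧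
    (∀ g : Matrix (Fin n) (Fin n) O, InUpperSub α β g → InUpperSub β γ g → g = 1) ∧
    (∀ g : Matrix (Fin n) (Fin n) O, InUpperSub α γ g →
      ∃ u v : Matrix (Fin n) (Fin n) O,
        InUpperSub α β u ∧ InUpperSub β γ v ∧ g = u * v) :=
  ⟨fun _ => .of_refines_right hβγ, fun _ => .of_refines_left hαβ, fun _ _ => .conj_mem,
    fun _ => InUpperSub.eq_one_of_inUpperSub, fun _ => InUpperSub.exists_mul_eq hαβ hβγ⟩

/-- **Lemma.** For compositions `α ≤ β ≤ γ` of `n` (refinement order), in the Iwahori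
subgroup of `GLₙ(O)` one has `U_α^γ = U_α^β ⋉ U_β^γ`: both `U_α^β` and `U_β^γ` are
contained in `U_α^γ`, `U_β^γ` is stable under conjugation by elements of `U_α^γ`
(normality), the intersection `U_α^β ∩ U_β^γ` is trivial, and `U_α^γ = U_α^β · U_β^γ`. -/
theorem upper_semidirect_decomposition
    (O : Type) [CommRing O] [IsDomain O] [IsDiscreteValuationRing O] (n : ℕ)
    (α β γ : Composition n)
    (hαβ : ∀ i j : Fin n, α.index i = α.index j → β.index i = β.index j)
    (hβγ : ∀ i j : Fin n, β.index i = β.index j → γ.index i = γ.index j) :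
    (∀ g : Matrix (Fin n) (Fin n) O, InUpperSub α β g → InUpperSub α γ g) ∧
    (∀ g : Matrix (Fin n) (Fin n) O, InUpperSub β γ g → InUpperSub α γ g) ∧
    (∀ g h : Matrix (Fin n) (Fin n) O, InUpperSub α γ g → InUpperSub β γ h →
      InUpperSub β γ (g * h * g⁻¹)) ∧
    (∀ g : Matrix (Fin n) (Fin n) O, InUpperSub α β g → InUpperSub β γ g → g = 1) ∧
    (∀ g : Matrix (Fin n) (Fin n) O, InUpperSub α γ g →
      ∃ u v : Matrix (Fin n) (Fin n) O,
        InUpperSub α β u ∧ InUpperSub β γ v ∧ g = u * v) :=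
  upper_semidirect_decomposition_general O n α β γ hαβ hβγ
end

section
/- Let G be a finite group with an Iwahori decomposition (U, L, V): L normalizes U and V and the multiplication map U × L × V → G is a bijection. Let M be an irreducible complex representation of G. Then the space Hom_L(M^U, M^V) of L-equivariant linear maps from the U-fixed vectors to the V-fixed vectors of M is at most one-dimensional; if it is nonzero then it is spanned by the composite operator e_V e_U : M^U → M^V (averaging over U then over V), which is an isomorphism. -/
set_option linter.unusedSectionVars false
set_option linter.unusedVariables false
set_option maxHeartbeats 1000000

section

variable {G : Type} [Group G] {M : Type} [AddCommGroup M] [Module ℂ M]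

/-- The submodule `M^H` of `H`-fixed vectors of a representation `ρ`. -/
def fixedSubmodule (ρ : Representation ℂ G M) (H : Subgroup G) : Submodule ℂ M where
  carrier := {x | ∀ h ∈ H, ρ h x = x}
  add_mem' := fun {a b} ha hb h hh => by rw [map_add, ha h hh, hb h hh]
  zero_mem' := fun h _ => map_zero _
  smul_mem' := fun c a ha h hh => by rw [LinearMap.map_smul, ha h hh]

/-- The space of endomorphisms `f` of `M` with `f ∘ e_U = f`, `e_V ∘ f = f`, and
commuting with the `L`-action; it is canonically isomorphic to the space
`Hom_L(M^U, M^V)` of `L`-equivariant linear maps from `M^U` to `M^V` (such an `f`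
restricts to an `L`-map `M^U → M^V`, and every `L`-map arises from a unique such
`f`, namely `ι ∘ T ∘ e_U`). -/
def homLSpace (ρ : Representation ℂ G M) (L : Subgroup G)
    (eU eV : Module.End ℂ M) : Submodule ℂ (Module.End ℂ M) where
  carrier := {f | f * eU = f ∧ eV * f = f ∧ ∀ l ∈ L, f * ρ l = ρ l * f}
  add_mem' := fun {a b} ha hb => by
    refine ⟨by rw [add_mul, ha.1, hb.1], by rw [mul_add, ha.2.1, hb.2.1], ?_⟩
    intro l hl
    rw [add_mul, mul_add, ha.2.2 l hl, hb.2.2 l hl]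
  zero_mem' := by simp
  smul_mem' := fun c a ha => by
    refine ⟨by rw [smul_mul_assoc, ha.1], by rw [mul_smul_comm, ha.2.1], ?_⟩
    intro l hl
    rw [smul_mul_assoc, mul_smul_comm, ha.2.2 l hl]

end

section
variable {G : Type} [Group G] [Finite G] {M : Type} [AddCommGroup M] [Module ℂ M]
variable (ρ : Representation ℂ G M)

lemma mem_fixed {H : Subgroup G} {x : M} : x ∈ fixedSubmodule ρ H ↔ ∀ h ∈ H, ρ h x = x :=
  Iff.rfl

noncomputable def Ssum (H : Subgroup G) : Module.End ℂ M := ∑ᶠ h : H, ρ (h : G)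

lemma Ssum_eq (H : Subgroup G) [Fintype H] : Ssum ρ H = ∑ h : H, ρ (h : G) := by
  rw [Ssum, finsum_eq_sum_of_fintype]

lemma rho_mul_Ssum (H : Subgroup G) (h : G) (hh : h ∈ H) :
    ρ h * Ssum ρ H = Ssum ρ H := by
  letI : Fintype H := Fintype.ofFinite _
  rw [Ssum_eq, Finset.mul_sum]
  exact Fintype.sum_equiv (Equiv.mulLeft ⟨h, hh⟩) _ _ (fun x => by simp [← map_mul])

lemma Ssum_mul_rho (H : Subgroup G) (h : G) (hh : h ∈ H) :
    Ssum ρ H * ρ h = Ssum ρ H := by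
  letI : Fintype H := Fintype.ofFinite _
  rw [Ssum_eq, Finset.sum_mul]
  exact Fintype.sum_equiv (Equiv.mulRight ⟨h, hh⟩) _ _ (fun x => by simp [← map_mul])

lemma Ssum_inv (H : Subgroup G) [Fintype H] : ∑ h : H, ρ ((h : G)⁻¹) = Ssum ρ H := by
  rw [Ssum_eq]
  exact Fintype.sum_equiv (Equiv.inv H) _ _ (fun x => by simp)

lemma card_ne (H : Subgroup G) : (Nat.card H : ℂ) ≠ 0 := by simp [Nat.card_pos.ne']

lemma rho_mem_fixed {H L : Subgroup G} (hn : ∀ l ∈ L, ∀ u ∈ H, l * u * l⁻¹ ∈ H)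
    {l : G} (hl : l ∈ L) {x : M} (hx : x ∈ fixedSubmodule ρ H) :
    ρ l x ∈ fixedSubmodule ρ H := by
  intro h hh
  have h' : l⁻¹ * h * l ∈ H := by simpa using hn l⁻¹ (L.inv_mem hl) h hh
  have : h * l = l * (l⁻¹ * h * l) := by group
  calc ρ h (ρ l x) = ρ (h * l) x := by rw [map_mul]; rfl
  _ = ρ l (ρ (l⁻¹ * h * l) x) := by rw [this, map_mul]; rfl
  _ = ρ l x := by rw [hx _ h']

variable {H : Subgroup G} {e : Module.End ℂ M}
variable (he : e = (Nat.card H : ℂ)⁻¹ • Ssum ρ H)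
include he

lemma rho_mul_e {h : G} (hh : h ∈ H) : ρ h * e = e := by
  rw [he, mul_smul_comm, rho_mul_Ssum ρ H h hh]

lemma e_mul_rho {h : G} (hh : h ∈ H) : e * ρ h = e := by
  rw [he, smul_mul_assoc, Ssum_mul_rho ρ H h hh]

lemma Ssum_eq_card_smul : Ssum ρ H = (Nat.card H : ℂ) • e := by
  rw [he, smul_smul, mul_inv_cancel₀ (card_ne H), one_smul]

lemma e_sq : e * e = e := by
  letI : Fintype H := Fintype.ofFinite _
  nth_rw 1 [he]
  rw [smul_mul_assoc, Ssum_eq, Finset.sum_mul,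
    Finset.sum_congr rfl (fun h _ => rho_mul_e ρ he h.2), Finset.sum_const,
    Finset.card_univ, ← Nat.card_eq_fintype_card, ← Nat.cast_smul_eq_nsmul ℂ,
    smul_smul, inv_mul_cancel₀ (card_ne H), one_smul]

lemma e_apply_fixed {x : M} (hx : x ∈ fixedSubmodule ρ H) : e x = x := by
  letI : Fintype H := Fintype.ofFinite _
  rw [he, Ssum_eq, LinearMap.smul_apply, LinearMap.coe_sum, Finset.sum_apply]
  have hco : ∀ h : H, (ρ (h : G)) x = x := fun h => hx ↑h h.2
  rw [Finset.sum_congr rfl (fun h _ => hco h), Finset.sum_const, Finset.card_univ,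
    ← Nat.card_eq_fintype_card, ← Nat.cast_smul_eq_nsmul ℂ, smul_smul,
    inv_mul_cancel₀ (card_ne H), one_smul]

lemma e_apply_mem (x : M) : e x ∈ fixedSubmodule ρ H := by
  intro h hh
  have := congrFun (congrArg DFunLike.coe (rho_mul_e ρ he hh)) x
  simpa using this

lemma rho_comm_e {l : G} (hc : ∀ u ∈ H, l * u * l⁻¹ ∈ H) (hc' : ∀ u ∈ H, l⁻¹ * u * l ∈ H) :
    ρ l * e = e * ρ l := by
  letI : Fintype H := Fintype.ofFinite _
  rw [he, mul_smul_comm, smul_mul_assoc, Ssum_eq, Finset.mul_sum, Finset.sum_mul]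
  congr 1
  refine Fintype.sum_equiv
    ({ toFun := fun u => ⟨l * u * l⁻¹, hc u u.2⟩,
       invFun := fun u => ⟨l⁻¹ * u * l, by simpa using hc' u u.2⟩,
       left_inv := fun u => Subtype.ext (show l⁻¹ * (l * ↑u * l⁻¹) * l = ↑u by group),
       right_inv := fun u => Subtype.ext (show l * (l⁻¹ * ↑u * l) * l⁻¹ = ↑u by group) } :
      (H ≃ H))
    _ _ (fun u => ?_)
  simp only [← map_mul]
  congr 1
  show l * ↑u = (l * ↑u * l⁻¹) * l
  group

end

section Iw
variable {G : Type} [Group G] [Finite G] {U L V : Subgroup G}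

noncomputable def iwEquiv (hIw : ∀ g : G, ∃! t : U × L × V,
    (t.1 : G) * (t.2.1 : G) * (t.2.2 : G) = g) : (U × L × V) ≃ G :=
  Equiv.ofBijective (fun t => (t.1 : G) * (t.2.1 : G) * (t.2.2 : G))
    ((Function.bijective_iff_existsUnique _).2 hIw)

lemma iwEquiv_apply (hIw : ∀ g : G, ∃! t : U × L × V,
    (t.1 : G) * (t.2.1 : G) * (t.2.2 : G) = g) (t : U × L × V) :
    iwEquiv hIw t = (t.1 : G) * (t.2.1 : G) * (t.2.2 : G) := rfl

lemma iw_card (hIw : ∀ g : G, ∃! t : U × L × V,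
    (t.1 : G) * (t.2.1 : G) * (t.2.2 : G) = g) :
    (Nat.card G : ℂ) = (Nat.card U : ℂ) * (Nat.card L : ℂ) * (Nat.card V : ℂ) := by
  have := Nat.card_congr (iwEquiv hIw)
  rw [← this]
  push_cast [Nat.card_prod]
  ring

lemma iw_swap (hIw : ∀ g : G, ∃! t : U × L × V,
    (t.1 : G) * (t.2.1 : G) * (t.2.2 : G) = g) :
    ∀ g : G, ∃! t : V × L × U, (t.1 : G) * (t.2.1 : G) * (t.2.2 : G) = g := by
  intro g
  obtain ⟨⟨u, l, v⟩, ht, huniq⟩ := hIw g⁻¹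
  refine ⟨⟨v⁻¹, l⁻¹, u⁻¹⟩, ?_, ?_⟩
  · show ((v : G)⁻¹) * ((l : G)⁻¹) * ((u : G)⁻¹) = g
    have : ((u : G) * l * v)⁻¹ = g⁻¹⁻¹ := by rw [ht]
    simpa [mul_inv_rev, mul_assoc] using this
  · rintro ⟨v', l', u'⟩ h'
    have h'' : (u'⁻¹ : U) = u ∧ ((l'⁻¹ : L) = l ∧ (v'⁻¹ : V) = v) := by
      have h2 : ((u' : G)⁻¹) * ((l' : G)⁻¹) * ((v' : G)⁻¹) = g⁻¹ := by
        have : ((v' : G) * l' * u')⁻¹ = g⁻¹ := by rw [h']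
        simpa [mul_inv_rev, mul_assoc] using this
      have := huniq ⟨u'⁻¹, l'⁻¹, v'⁻¹⟩ h2
      simpa [Prod.ext_iff] using this
    obtain ⟨h1, h2, h3⟩ := h''
    have hv : v' = v⁻¹ := by rw [← h3, inv_inv]
    have hl : l' = l⁻¹ := by rw [← h2, inv_inv]
    have hu : u' = u⁻¹ := by rw [← h1, inv_inv]
    simp [hv, hl, hu, Prod.ext_iff]

variable {M : Type} [AddCommGroup M] [Module ℂ M] {ρ : Representation ℂ G M}

/-- Key surjectivity lemma: `e_U` maps `M^V` onto `M^U`, given a nonzero `f` with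
`e_V f = f` commuting with `L`. -/
lemma lemA
    (hLU : ∀ l ∈ L, ∀ u ∈ U, l * u * l⁻¹ ∈ U)
    (hLV : ∀ l ∈ L, ∀ v ∈ V, l * v * l⁻¹ ∈ V)
    (hIw : ∀ g : G, ∃! t : U × L × V, (t.1 : G) * (t.2.1 : G) * (t.2.2 : G) = g)
    (hirr : ∀ p : Submodule ℂ M, (∀ g : G, ∀ x ∈ p, ρ g x ∈ p) → p = ⊥ ∨ p = ⊤)
    {eU eV f : Module.End ℂ M}
    (heU : eU = (Nat.card U : ℂ)⁻¹ • Ssum ρ U)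
    (heV : eV = (Nat.card V : ℂ)⁻¹ • Ssum ρ V)
    (hf2 : eV * f = f) (hf3 : ∀ l ∈ L, f * ρ l = ρ l * f) (hf0 : f ≠ 0) :
    fixedSubmodule ρ U ≤ Submodule.map eU (fixedSubmodule ρ V) := by
  set s : Set M := {y | ∃ g : G, ∃ x : M, y = ρ g (f x)} with hs
  set p₁ := Submodule.span ℂ s with hp₁
  have hgen : ∀ g : G, ∀ y ∈ s, ρ g y ∈ s := by
    rintro g y ⟨g', x, rfl⟩
    exact ⟨g * g', x, by rw [map_mul]; rfl⟩
  have hstab : ∀ g : G, ∀ x ∈ p₁, ρ g x ∈ p₁ := by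
    intro g x hx
    have hmap : Submodule.map (ρ g : M →ₗ[ℂ] M) p₁ ≤ p₁ := by
      rw [hp₁, Submodule.map_span, Submodule.span_le]
      rintro _ ⟨y, hy, rfl⟩
      exact Submodule.subset_span (hgen g y hy)
    exact hmap ⟨x, hx, rfl⟩
  have hne : p₁ ≠ ⊥ := by
    obtain ⟨x, hx⟩ : ∃ x, f x ≠ 0 := by
      by_contra hcon
      push_neg at hcon
      exact hf0 (LinearMap.ext fun x => by simpa using hcon x)
    intro hbot
    have : f x ∈ p₁ := Submodule.subset_span ⟨1, x, by simp⟩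
    rw [hbot, Submodule.mem_bot] at this
    exact hx this
  have htop : p₁ = ⊤ := (hirr p₁ hstab).resolve_left hne
  have hfmem : ∀ x : M, f x ∈ fixedSubmodule ρ V := by
    intro x
    have : f x = eV (f x) := by
      have := congrFun (congrArg DFunLike.coe hf2) x
      exact this.symm
    rw [this]
    exact e_apply_mem ρ heV _
  have hUcomm : ∀ l ∈ L, ρ l * eU = eU * ρ l := fun l hl =>
    rho_comm_e ρ heU (hLU l hl) (fun u hu => by simpa using hLU l⁻¹ (L.inv_mem hl) u hu)
  have hVf : ∀ v ∈ V, ρ v * f = f := by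
    intro v hv
    rw [← hf2, ← mul_assoc, rho_mul_e ρ heV hv]
  -- image of generators under eU lands in map eU (fixed V)
  have h1 : Submodule.map eU p₁ ≤ Submodule.map eU (fixedSubmodule ρ V) := by
    rw [hp₁, Submodule.map_span, Submodule.span_le]
    rintro _ ⟨y, ⟨g, x, rfl⟩, rfl⟩
    obtain ⟨⟨u, l, v⟩, hdec⟩ := (hIw g).exists
    have hop : eU * ρ g * f = ρ (l : G) * (eU * f) := by
      rw [← hdec, map_mul, map_mul]
      simp only [mul_assoc]
      rw [hVf ↑v v.2, ← mul_assoc, e_mul_rho ρ heU u.2, ← mul_assoc, ← hUcomm l l.2,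
        mul_assoc]
    have hval : eU (ρ g (f x)) = eU (ρ (l : G) (f x)) := by
      have e1 : eU (ρ g (f x)) = (eU * ρ g * f) x := rfl
      have e2 : eU (ρ (l : G) (f x)) = (eU * (ρ (l : G) * f)) x := rfl
      rw [e1, e2, hop]
      have : ρ (l : G) * (eU * f) = eU * (ρ (l : G) * f) := by
        rw [← mul_assoc, hUcomm l l.2, mul_assoc]
      rw [this]
    exact ⟨ρ (l : G) (f x), rho_mem_fixed ρ hLV l.2 (hfmem x), hval.symm⟩
  intro y hy
  have hy1 : y ∈ p₁ := by rw [htop]; trivial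
  have : eU y ∈ Submodule.map eU (fixedSubmodule ρ V) := h1 ⟨y, hy1, rfl⟩
  rwa [e_apply_fixed ρ heU hy] at this

/-- Key injectivity lemma: a nonzero `f` with `f e_U = f` commuting with `L` is
injective on `M^V`. -/
lemma lemB
    (hIw : ∀ g : G, ∃! t : U × L × V, (t.1 : G) * (t.2.1 : G) * (t.2.2 : G) = g)
    (hirr : ∀ p : Submodule ℂ M, (∀ g : G, ∀ x ∈ p, ρ g x ∈ p) → p = ⊥ ∨ p = ⊤)
    {eU f : Module.End ℂ M}
    (heU : eU = (Nat.card U : ℂ)⁻¹ • Ssum ρ U)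
    (hf1 : f * eU = f) (hf3 : ∀ l ∈ L, f * ρ l = ρ l * f) (hf0 : f ≠ 0) :
    ∀ z ∈ fixedSubmodule ρ V, f z = 0 → z = 0 := by
  intro z hz hfz
  set K : Submodule ℂ M :=
    { carrier := {m | ∀ g : G, f (ρ g m) = 0}
      add_mem' := fun {a b} ha hb g => by rw [map_add, map_add, ha g, hb g, add_zero]
      zero_mem' := fun g => by simp
      smul_mem' := fun c a ha g => by rw [map_smul, map_smul, ha g, smul_zero] } with hK
  have hstab : ∀ g : G, ∀ m ∈ K, ρ g m ∈ K := by
    intro g m hm g'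
    have : ρ g' (ρ g m) = ρ (g' * g) m := by rw [map_mul]; rfl
    rw [this]
    exact hm (g' * g)
  have hne : K ≠ ⊤ := by
    intro hcon
    apply hf0
    apply LinearMap.ext
    intro m
    have hm : m ∈ K := by rw [hcon]; trivial
    simpa using hm 1
  have hbot : K = ⊥ := (hirr K hstab).resolve_right hne
  have hzK : z ∈ K := by
    intro g
    obtain ⟨⟨u, l, v⟩, hdec⟩ := (hIw g).exists
    have hfu : f * ρ (u : G) = f := by
      rw [← hf1, mul_assoc, e_mul_rho ρ heU u.2]
    have hrz : ρ g z = ρ (u : G) (ρ (l : G) z) := by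
      rw [← hdec, map_mul, map_mul]
      have : ρ (v : G) z = z := hz ↑v v.2
      simp only [Module.End.mul_apply, this]
    rw [hrz]
    have e1 : f (ρ (u : G) (ρ (l : G) z)) = (f * ρ (u : G)) (ρ (l : G) z) := rfl
    rw [e1, hfu]
    have e2 : f (ρ (l : G) z) = (f * ρ (l : G)) z := rfl
    rw [e2, hf3 l l.2]
    have e3 : (ρ (l : G) * f) z = ρ (l : G) (f z) := rfl
    rw [e3, hfz, map_zero]
  have := hbot ▸ hzK
  simpa using this

variable [FiniteDimensional ℂ M] [Nontrivial M]

/-- Schur-type scalar relation: for `f` in the Hom-space,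
`e_U f e_V e_U` is a scalar multiple of `e_U`. -/
lemma schurRel
    (hLU : ∀ l ∈ L, ∀ u ∈ U, l * u * l⁻¹ ∈ U)
    (hLV : ∀ l ∈ L, ∀ v ∈ V, l * v * l⁻¹ ∈ V)
    (hIw : ∀ g : G, ∃! t : U × L × V, (t.1 : G) * (t.2.1 : G) * (t.2.2 : G) = g)
    (hirr : ∀ p : Submodule ℂ M, (∀ g : G, ∀ x ∈ p, ρ g x ∈ p) → p = ⊥ ∨ p = ⊤)
    {eU eV f : Module.End ℂ M}
    (heU : eU = (Nat.card U : ℂ)⁻¹ • Ssum ρ U)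
    (heV : eV = (Nat.card V : ℂ)⁻¹ • Ssum ρ V)
    (hf2 : eV * f = f) (hf3 : ∀ l ∈ L, f * ρ l = ρ l * f) :
    ∃ c : ℂ, eU * f * (eV * eU) = c • eU := by
  letI : Fintype G := Fintype.ofFinite G
  letI : Fintype U := Fintype.ofFinite U
  letI : Fintype L := Fintype.ofFinite L
  letI : Fintype V := Fintype.ofFinite V
  set T : Module.End ℂ M := ∑ g : G, ρ g * f * ρ g⁻¹ with hT
  -- T commutes with the G-action
  have hconj : ∀ g₀ : G, ρ g₀ * T = T * ρ g₀ := by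
    intro g₀
    rw [hT, Finset.mul_sum, Finset.sum_mul]
    refine Fintype.sum_equiv (Equiv.mulLeft g₀) _ _ (fun g => ?_)
    show ρ g₀ * (ρ g * f * ρ g⁻¹) = ρ (g₀ * g) * f * ρ (g₀ * g)⁻¹ * ρ g₀
    have : ρ (g₀ * g)⁻¹ * ρ g₀ = ρ g⁻¹ := by
      rw [← map_mul]
      congr 1
      group
    rw [mul_assoc (ρ (g₀ * g) * f), this, map_mul]
    simp only [mul_assoc]
  -- T is a scalar
  obtain ⟨c, hc⟩ := Module.End.exists_eigenvalue T
  have hstab : ∀ g : G, ∀ x ∈ Module.End.eigenspace T c, ρ g x ∈ Module.End.eigenspace T c := by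
    intro g x hx
    rw [Module.End.mem_eigenspace_iff] at hx ⊢
    have : T (ρ g x) = ρ g (T x) := by
      have := congrFun (congrArg DFunLike.coe (hconj g)) x
      have h2 := this.symm
      simpa [Module.End.mul_apply] using h2
    rw [this, hx, map_smul]
  have htop : Module.End.eigenspace T c = ⊤ :=
    (hirr _ hstab).resolve_left hc
  have hTc : T = c • (1 : Module.End ℂ M) := by
    apply LinearMap.ext
    intro x
    have hx : x ∈ Module.End.eigenspace T c := by rw [htop]; trivial
    rw [Module.End.mem_eigenspace_iff] at hx
    simpa using hx
  -- commutation helpers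
  have hUcomm : ∀ l ∈ L, ρ l * eU = eU * ρ l := fun l hl =>
    rho_comm_e ρ heU (hLU l hl) (fun u hu => by simpa using hLU l⁻¹ (L.inv_mem hl) u hu)
  have hVcomm : ∀ l ∈ L, ρ l * eV = eV * ρ l := fun l hl =>
    rho_comm_e ρ heV (hLV l hl) (fun v hv => by simpa using hLV l⁻¹ (L.inv_mem hl) v hv)
  have hVf : ∀ v ∈ V, ρ v * f = f := by
    intro v hv
    rw [← hf2, ← mul_assoc, rho_mul_e ρ heV hv]
  -- the sandwich computation
  set A : L → V → Module.End ℂ M :=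
    (fun (l : L) (v : V) => eU * ρ (l : G) * f * ρ ((v : G))⁻¹ * ρ ((l : G))⁻¹ * eU) with hA
  have hmid : ∀ l : L, (∑ v : V, A l v) = (Nat.card V : ℂ) • (eU * f * (eV * eU)) := by
    intro l
    have hstep : (∑ v : V, A l v)
        = eU * ρ (l : G) * f * (∑ v : V, ρ ((v : G))⁻¹) * (ρ ((l : G))⁻¹ * eU) := by
      rw [Finset.mul_sum, Finset.sum_mul]
      refine Finset.sum_congr rfl (fun v _ => ?_)
      rw [hA]
      simp only [mul_assoc]
    rw [hstep, Ssum_inv, Ssum_eq_card_smul ρ heV]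
    have hl' : ρ ((l : G))⁻¹ * eU = eU * ρ ((l : G))⁻¹ := hUcomm ((l : G))⁻¹ (L.inv_mem l.2)
    rw [hl']
    have hcore : eU * ρ (l : G) * f * eV * (eU * ρ ((l : G))⁻¹) = eU * f * (eV * eU) := by
      have h1 : eV * eU * ρ ((l:G))⁻¹ = ρ ((l:G))⁻¹ * (eV * eU) := by
        rw [mul_assoc, ← hUcomm ((l:G))⁻¹ (L.inv_mem l.2), ← mul_assoc,
          ← hVcomm ((l:G))⁻¹ (L.inv_mem l.2), mul_assoc]
      calc eU * ρ (l : G) * f * eV * (eU * ρ ((l : G))⁻¹)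
          = eU * ρ (l : G) * f * (eV * eU * ρ ((l:G))⁻¹) := by simp only [mul_assoc]
        _ = eU * ρ (l : G) * f * (ρ ((l:G))⁻¹ * (eV * eU)) := by rw [h1]
        _ = eU * ρ (l : G) * (f * ρ ((l:G))⁻¹) * (eV * eU) := by simp only [mul_assoc]
        _ = eU * ρ (l : G) * (ρ ((l:G))⁻¹ * f) * (eV * eU) := by
            rw [hf3 ((l:G))⁻¹ (L.inv_mem l.2)]
        _ = eU * (ρ (l : G) * ρ ((l:G))⁻¹) * f * (eV * eU) := by simp only [mul_assoc]
        _ = eU * f * (eV * eU) := by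
            rw [← map_mul, mul_inv_cancel, map_one, mul_one]
    rw [mul_smul_comm, smul_mul_assoc, hcore]
  have hsand : eU * T * eU
      = ((Nat.card U : ℂ) * (Nat.card L : ℂ) * (Nat.card V : ℂ)) • (eU * f * (eV * eU)) := by
    rw [hT, Finset.mul_sum, Finset.sum_mul]
    rw [← Equiv.sum_comp (iwEquiv hIw) (fun g => eU * (ρ g * f * ρ g⁻¹) * eU)]
    have hterm : ∀ t : U × L × V,
        eU * (ρ (iwEquiv hIw t) * f * ρ (iwEquiv hIw t)⁻¹) * eU = A t.2.1 t.2.2 := by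
      rintro ⟨u, l, v⟩
      rw [iwEquiv_apply, hA]
      show eU * (ρ ((u : G) * ↑l * ↑v) * f * ρ ((u : G) * ↑l * ↑v)⁻¹) * eU
        = eU * ρ (l : G) * f * ρ ((v : G))⁻¹ * ρ ((l : G))⁻¹ * eU
      rw [mul_inv_rev, mul_inv_rev, map_mul, map_mul, map_mul, map_mul]
      simp only [mul_assoc]
      rw [← mul_assoc (ρ (v : G)) f, hVf ↑v v.2]
      rw [rho_mul_e ρ heU (U.inv_mem u.2)]
      rw [← mul_assoc eU (ρ (u : G)), e_mul_rho ρ heU u.2]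
    rw [Finset.sum_congr rfl (fun t _ => hterm t)]
    have hsplit : (∑ t : U × L × V, A t.2.1 t.2.2)
        = ∑ _u : U, ∑ q : L × V, A q.1 q.2 := Fintype.sum_prod_type _
    have hsplit2 : (∑ q : L × V, A q.1 q.2) = ∑ l : L, ∑ v : V, A l v :=
      Fintype.sum_prod_type _
    rw [hsplit, hsplit2]
    rw [Finset.sum_congr rfl (fun l (_ : l ∈ Finset.univ) => hmid l)]
    simp only [Finset.sum_const, Finset.card_univ, ← Nat.card_eq_fintype_card,
      ← Nat.cast_smul_eq_nsmul ℂ, smul_smul]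
    congr 1
    ring
  -- conclude
  have hKne : ((Nat.card U : ℂ) * (Nat.card L : ℂ) * (Nat.card V : ℂ)) ≠ 0 :=
    mul_ne_zero (mul_ne_zero (card_ne U) (card_ne L)) (card_ne V)
  refine ⟨((Nat.card U : ℂ) * (Nat.card L : ℂ) * (Nat.card V : ℂ))⁻¹ * c, ?_⟩
  have h2 : eU * T * eU = c • eU := by
    rw [hTc, mul_smul_comm, smul_mul_assoc, mul_one, e_sq ρ heU]
  have := hsand.symm.trans h2
  calc eU * f * (eV * eU)
      = (((Nat.card U : ℂ) * (Nat.card L : ℂ) * (Nat.card V : ℂ))⁻¹ *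
          ((Nat.card U : ℂ) * (Nat.card L : ℂ) * (Nat.card V : ℂ))) • (eU * f * (eV * eU)) := by
        rw [inv_mul_cancel₀ hKne, one_smul]
    _ = (((Nat.card U : ℂ) * (Nat.card L : ℂ) * (Nat.card V : ℂ))⁻¹ * c) • eU := by
        rw [← smul_smul, this, smul_smul]

end Iw

/-- **Theorem.** Let `G` be a finite group with an Iwahori decomposition `(U, L, V)`
and `M` an irreducible complex representation of `G`.  Then the space
`Hom_L(M^U, M^V)` (realised as the space of endomorphisms `f` of `M` with
`f e_U = f`, `e_V f = f`, commuting with `L`) is at most one-dimensional; if it is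
nonzero then it is spanned by the operator `e_V e_U`, which maps `M^U`
isomorphically onto `M^V`. -/
theorem homL_fixed_le_one_dim
    (G : Type) [Group G] [Finite G] (U L V : Subgroup G)
    (hLU : ∀ l ∈ L, ∀ u ∈ U, l * u * l⁻¹ ∈ U)
    (hLV : ∀ l ∈ L, ∀ v ∈ V, l * v * l⁻¹ ∈ V)
    (hIw : ∀ g : G, ∃! t : U × L × V, (t.1 : G) * (t.2.1 : G) * (t.2.2 : G) = g)
    (M : Type) [AddCommGroup M] [Module ℂ M] [FiniteDimensional ℂ M] [Nontrivial M]
    (ρ : Representation ℂ G M)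
    (hirr : ∀ p : Submodule ℂ M, (∀ g : G, ∀ x ∈ p, ρ g x ∈ p) → p = ⊥ ∨ p = ⊤)
    (eU eV : Module.End ℂ M)
    (heU : eU = (Nat.card U : ℂ)⁻¹ • ∑ᶠ u : U, ρ (u : G))
    (heV : eV = (Nat.card V : ℂ)⁻¹ • ∑ᶠ v : V, ρ (v : G)) :
    Module.finrank ℂ ↥(homLSpace ρ L eU eV) ≤ 1 ∧
    (homLSpace ρ L eU eV ≠ ⊥ →
      homLSpace ρ L eU eV = Submodule.span ℂ {eV * eU} ∧
      Submodule.map (eV * eU) (fixedSubmodule ρ U) = fixedSubmodule ρ V ∧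
      ∀ x ∈ fixedSubmodule ρ U, (eV * eU) x = 0 → x = 0) := by
  have heU' : eU = (Nat.card U : ℂ)⁻¹ • Ssum ρ U := heU
  have heV' : eV = (Nat.card V : ℂ)⁻¹ • Ssum ρ V := heV
  have hUcomm : ∀ l ∈ L, ρ l * eU = eU * ρ l := fun l hl =>
    rho_comm_e ρ heU' (hLU l hl) (fun u hu => by simpa using hLU l⁻¹ (L.inv_mem hl) u hu)
  have hVcomm : ∀ l ∈ L, ρ l * eV = eV * ρ l := fun l hl =>
    rho_comm_e ρ heV' (hLV l hl) (fun v hv => by simpa using hLV l⁻¹ (L.inv_mem hl) v hv)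
  have hIw' := iw_swap hIw
  have hmemE : eV * eU ∈ homLSpace ρ L eU eV := by
    refine ⟨by rw [mul_assoc, e_sq ρ heU'], by rw [← mul_assoc, e_sq ρ heV'], fun l hl => ?_⟩
    rw [mul_assoc, ← hUcomm l hl, ← mul_assoc, ← hVcomm l hl, mul_assoc]
  have hkey : homLSpace ρ L eU eV ≠ ⊥ →
      (homLSpace ρ L eU eV = Submodule.span ℂ {eV * eU} ∧
        Submodule.map (eV * eU) (fixedSubmodule ρ U) = fixedSubmodule ρ V ∧
        ∀ x ∈ fixedSubmodule ρ U, (eV * eU) x = 0 → x = 0) := by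
    intro hbot
    obtain ⟨f, hfmem, hf0⟩ := (Submodule.ne_bot_iff _).1 hbot
    obtain ⟨hf1, hf2, hf3⟩ := hfmem
    have injB := lemB (ρ := ρ) (U := U) (L := L) (V := V) hIw hirr heU' hf1 hf3 hf0
    have surjQ := lemA (ρ := ρ) hLU hLV hIw hirr heU' heV' hf2 hf3 hf0
    have injQ : ∀ z ∈ fixedSubmodule ρ V, eU z = 0 → z = 0 := by
      intro z hz h0
      apply injB z hz
      have h2 : f (eU z) = f z := congrFun (congrArg DFunLike.coe hf1) z
      rw [h0, map_zero] at h2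
      exact h2.symm
    -- the reversed element h = eU * f * eV
    set h : Module.End ℂ M := eU * f * eV with hh
    have hb1 : h * eV = h := by rw [hh, mul_assoc (eU * f), e_sq ρ heV']
    have hb2 : eU * h = h := by rw [hh, ← mul_assoc, ← mul_assoc, e_sq ρ heU']
    have hb3 : ∀ l ∈ L, h * ρ l = ρ l * h := by
      intro l hl
      rw [hh]
      simp only [mul_assoc]
      rw [← hVcomm l hl, ← mul_assoc f (ρ l) eV, hf3 l hl]
      simp only [← mul_assoc]
      rw [← hUcomm l hl]
    have hfmemV : ∀ x : M, f x ∈ fixedSubmodule ρ V := by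
      intro x
      have : f x = eV (f x) := (congrFun (congrArg DFunLike.coe hf2) x).symm
      rw [this]
      exact e_apply_mem ρ heV' _
    obtain ⟨x₀, hx₀⟩ : ∃ x, f x ≠ 0 := by
      by_contra hcon
      push_neg at hcon
      exact hf0 (LinearMap.ext fun x => by simpa using hcon x)
    have hne0 : h ≠ 0 := by
      intro h0
      set z := f x₀ with hz
      have hzV : z ∈ fixedSubmodule ρ V := hfmemV x₀
      have h2 : eV z = z := e_apply_fixed ρ heV' hzV
      have hz1 : h z = eU (f z) := by
        show eU (f (eV z)) = eU (f z)
        rw [h2]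
      have h3 : eU (f z) = 0 := by rw [← hz1, h0]; simp
      have h4 : f z = 0 := injQ (f z) (hfmemV z) h3
      exact hx₀ (injB z hzV h4)
    have injB' := lemB (ρ := ρ) (U := V) (L := L) (V := U) hIw' hirr heV' hb1 hb3 hne0
    have surjP := lemA (ρ := ρ) (U := V) (L := L) (V := U) hLV hLU hIw' hirr heV' heU'
      hb2 hb3 hne0
    have injP : ∀ z ∈ fixedSubmodule ρ U, eV z = 0 → z = 0 := by
      intro z hz h0
      apply injB' z hz
      have h1 : h z = eU (f (eV z)) := rfl
      rw [h0, map_zero, map_zero] at h1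
      exact h1
    obtain ⟨c₂, hc₂⟩ := schurRel (ρ := ρ) hLU hLV hIw hirr heU' heV' hmemE.2.1 hmemE.2.2
    -- nonvanishing of c₂
    have hw₀ne : eU x₀ ≠ 0 := by
      intro h0
      have h2 : f (eU x₀) = f x₀ := congrFun (congrArg DFunLike.coe hf1) x₀
      rw [h0, map_zero] at h2
      exact hx₀ h2.symm
    have hw₀U : eU x₀ ∈ fixedSubmodule ρ U := e_apply_mem ρ heU' x₀
    set w₀ := eU x₀ with hw₀
    have hEw : eU w₀ = w₀ := e_apply_fixed ρ heU' hw₀U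
    have hc₂0 : c₂ ≠ 0 := by
      intro h0
      have h1 : (eU * (eV * eU) * (eV * eU)) w₀ = eU (eV (eU (eV (eU w₀)))) := rfl
      have h2 := congrFun (congrArg DFunLike.coe hc₂) w₀
      rw [h1, hEw] at h2
      rw [h0] at h2
      simp only [LinearMap.smul_apply, zero_smul] at h2
      -- chain of injectivity
      have haV : eV w₀ ∈ fixedSubmodule ρ V := e_apply_mem ρ heV' w₀
      have hbU : eU (eV w₀) ∈ fixedSubmodule ρ U := e_apply_mem ρ heU' _
      have hcV : eV (eU (eV w₀)) ∈ fixedSubmodule ρ V := e_apply_mem ρ heV' _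
      have s1 : eV (eU (eV w₀)) = 0 := injQ _ hcV h2
      have s2 : eU (eV w₀) = 0 := injP _ hbU s1
      have s3 : eV w₀ = 0 := injQ _ haV s2
      have s4 : w₀ = 0 := injP _ hw₀U s3
      exact hw₀ne s4
    -- span inclusion
    have hspan_le : homLSpace ρ L eU eV ≤ Submodule.span ℂ {eV * eU} := by
      intro f' hf'
      obtain ⟨hg1, hg2, hg3⟩ := hf'
      obtain ⟨d, hd⟩ := schurRel (ρ := ρ) hLU hLV hIw hirr heU' heV' hg2 hg3
      rw [Submodule.mem_span_singleton]
      refine ⟨d / c₂, ?_⟩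
      have claim : ∀ w ∈ fixedSubmodule ρ U, f' w = (d / c₂) • eV w := by
        intro w hw
        obtain ⟨z, hzV, hz⟩ := surjQ hw
        obtain ⟨w', hw'U, hw'⟩ := surjP hzV
        have hEw' : eU w' = w' := e_apply_fixed ρ heU' hw'U
        have R1 : eU (f' z) = d • w' := by
          have h1 : (eU * f' * (eV * eU)) w' = eU (f' (eV (eU w'))) := rfl
          have h2 := congrFun (congrArg DFunLike.coe hd) w'
          simp only [LinearMap.smul_apply] at h2
          rw [h1, hEw', hw'] at h2
          exact h2
        have R2 : eU (eV w) = c₂ • w' := by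
          have h1 : (eU * (eV * eU) * (eV * eU)) w' = eU (eV (eU (eV (eU w')))) := rfl
          have h2 := congrFun (congrArg DFunLike.coe hc₂) w'
          simp only [LinearMap.smul_apply] at h2
          rw [h1, hEw', hw', hz] at h2
          exact h2
        have hfz : f' w = f' z := by
          have := congrFun (congrArg DFunLike.coe hg1) z
          simp only [Module.End.mul_apply] at this
          rw [hz] at this
          exact this
        have hfwV : f' w ∈ fixedSubmodule ρ V := by
          have : f' w = eV (f' w) := (congrFun (congrArg DFunLike.coe hg2) w).symm
          rw [this]
          exact e_apply_mem ρ heV' _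
        have hevV : eV w ∈ fixedSubmodule ρ V := e_apply_mem ρ heV' w
        have hdiff : eU (f' w - (d / c₂) • eV w) = 0 := by
          rw [map_sub, map_smul, hfz, R1, R2, smul_smul, div_mul_cancel₀ d hc₂0, sub_self]
        have := injQ _ (Submodule.sub_mem _ hfwV (Submodule.smul_mem _ _ hevV)) hdiff
        have := sub_eq_zero.1 this
        exact this
      apply LinearMap.ext
      intro x
      have h1 : f' x = f' (eU x) := (congrFun (congrArg DFunLike.coe hg1) x).symm
      have h2 := claim (eU x) (e_apply_mem ρ heU' x)
      have h3 : ((d / c₂) • (eV * eU)) x = (d / c₂) • (eV (eU x)) := rfl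
      rw [h3, h1, h2]
    have hspan : homLSpace ρ L eU eV = Submodule.span ℂ {eV * eU} :=
      le_antisymm hspan_le ((Submodule.span_singleton_le_iff_mem _ _).2 hmemE)
    have hmap : Submodule.map (eV * eU) (fixedSubmodule ρ U) = fixedSubmodule ρ V := by
      apply le_antisymm
      · rintro _ ⟨x, hxU, rfl⟩
        have : (eV * eU) x = eV x := by
          show eV (eU x) = eV x
          rw [e_apply_fixed ρ heU' hxU]
        rw [this]
        exact e_apply_mem ρ heV' x
      · intro y hyV
        obtain ⟨w', hw'U, hw'⟩ := surjP hyV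
        exact ⟨w', hw'U, by show eV (eU w') = y; rw [e_apply_fixed ρ heU' hw'U, hw']⟩
    have hinj : ∀ x ∈ fixedSubmodule ρ U, (eV * eU) x = 0 → x = 0 := by
      intro x hx h0
      apply injP x hx
      have : (eV * eU) x = eV x := by
        show eV (eU x) = eV x
        rw [e_apply_fixed ρ heU' hx]
      rw [this] at h0
      exact h0
    exact ⟨hspan, hmap, hinj⟩
  refine ⟨?_, hkey⟩
  by_cases hbot : homLSpace ρ L eU eV = ⊥
  · rw [hbot]
    simp
  · obtain ⟨hspan, -, -⟩ := hkey hbot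
    have hE0 : eV * eU ≠ 0 := by
      intro h0
      apply hbot
      rw [hspan, h0, Submodule.span_zero_singleton]
    rw [hspan, finrank_span_singleton hE0]
end

section
/- Let k be a field of characteristic ≠ 2, let k[x] denote the 2-dimensional local k-algebra with x² = 0 (i.e. k[ε]/(ε²)), and let Q ⊆ GL₂(k[x]) be the group of fixed points of the involution [[a,b],[c,d]] ↦ [[d^#, b^#],[c^#, a^#]]⁻¹, where # is the k-algebra automorphism of k[x] sending x to -x. Let X = {[[1,b],[0,1]] | b ∈ xk[x]}, Y = {[[1,0],[c,1]] | c ∈ xk[x]}, H = {[[a,0],[0,a^{-#}]] | a ∈ k[x]^×}, and R the two-element subgroup generated by r = [[0,-1],[-1,0]]. Then X and Y commute elementwise, XHY = {q ∈ Q | q is diagonal modulo x}, XHY is a normal subgroup of Q of index 2, and Q = (X × Y) ⋊ (H ⋊ R). -/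
noncomputable section

variable (k : Type) [Field k]

/-- The `k`-algebra automorphism `#` of `k[x] = k[ε]/(ε²)` sending `x` to `-x`:
`α + βx ↦ α - βx`. -/
def hashD (a : DualNumber k) : DualNumber k :=
  TrivSqZeroExt.inl (TrivSqZeroExt.fst a) - TrivSqZeroExt.inr (TrivSqZeroExt.snd a)

/-- The star-type operation `[[a,b],[c,d]] ↦ [[d^#, b^#],[c^#, a^#]]` on `2×2`
matrices over `k[x]`. -/
def mstar (g : Matrix (Fin 2) (Fin 2) (DualNumber k)) :
    Matrix (Fin 2) (Fin 2) (DualNumber k) :=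
  !![hashD k (g 1 1), hashD k (g 0 1); hashD k (g 1 0), hashD k (g 0 0)]

/-- The group `Q ⊆ GL₂(k[x])` of fixed points of the involution
`g ↦ (g^*)⁻¹`, i.e. invertible `g` with `g^* g = 1`. -/
def Qset : Set (Matrix (Fin 2) (Fin 2) (DualNumber k)) :=
  {g | IsUnit g ∧ mstar k g * g = 1}

/-- `X = {[[1,b],[0,1]] | b ∈ x·k[x]}`. -/
def Xset : Set (Matrix (Fin 2) (Fin 2) (DualNumber k)) :=
  {g | ∃ b : DualNumber k, TrivSqZeroExt.fst b = 0 ∧ g = !![1, b; 0, 1]}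

/-- `Y = {[[1,0],[c,1]] | c ∈ x·k[x]}`. -/
def Yset : Set (Matrix (Fin 2) (Fin 2) (DualNumber k)) :=
  {g | ∃ c : DualNumber k, TrivSqZeroExt.fst c = 0 ∧ g = !![1, 0; c, 1]}

/-- `H = {[[a,0],[0,a^{-#}]] | a ∈ k[x]^×}`. -/
def Hset : Set (Matrix (Fin 2) (Fin 2) (DualNumber k)) :=
  {g | ∃ a : (DualNumber k)ˣ,
    g = !![(a : DualNumber k), 0; 0, hashD k ((a⁻¹ : (DualNumber k)ˣ) : DualNumber k)]}

/-- The two-element subgroup `R` generated by `r = [[0,-1],[-1,0]]`. -/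
def Rset : Set (Matrix (Fin 2) (Fin 2) (DualNumber k)) :=
  {g | g = 1 ∨ g = !![0, -1; -1, 0]}

/-- The product set `XHY`. -/
def XHYset : Set (Matrix (Fin 2) (Fin 2) (DualNumber k)) :=
  {g | ∃ x ∈ Xset k, ∃ h ∈ Hset k, ∃ y ∈ Yset k, g = x * h * y}

end

open TrivSqZeroExt Matrix

namespace QAux
variable {k : Type} [Field k]

local notation "M2" => Matrix (Fin 2) (Fin 2) (DualNumber k)
local notation "DN" => DualNumber k

@[simp] lemma fst_hashD (a : DN) : fst (hashD k a) = fst a := by simp [hashD]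
@[simp] lemma snd_hashD (a : DN) : snd (hashD k a) = - snd a := by simp [hashD]
lemma hashD_mul (a b : DN) : hashD k (a * b) = hashD k a * hashD k b := by
  refine TrivSqZeroExt.ext (by simp) ?_
  simp [snd_mul]; ring
lemma hashD_add (a b : DN) : hashD k (a + b) = hashD k a + hashD k b := by
  refine TrivSqZeroExt.ext (by simp) (by simp; ring)
@[simp] lemma hashD_one : hashD k (1 : DN) = 1 := by
  refine TrivSqZeroExt.ext (by simp) (by simp)
@[simp] lemma hashD_hashD (a : DN) : hashD k (hashD k a) = a := by
  refine TrivSqZeroExt.ext (by simp) (by simp)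

lemma mul_eq_zero_of_fst_zero {a b : DN} (ha : fst a = 0) (hb : fst b = 0) :
    a * b = 0 := by
  refine TrivSqZeroExt.ext (by simp [ha]) (by simp [snd_mul, ha, hb])

lemma hashD_unit_mul (a : DNˣ) : hashD k ↑a * hashD k ↑a⁻¹ = 1 := by
  rw [← hashD_mul]; simp
lemma hashD_unit_mul' (a : DNˣ) : hashD k ↑a⁻¹ * hashD k ↑a = 1 := by
  rw [← hashD_mul]; simp

lemma fst_unit_ne_zero (a : DNˣ) : fst (a : DN) ≠ 0 := by
  intro h
  have h1 : (a : DN) * ((a⁻¹ : DNˣ) : DN) = 1 := a.mul_inv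
  have := congrArg fst h1
  rw [fst_mul, h, zero_mul] at this
  simp at this

lemma mstar_mul (A B : M2) : mstar k (A * B) = mstar k B * mstar k A := by
  refine Matrix.ext fun i j => ?_
  fin_cases i <;> fin_cases j <;>
    simp [mstar, Matrix.mul_apply, Fin.sum_univ_two, hashD_add, hashD_mul] <;> ring

@[simp] lemma mstar_one : mstar k (1 : M2) = 1 := by
  refine Matrix.ext fun i j => ?_
  fin_cases i <;> fin_cases j <;> simp [mstar, Matrix.one_fin_two, hashD]

lemma mstar_mstar (A : M2) : mstar k (mstar k A) = A := by
  refine Matrix.ext fun i j => ?_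
  fin_cases i <;> fin_cases j <;> simp [mstar]

lemma Qmul {q1 q2 : M2} (h1 : q1 ∈ Qset k) (h2 : q2 ∈ Qset k) : q1 * q2 ∈ Qset k := by
  refine ⟨h1.1.mul h2.1, ?_⟩
  rw [mstar_mul, mul_assoc, ← mul_assoc (mstar k q1), h1.2, one_mul, h2.2]

lemma Q_right_inv {q : M2} (h : q ∈ Qset k) : q * mstar k q = 1 :=
  mul_eq_one_comm.mp h.2

lemma Q_mstar_mem {q : M2} (h : q ∈ Qset k) : mstar k q ∈ Qset k := by
  refine ⟨⟨⟨mstar k q, q, h.2, Q_right_inv h⟩, rfl⟩, ?_⟩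
  rw [mstar_mstar]; exact Q_right_inv h

lemma Q_inv_eq {q : M2} (h : q ∈ Qset k) : q⁻¹ = mstar k q :=
  Matrix.inv_eq_left_inv h.2

/-- x·h·y product in normal form. -/
lemma xhy_form {b c : DN} (a : DNˣ) (hb : fst b = 0) (hc : fst c = 0) :
    (!![1, b; 0, 1] : M2) * !![(a : DN), 0; 0, hashD k ↑a⁻¹] * !![1, 0; c, 1]
      = !![(a : DN), b * hashD k ↑a⁻¹; hashD k ↑a⁻¹ * c, hashD k ↑a⁻¹] := by
  have h0 : (b * hashD k ↑a⁻¹) * c = 0 :=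
    mul_eq_zero_of_fst_zero (by simp [hb]) hc
  refine Matrix.ext fun i j => ?_
  fin_cases i <;> fin_cases j <;>
    simp [Matrix.mul_apply, Fin.sum_univ_two, ← mul_assoc, h0]

/-- x·y·h product in normal form. -/
lemma xyh_form {b c : DN} (a : DNˣ) (hb : fst b = 0) (hc : fst c = 0) :
    (!![1, b; 0, 1] : M2) * !![1, 0; c, 1] * !![(a : DN), 0; 0, hashD k ↑a⁻¹]
      = !![(a : DN), b * hashD k ↑a⁻¹; c * ↑a, hashD k ↑a⁻¹] := by
  have h0 : b * c = 0 := mul_eq_zero_of_fst_zero hb hc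
  refine Matrix.ext fun i j => ?_
  fin_cases i <;> fin_cases j <;>
    simp [Matrix.mul_apply, Fin.sum_univ_two, h0]

end QAux

namespace QAux
open TrivSqZeroExt Matrix
variable {k : Type} [Field k]
local notation "M2" => Matrix (Fin 2) (Fin 2) (DualNumber k)
local notation "DN" => DualNumber k

/-- The normal-form matrices are in Q. -/
lemma normal_mem_Q {B C : DN} (a : DNˣ) (hB : fst B = 0) (hC : fst C = 0) :
    (!![(a : DN), B; C, hashD k ↑a⁻¹] : M2) ∈ Qset k := by
  have hBC : hashD k B * C = 0 := mul_eq_zero_of_fst_zero (by simp [hB]) hC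
  have hCB : hashD k C * B = 0 := mul_eq_zero_of_fst_zero (by simp [hC]) hB
  have e01 : (↑a⁻¹ : DN) * B + hashD k B * hashD k ↑a⁻¹ = 0 := by
    refine TrivSqZeroExt.ext (by simp [hB]) (by simp [snd_mul, hB]; ring)
  have e10 : hashD k C * ↑a + hashD k ↑a * C = 0 := by
    refine TrivSqZeroExt.ext (by simp [hC]) (by simp [snd_mul, hC]; ring)
  constructor
  · rw [Matrix.isUnit_iff_isUnit_det, Matrix.det_fin_two_of,
      mul_eq_zero_of_fst_zero hB hC, sub_zero]
    exact (a.isUnit).mul ⟨⟨hashD k ↑a⁻¹, hashD k ↑a, hashD_unit_mul' a, hashD_unit_mul a⟩, rfl⟩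
  · refine Matrix.ext fun i j => ?_
    fin_cases i <;> fin_cases j <;>
      simp [mstar, Matrix.mul_apply, Fin.sum_univ_two, Matrix.one_fin_two,
        hBC, hCB, hashD_unit_mul]
    · exact e01
    · exact e10

/-- Characterization of XHY by normal forms. -/
lemma mem_XHY_iff' (g : M2) :
    g ∈ XHYset k ↔ ∃ (a : DNˣ) (B C : DN), fst B = 0 ∧ fst C = 0 ∧
      g = !![(a : DN), B; C, hashD k ↑a⁻¹] := by
  constructor
  · rintro ⟨x, ⟨b, hb, rfl⟩, h, ⟨a, rfl⟩, y, ⟨c, hc, rfl⟩, rfl⟩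
    exact ⟨a, b * hashD k ↑a⁻¹, hashD k ↑a⁻¹ * c, by simp [hb], by simp [hc],
      xhy_form a hb hc⟩
  · rintro ⟨a, B, C, hB, hC, rfl⟩
    refine ⟨!![1, B * hashD k ↑a; 0, 1], ⟨B * hashD k ↑a, by simp [hB], rfl⟩,
      !![(a : DN), 0; 0, hashD k ↑a⁻¹], ⟨a, rfl⟩,
      !![1, 0; hashD k ↑a * C, 1], ⟨hashD k ↑a * C, by simp [hC], rfl⟩, ?_⟩
    rw [xhy_form a (by simp [hB]) (by simp [hC]),
      mul_assoc, hashD_unit_mul, mul_one, ← mul_assoc, hashD_unit_mul', one_mul]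
end QAux

namespace QAux
open TrivSqZeroExt Matrix
variable {k : Type} [Field k]
local notation "M2" => Matrix (Fin 2) (Fin 2) (DualNumber k)
local notation "DN" => DualNumber k

lemma Q_entry00 {q : M2} (hq : q ∈ Qset k) :
    hashD k (q 1 1) * q 0 0 + hashD k (q 0 1) * q 1 0 = 1 := by
  have := congrFun (congrFun hq.2 0) 0
  simpa [mstar, Matrix.mul_apply, Fin.sum_univ_two, Matrix.one_fin_two] using this

lemma Q_entry01 {q : M2} (hq : q ∈ Qset k) :
    hashD k (q 1 1) * q 0 1 + hashD k (q 0 1) * q 1 1 = 0 := by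
  have := congrFun (congrFun hq.2 0) 1
  simpa [mstar, Matrix.mul_apply, Fin.sum_univ_two, Matrix.one_fin_two] using this

lemma Q_entry10 {q : M2} (hq : q ∈ Qset k) :
    hashD k (q 1 0) * q 0 0 + hashD k (q 0 0) * q 1 0 = 0 := by
  have := congrFun (congrFun hq.2 1) 0
  simpa [mstar, Matrix.mul_apply, Fin.sum_univ_two, Matrix.one_fin_two] using this

/-- Main characterization: `XHY = {q ∈ Q | diagonal mod x}`. -/
lemma mem_XHY_iff (g : M2) :
    g ∈ XHYset k ↔ g ∈ Qset k ∧ fst (g 0 1) = 0 ∧ fst (g 1 0) = 0 := by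
  rw [mem_XHY_iff']
  constructor
  · rintro ⟨a, B, C, hB, hC, rfl⟩
    exact ⟨normal_mem_Q a hB hC, by simp [hB], by simp [hC]⟩
  · rintro ⟨hQ, h01, h10⟩
    have key : hashD k (g 1 1) * g 0 0 = 1 := by
      have := Q_entry00 hQ
      rwa [mul_eq_zero_of_fst_zero (by simp [h01]) h10, add_zero] at this
    have key' : g 0 0 * hashD k (g 1 1) = 1 := by rw [mul_comm]; exact key
    refine ⟨⟨g 0 0, hashD k (g 1 1), key', key⟩, g 0 1, g 1 0, h01, h10, ?_⟩
    refine Matrix.ext fun i j => ?_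
    fin_cases i <;> fin_cases j <;> simp [Units.inv_mk]

lemma Q_dichot (h2 : (2 : k) ≠ 0) {q : M2} (hq : q ∈ Qset k) :
    (fst (q 0 1) = 0 ∧ fst (q 1 0) = 0) ∨ (fst (q 0 0) = 0 ∧ fst (q 1 1) = 0) := by
  have f00 := congrArg fst (Q_entry00 hq)
  have f01 := congrArg fst (Q_entry01 hq)
  have f10 := congrArg fst (Q_entry10 hq)
  simp [fst_mul] at f00 f01 f10
  set a0 := fst (q 0 0); set b0 := fst (q 0 1); set c0 := fst (q 1 0); set d0 := fst (q 1 1)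
  have hbd : d0 * b0 = 0 := by
    have h : (2 : k) * (d0 * b0) = 0 := by linear_combination f01
    rcases mul_eq_zero.mp h with h | h
    · exact absurd h h2
    · exact h
  have hac : c0 * a0 = 0 := by
    have h : (2 : k) * (c0 * a0) = 0 := by linear_combination f10
    rcases mul_eq_zero.mp h with h | h
    · exact absurd h h2
    · exact h
  by_cases ha : a0 = 0
  · right
    refine ⟨ha, ?_⟩
    have hbc : b0 * c0 = 1 := by
      have := f00; rw [ha, mul_zero] at this; linear_combination this
    have hb : b0 ≠ 0 := fun h => by rw [h, zero_mul] at hbc; exact one_ne_zero hbc.symm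
    have := mul_eq_zero.mp hbd
    tauto
  · left
    have hc : c0 = 0 := by
      rcases mul_eq_zero.mp hac with h | h
      · exact h
      · exact absurd h ha
    have hda : d0 * a0 = 1 := by
      have := f00; rw [hc, mul_zero] at this; linear_combination this
    have hd : d0 ≠ 0 := fun h => by rw [h, zero_mul] at hda; exact one_ne_zero hda.symm
    have := mul_eq_zero.mp hbd
    tauto
end QAux

namespace QAux
open TrivSqZeroExt Matrix
variable {k : Type} [Field k]
local notation "M2" => Matrix (Fin 2) (Fin 2) (DualNumber k)
local notation "DN" => DualNumber k

@[simp] lemma hashD_neg_one : hashD k (-1 : DN) = -1 := by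
  refine TrivSqZeroExt.ext (by simp) (by simp)

@[simp] lemma hashD_zero : hashD k (0 : DN) = 0 := by
  refine TrivSqZeroExt.ext (by simp) (by simp)

lemma r_mul_r : (!![0, -1; -1, 0] : M2) * !![0, -1; -1, 0] = 1 := by
  refine Matrix.ext fun i j => ?_
  fin_cases i <;> fin_cases j <;>
    simp [Matrix.mul_apply, Fin.sum_univ_two, Matrix.one_fin_two]

lemma r_mem_Q : (!![0, -1; -1, 0] : M2) ∈ Qset k := by
  have hm : mstar k (!![0, -1; -1, 0] : M2) = !![0, -1; -1, 0] := by
    refine Matrix.ext fun i j => ?_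
    fin_cases i <;> fin_cases j <;> simp [mstar]
  exact ⟨⟨⟨_, _, r_mul_r, r_mul_r⟩, rfl⟩, by rw [hm, r_mul_r]⟩

lemma Q_prod_zero (h2 : (2 : k) ≠ 0) {q : M2} (hq : q ∈ Qset k) :
    fst (q 0 0) * fst (q 0 1) = 0 ∧ fst (q 1 0) * fst (q 1 1) = 0 := by
  rcases Q_dichot h2 hq with ⟨h1, h2'⟩ | ⟨h1, h2'⟩ <;> simp [h1, h2']

lemma normality (h2 : (2 : k) ≠ 0) {q p : M2} (hq : q ∈ Qset k) (hp : p ∈ XHYset k) :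
    q * p * q⁻¹ ∈ XHYset k := by
  obtain ⟨hpQ, hp01, hp10⟩ := (mem_XHY_iff p).mp hp
  obtain ⟨hab, hcd⟩ := Q_prod_zero h2 hq
  rw [Q_inv_eq hq]
  refine (mem_XHY_iff _).mpr ⟨Qmul (Qmul hq hpQ) (Q_mstar_mem hq), ?_, ?_⟩
  · have : fst ((q * p * mstar k q) 0 1) =
        fst (q 0 0) * fst (p 0 0) * fst (q 0 1) + fst (q 0 1) * fst (p 1 1) * fst (q 0 0) := by
      simp [Matrix.mul_apply, Fin.sum_univ_two, mstar, hp01, hp10]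
    rw [this]
    linear_combination (fst (p 0 0) + fst (p 1 1)) * hab
  · have : fst ((q * p * mstar k q) 1 0) =
        fst (q 1 0) * fst (p 0 0) * fst (q 1 1) + fst (q 1 1) * fst (p 1 1) * fst (q 1 0) := by
      simp [Matrix.mul_apply, Fin.sum_univ_two, mstar, hp01, hp10]
    rw [this]
    linear_combination (fst (p 0 0) + fst (p 1 1)) * hcd

/-- Cancellation facts for the factorization. -/
lemma xyh_q (b c : DN) (a : DNˣ) (hb : fst b = 0) (hc : fst c = 0) :
    (!![1, b; 0, 1] : M2) * !![1, 0; c, 1] * !![(a : DN), 0; 0, hashD k ↑a⁻¹]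
      = !![(a : DN), b * hashD k ↑a⁻¹; c * ↑a, hashD k ↑a⁻¹] := xyh_form a hb hc

lemma normal_eq_params {a a' : DNˣ} {b c b' c' : DN}
    (h : (!![(a : DN), b * hashD k ↑a⁻¹; c * ↑a, hashD k ↑a⁻¹] : M2)
       = !![(a' : DN), b' * hashD k ↑a'⁻¹; c' * ↑a', hashD k ↑a'⁻¹]) :
    a = a' ∧ b = b' ∧ c = c' := by
  have e00 : (a : DN) = ↑a' := by
    have := congrFun (congrFun h 0) 0; simpa using this
  have haa : a = a' := Units.ext e00
  subst haa
  have e01 : b * hashD k ↑a⁻¹ = b' * hashD k ↑a⁻¹ := by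
    have := congrFun (congrFun h 0) 1; simpa using this
  have e10 : c * ↑a = c' * ↑a := by
    have := congrFun (congrFun h 1) 0; simpa using this
  refine ⟨rfl, ?_, ?_⟩
  · have := congrArg (· * hashD k ↑a) e01
    simpa [mul_assoc, hashD_unit_mul'] using this
  · have := congrArg (· * ((a⁻¹ : DNˣ) : DN)) e10
    simpa [mul_assoc, Units.mul_inv] using this

end QAux

namespace QAux
open TrivSqZeroExt Matrix
variable {k : Type} [Field k]
local notation "M2" => Matrix (Fin 2) (Fin 2) (DualNumber k)
local notation "DN" => DualNumber k

lemma normal_as_xyh (a : DNˣ) {B C : DN} (hB : fst B = 0) (hC : fst C = 0) :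
    (!![1, B * hashD k ↑a; 0, 1] : M2) * !![1, 0; C * ↑a⁻¹, 1]
        * !![(a : DN), 0; 0, hashD k ↑a⁻¹]
      = !![(a : DN), B; C, hashD k ↑a⁻¹] := by
  rw [xyh_q _ _ a (by simp [hB]) (by simp [hC])]
  rw [mul_assoc, mul_assoc, hashD_unit_mul, Units.inv_mul, mul_one, mul_one]

lemma factor_unique {q : M2} (t s : M2 × M2 × M2 × M2)
    (ht : t.1 ∈ Xset k ∧ t.2.1 ∈ Yset k ∧ t.2.2.1 ∈ Hset k ∧ t.2.2.2 ∈ Rset k ∧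
      q = t.1 * t.2.1 * t.2.2.1 * t.2.2.2)
    (hs : s.1 ∈ Xset k ∧ s.2.1 ∈ Yset k ∧ s.2.2.1 ∈ Hset k ∧ s.2.2.2 ∈ Rset k ∧
      q = s.1 * s.2.1 * s.2.2.1 * s.2.2.2) : t = s := by
  obtain ⟨tx, ty, th, tr⟩ := t
  obtain ⟨sx, sy, sh, sr⟩ := s
  obtain ⟨⟨b, hb, rfl⟩, ⟨c, hc, rfl⟩, ⟨a, rfl⟩, htr, hteq⟩ := ht
  obtain ⟨⟨b', hb', rfl⟩, ⟨c', hc', rfl⟩, ⟨a', rfl⟩, hsr, hseq⟩ := hs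
  rw [xyh_q b c a hb hc] at hteq
  rw [xyh_q b' c' a' hb' hc'] at hseq
  -- contradiction helper for mismatched R-components
  have contra : ∀ (a1 a2 : DNˣ) (b1 c1 b2 c2 : DN), fst b1 = 0 →
      (!![(a1 : DN), b1 * hashD k ↑a1⁻¹; c1 * ↑a1, hashD k ↑a1⁻¹] : M2)
        = !![(a2 : DN), b2 * hashD k ↑a2⁻¹; c2 * ↑a2, hashD k ↑a2⁻¹]
          * !![0, -1; -1, 0] → False := by
    intro a1 a2 b1 c1 b2 c2 hb1 heq
    have := congrArg (fun M => fst (M 0 1)) heq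
    simp [Matrix.mul_apply, Fin.sum_univ_two, hb1] at this
    exact fst_unit_ne_zero a2 this
  rcases htr with rfl | rfl <;> rcases hsr with rfl | rfl
  · rw [mul_one] at hteq hseq
    obtain ⟨rfl, rfl, rfl⟩ := normal_eq_params (hteq.symm.trans hseq)
    rfl
  · rw [mul_one] at hteq
    exact absurd (hteq.symm.trans hseq) (fun h => contra a a' b c b' c' hb h)
  · rw [mul_one] at hseq
    exact absurd (hseq.symm.trans hteq) (fun h => contra a' a b' c' b c hb' h)
  · have key : (!![(a : DN), b * hashD k ↑a⁻¹; c * ↑a, hashD k ↑a⁻¹] : M2)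
        = !![(a' : DN), b' * hashD k ↑a'⁻¹; c' * ↑a', hashD k ↑a'⁻¹] := by
      have h := hteq.symm.trans hseq
      calc (!![(a : DN), b * hashD k ↑a⁻¹; c * ↑a, hashD k ↑a⁻¹] : M2)
          = !![(a : DN), b * hashD k ↑a⁻¹; c * ↑a, hashD k ↑a⁻¹]
              * (!![0, -1; -1, 0] * !![0, -1; -1, 0]) := by rw [r_mul_r, mul_one]
        _ = !![(a' : DN), b' * hashD k ↑a'⁻¹; c' * ↑a', hashD k ↑a'⁻¹]
              * (!![0, -1; -1, 0] * !![0, -1; -1, 0]) := by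
              rw [← mul_assoc, ← mul_assoc, h]
        _ = _ := by rw [r_mul_r, mul_one]
    obtain ⟨rfl, rfl, rfl⟩ := normal_eq_params key
    rfl

end QAux


open TrivSqZeroExt QAux

/-- **Lemma.** For a field `k` of characteristic `≠ 2`: `X` and `Y` commute
elementwise; `XHY` is exactly the set of `q ∈ Q` that are diagonal modulo `x`;
`XHY` is a normal subgroup of `Q` of index 2 (the homomorphism
`q ↦ det(q mod x) ∈ {±1}` has kernel `XHY` and is split by `-1 ↦ r`); and
`Q = (X × Y) ⋊ (H ⋊ R)`, in the sense that every `q ∈ Q` factors uniquely as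
`q = x · y · h · r'` with `x ∈ X`, `y ∈ Y`, `h ∈ H`, `r' ∈ R`. -/
theorem Qset_structure (k : Type) [Field k] (h2 : (2 : k) ≠ 0) :
    (∀ gx ∈ Xset k, ∀ gy ∈ Yset k, gx * gy = gy * gx) ∧
    XHYset k = {g | g ∈ Qset k ∧
      ∀ i j : Fin 2, i ≠ j → TrivSqZeroExt.fst (g i j) = 0} ∧
    (∀ q ∈ Qset k, ∀ p ∈ XHYset k, q * p * q⁻¹ ∈ XHYset k) ∧
    (!![0, -1; -1, 0] : Matrix (Fin 2) (Fin 2) (DualNumber k)) ∈ Qset k ∧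
    (!![0, -1; -1, 0] : Matrix (Fin 2) (Fin 2) (DualNumber k)) ∉ XHYset k ∧
    (∀ q ∈ Qset k, q ∈ XHYset k ∨
      ∃ p ∈ XHYset k, q = p * !![0, -1; -1, 0]) ∧
    (∀ q ∈ Qset k, ∃! t : Matrix (Fin 2) (Fin 2) (DualNumber k) ×
        Matrix (Fin 2) (Fin 2) (DualNumber k) ×
        Matrix (Fin 2) (Fin 2) (DualNumber k) ×
        Matrix (Fin 2) (Fin 2) (DualNumber k),
      t.1 ∈ Xset k ∧ t.2.1 ∈ Yset k ∧ t.2.2.1 ∈ Hset k ∧ t.2.2.2 ∈ Rset k ∧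
        q = t.1 * t.2.1 * t.2.2.1 * t.2.2.2) := by
  
  refine ⟨?_, ?_, ?_, r_mem_Q, ?_, ?_, ?_⟩
  · rintro gx ⟨b, hb, rfl⟩ gy ⟨c, hc, rfl⟩
    have h0 : b * c = 0 := mul_eq_zero_of_fst_zero hb hc
    have h0' : c * b = 0 := mul_eq_zero_of_fst_zero hc hb
    refine Matrix.ext fun i j => ?_
    fin_cases i <;> fin_cases j <;> simp [Matrix.mul_apply, Fin.sum_univ_two, h0, h0']
  · ext g
    simp only [Set.mem_setOf_eq]
    rw [mem_XHY_iff]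
    constructor
    · rintro ⟨hQ, h01, h10⟩
      exact ⟨hQ, fun i j hij => by fin_cases i <;> fin_cases j <;> simp_all⟩
    · rintro ⟨hQ, h⟩
      exact ⟨hQ, h 0 1 (by decide), h 1 0 (by decide)⟩
  · intro q hq p hp; exact normality h2 hq hp
  · intro h
    have := ((mem_XHY_iff _).mp h).2.1
    simp at this
  · intro q hq
    rcases Q_dichot h2 hq with ⟨h01, h10⟩ | ⟨h00, h11⟩
    · exact Or.inl ((mem_XHY_iff q).mpr ⟨hq, h01, h10⟩)
    · refine Or.inr ⟨q * !![0, -1; -1, 0],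
        (mem_XHY_iff _).mpr ⟨Qmul hq r_mem_Q, ?_, ?_⟩, ?_⟩
      · simp [Matrix.mul_apply, Fin.sum_univ_two, h00]
      · simp [Matrix.mul_apply, Fin.sum_univ_two, h11]
      · rw [mul_assoc, r_mul_r, mul_one]
  · intro q hq
    rcases Q_dichot h2 hq with ⟨h01, h10⟩ | ⟨h00, h11⟩
    · obtain ⟨a, B, C, hB, hC, hqeq⟩ :=
        (mem_XHY_iff' q).mp ((mem_XHY_iff q).mpr ⟨hq, h01, h10⟩)
      refine ⟨(!![1, B * hashD k ↑a; 0, 1], !![1, 0; C * ↑a⁻¹, 1],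
          !![(a : DualNumber k), 0; 0, hashD k ↑a⁻¹], 1),
        ⟨⟨_, by simp [hB], rfl⟩, ⟨_, by simp [hC], rfl⟩, ⟨a, rfl⟩, Or.inl rfl, ?_⟩,
        fun s hs => factor_unique s _ hs
          ⟨⟨_, by simp [hB], rfl⟩, ⟨_, by simp [hC], rfl⟩, ⟨a, rfl⟩, Or.inl rfl, ?_⟩⟩ <;>
        rw [mul_one, normal_as_xyh a hB hC] <;> exact hqeq
    · have hmem : q * !![0, -1; -1, 0] ∈ XHYset k := by
        refine (mem_XHY_iff _).mpr ⟨Qmul hq r_mem_Q, ?_, ?_⟩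
        · simp [Matrix.mul_apply, Fin.sum_univ_two, h00]
        · simp [Matrix.mul_apply, Fin.sum_univ_two, h11]
      obtain ⟨a, B, C, hB, hC, hqeq⟩ := (mem_XHY_iff' _).mp hmem
      have hq2 : q = !![(a : DualNumber k), B; C, hashD k ↑a⁻¹] * !![0, -1; -1, 0] := by
        calc q = q * (!![0, -1; -1, 0] * !![0, -1; -1, 0]) := by rw [r_mul_r, mul_one]
          _ = (q * !![0, -1; -1, 0]) * !![0, -1; -1, 0] := by rw [mul_assoc]
          _ = _ := by rw [hqeq]
      refine ⟨(!![1, B * hashD k ↑a; 0, 1], !![1, 0; C * ↑a⁻¹, 1],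
          !![(a : DualNumber k), 0; 0, hashD k ↑a⁻¹], !![0, -1; -1, 0]),
        ⟨⟨_, by simp [hB], rfl⟩, ⟨_, by simp [hC], rfl⟩, ⟨a, rfl⟩, Or.inr rfl, ?_⟩,
        fun s hs => factor_unique s _ hs
          ⟨⟨_, by simp [hB], rfl⟩, ⟨_, by simp [hC], rfl⟩, ⟨a, rfl⟩, Or.inr rfl, ?_⟩⟩ <;>
        rw [normal_as_xyh a hB hC] <;> exact hq2
end
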